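/- arXiv:2204.01077 — 6 statements merged into one kernel-verified Lean document; each statement's English description precedes it below -/
import Mathlib

section
/- Let d ≥ 1 and let A ⊆ ℝ^d be locally finite (every bounded subset of ℝ^d contains only finitely many points of A) and coarsely dense (every closed half-space of ℝ^d contains infinitely many points of A), with 0 ∈ A. Then for every integer k ≥ 2, the k-th Brillouin zone Bz_k(0, A) is homotopy equivalent to the sphere S^{d−1}. -/
open Set Metric MeasureTheory

noncomputable section

/-- The integer lattice `ℤ^d` as a subset of `ℝ^d`. -/
def intLattice (d : ℕ) : Set (EuclideanSpace ℝ (Fin d)) :=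
  {x | ∀ i, ∃ n : ℤ, x i = (n : ℝ)}

/-- The canonical embedding of integer vectors into `ℝ^d`. -/
def toEuc (d : ℕ) (a : Fin d → ℤ) : EuclideanSpace ℝ (Fin d) :=
  WithLp.toLp 2 (fun i => (a i : ℝ))

/-- The `k`-th Brillouin zone of `a` in `A`: points `x` such that at most `k-1` points of
`A \ {a}` are strictly closer to `x` than `a`, and at least `k-1` points of `A \ {a}` are
at distance at most `dist x a` from `x`. -/
def brillouinZone (d k : ℕ) (A : Set (EuclideanSpace ℝ (Fin d)))
    (a : EuclideanSpace ℝ (Fin d)) : Set (EuclideanSpace ℝ (Fin d)) :=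
  {x | {p | p ∈ A \ {a} ∧ dist x p < dist x a}.encard ≤ ((k - 1 : ℕ) : ℕ∞) ∧
       ((k - 1 : ℕ) : ℕ∞) ≤ {p | p ∈ A \ {a} ∧ dist x p ≤ dist x a}.encard}

/-- The set of points with exactly `k-1` points of `A \ {a}` strictly closer than `a` and
no point of `A \ {a}` at exactly distance `dist x a`; its connected components are the
chambers of the `k`-th Brillouin zone. -/
def chamberRegion (d k : ℕ) (A : Set (EuclideanSpace ℝ (Fin d)))
    (a : EuclideanSpace ℝ (Fin d)) : Set (EuclideanSpace ℝ (Fin d)) :=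
  {x | {p | p ∈ A \ {a} ∧ dist x p < dist x a}.encard = ((k - 1 : ℕ) : ℕ∞) ∧
       ∀ p ∈ A \ {a}, dist x p ≠ dist x a}

/-- The chambers of the `k`-th Brillouin zone of `a` in `A`. -/
def chambers (d k : ℕ) (A : Set (EuclideanSpace ℝ (Fin d)))
    (a : EuclideanSpace ℝ (Fin d)) : Set (Set (EuclideanSpace ℝ (Fin d))) :=
  {C | ∃ x ∈ chamberRegion d k A a, C = connectedComponentIn (chamberRegion d k A a) x}

/-- `ν_d`, the volume of the unit ball in `ℝ^d`. -/
def unitBallVol (d : ℕ) : ℝ := Real.pi ^ ((d : ℝ) / 2) / Real.Gamma ((d : ℝ) / 2 + 1)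

/-!
Along the ray through a direction `u`, a point `p ≠ 0` is weakly (strictly) closer to `r • u`
than `0` iff `‖p‖² ≤ 2r⟪u, p⟫` (`<`), so both counts of closer points are nondecreasing in
`r`. Hence, with `ρ(u)` the least radius at which `k - 1` points are weakly closer, the zone
contains the segment from `ρ(u) • u` to each of its points `x` in direction `u`. Coarse density
makes `ρ(u)` finite and local finiteness makes it attained, positive and continuous in `u`, so
the zone deformation retracts radially onto the graph `{ρ(u) • u}`, a copy of the sphere.
-/

open Filter Topology

section Radial

variable {E : Type*} [NormedAddCommGroup E] [NormedSpace ℝ E] {X : Set E}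

def homotopyEquivSphereOfRadial (f : E → ℝ) (hf : ContinuousOn f (sphere 0 1))
    (hpos : ∀ u ∈ sphere (0 : E) 1, 0 < f u) (hmem : ∀ u ∈ sphere (0 : E) 1, f u • u ∈ X)
    (h0 : (0 : E) ∉ X)
    (hseg : ∀ x ∈ X, ∀ t ∈ uIcc (f (‖x‖⁻¹ • x)) ‖x‖, t • ‖x‖⁻¹ • x ∈ X) :
    ContinuousMap.HomotopyEquiv X (sphere (0 : E) 1) :=
  have hx0 (x : X) : (x : E) ≠ 0 := fun h => h0 (h ▸ x.2)
  have hproj : Continuous fun x : X => ‖(x : E)‖⁻¹ • (x : E) :=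
    (continuous_subtype_val.norm.inv₀ fun x => norm_ne_zero_iff.2 (hx0 x)).smul
      continuous_subtype_val
  have hproj_mem (x : X) : ‖(x : E)‖⁻¹ • (x : E) ∈ sphere (0 : E) 1 := by
    simpa using norm_smul_inv_norm (𝕜 := ℝ) (hx0 x)
  { toFun := ⟨fun x => ⟨‖(x : E)‖⁻¹ • (x : E), hproj_mem x⟩, hproj.subtype_mk _⟩
    invFun := ⟨fun u => ⟨f u • (u : E), hmem u u.2⟩,
      ((hf.comp_continuous continuous_subtype_val Subtype.prop).smul
        continuous_subtype_val).subtype_mk _⟩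
    left_inv := ⟨{
      toFun := fun q => ⟨((1 - (q.1 : ℝ)) • f (‖(q.2 : E)‖⁻¹ • (q.2 : E))
          + (q.1 : ℝ) • ‖(q.2 : E)‖) • ‖(q.2 : E)‖⁻¹ • (q.2 : E),
        hseg _ q.2.2 _ (convex_uIcc _ _ left_mem_uIcc right_mem_uIcc (sub_nonneg.2 q.1.2.2)
          q.1.2.1 (sub_add_cancel 1 _))⟩
      continuous_toFun := by
        have hf_proj : Continuous fun x : X => f (‖(x : E)‖⁻¹ • (x : E)) :=
          hf.comp_continuous hproj hproj_mem
        have ht : Continuous fun q : unitInterval × X => (q.1 : ℝ) :=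
          continuous_subtype_val.comp continuous_fst
        refine Continuous.subtype_mk ?_ _
        exact (((continuous_const.sub ht).smul (hf_proj.comp continuous_snd)).add
          (ht.smul (continuous_subtype_val.comp continuous_snd).norm)).smul
          (hproj.comp continuous_snd)
      map_zero_left := fun x => by ext1; simp
      map_one_left := fun x => by
        ext1
        simp [smul_inv_smul₀ (norm_ne_zero_iff.2 (hx0 x))] }⟩
    right_inv := by
      convert ContinuousMap.Homotopic.refl (ContinuousMap.id (sphere (0 : E) 1))
      ext u
      have hu : ‖(u : E)‖ = 1 := by simp
      simp [norm_smul, hu, abs_of_pos (hpos u u.2), smul_smul, inv_mul_cancel₀ (hpos u u.2).ne'] }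

end Radial

namespace BrillouinZone

section MetricSpace

variable {X : Type*} [MetricSpace X] {A : Set X} {a x : X}

def nearPoints (A : Set X) (a x : X) : Set X :=
  {p | p ∈ A \ {a} ∧ dist x p ≤ dist x a}

def strictNearPoints (A : Set X) (a x : X) : Set X :=
  {p | p ∈ A \ {a} ∧ dist x p < dist x a}

lemma strictNearPoints_subset_nearPoints : strictNearPoints A a x ⊆ nearPoints A a x :=
  fun _ hp => ⟨hp.1, hp.2.le⟩

lemma nearPoints_self : nearPoints A a a = ∅ :=
  eq_empty_of_forall_notMem fun _ hp => hp.1.2 (dist_le_zero.1 (by simpa using hp.2)).symm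

lemma nearPoints_subset_closedBall : nearPoints A a x ⊆ closedBall a (2 * dist x a) :=
  fun p hp => by
    rw [mem_closedBall]
    linarith [dist_triangle_left p a x, hp.2]

lemma nearPoints_finite (hloc : ∀ s : Set X, Bornology.IsBounded s → (A ∩ s).Finite) :
    (nearPoints A a x).Finite :=
  (hloc _ isBounded_closedBall).subset fun _ hp => ⟨hp.1.1, nearPoints_subset_closedBall hp⟩

lemma isClosed_setOf_mem_nearPoints (p : X) : IsClosed {y | p ∈ nearPoints A a y} :=
  isClosed_const.inter (isClosed_le (continuous_id.dist continuous_const)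
    (continuous_id.dist continuous_const))

lemma isOpen_setOf_mem_strictNearPoints (p : X) : IsOpen {y | p ∈ strictNearPoints A a y} :=
  isOpen_const.inter (isOpen_lt (continuous_id.dist continuous_const)
    (continuous_id.dist continuous_const))

lemma eventually_subset_strictNearPoints {F : Set X} (hF : F.Finite)
    (h : F ⊆ strictNearPoints A a x) : ∀ᶠ y in 𝓝 x, F ⊆ strictNearPoints A a y :=
  hF.eventually_all.2 fun p hp => (isOpen_setOf_mem_strictNearPoints p).mem_nhds (h hp)

lemma eventually_nearPoints_subset (hloc : ∀ s : Set X, Bornology.IsBounded s → (A ∩ s).Finite)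
    (x : X) : ∀ᶠ y in 𝓝 x, nearPoints A a y ⊆ nearPoints A a x := by
  set T := A ∩ closedBall a (2 * (dist x a + 1))
  have hT : T.Finite := hloc _ isBounded_closedBall
  have hnear_subset_T : ∀ᶠ y in 𝓝 x, nearPoints A a y ⊆ T := by
    filter_upwards [ball_mem_nhds x one_pos] with y hy p hp
    refine ⟨hp.1.1, closedBall_subset_closedBall ?_ (nearPoints_subset_closedBall hp)⟩
    linarith [dist_triangle y x a, mem_ball.1 hy]
  have hT_far : ∀ᶠ y in 𝓝 x, ∀ p ∈ T, p ∈ nearPoints A a y → p ∈ nearPoints A a x := by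
    refine hT.eventually_all.2 fun p _ => ?_
    by_cases hp : p ∈ nearPoints A a x
    · exact .of_forall fun _ _ => hp
    · filter_upwards [(isClosed_setOf_mem_nearPoints p).isOpen_compl.mem_nhds hp] with y hy h
      exact absurd h hy
  filter_upwards [hnear_subset_T, hT_far] with y hyT hy p hp using hy p (hyT hp) hp

end MetricSpace

section InnerProductSpace

variable {E : Type*} [NormedAddCommGroup E] [InnerProductSpace ℝ E] {A : Set E}

lemma dist_le_dist_zero_iff (x p : E) : dist x p ≤ dist x 0 ↔ ‖p‖ ^ 2 ≤ 2 * inner ℝ x p := by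
  rw [dist_eq_norm, dist_zero_right, ← sq_le_sq₀ (norm_nonneg _) (norm_nonneg _),
    norm_sub_sq_real]
  constructor <;> intro h <;> linarith

lemma dist_lt_dist_zero_iff (x p : E) : dist x p < dist x 0 ↔ ‖p‖ ^ 2 < 2 * inner ℝ x p := by
  rw [dist_eq_norm, dist_zero_right, ← sq_lt_sq₀ (norm_nonneg _) (norm_nonneg _),
    norm_sub_sq_real]
  constructor <;> intro h <;> linarith

lemma nearPoints_smul_subset_strictNearPoints_smul {r s : ℝ} (hr : 0 ≤ r) (hrs : r < s)
    (u : E) : nearPoints A 0 (r • u) ⊆ strictNearPoints A 0 (s • u) := by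
  rintro p ⟨hpA, hp⟩
  rw [dist_le_dist_zero_iff, real_inner_smul_left] at hp
  refine ⟨hpA, ?_⟩
  rw [dist_lt_dist_zero_iff, real_inner_smul_left]
  have hp0 : 0 < ‖p‖ ^ 2 := by
    have : p ≠ 0 := hpA.2
    positivity
  have hup : 0 < inner ℝ u p := by
    by_contra! h
    nlinarith [mul_nonneg hr (neg_nonneg.2 h)]
  nlinarith [mul_pos (sub_pos.2 hrs) hup]

lemma nearPoints_smul_mono {r s : ℝ} (hr : 0 ≤ r) (hrs : r ≤ s) (u : E) :
    nearPoints A 0 (r • u) ⊆ nearPoints A 0 (s • u) := by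
  rcases hrs.eq_or_lt with rfl | hlt
  · rfl
  · exact (nearPoints_smul_subset_strictNearPoints_smul hr hlt u).trans
      strictNearPoints_subset_nearPoints

lemma strictNearPoints_smul_mono {r s : ℝ} (hr : 0 ≤ r) (hrs : r ≤ s) (u : E) :
    strictNearPoints A 0 (r • u) ⊆ strictNearPoints A 0 (s • u) := by
  rcases hrs.eq_or_lt with rfl | hlt
  · rfl
  · exact strictNearPoints_subset_nearPoints.trans
      (nearPoints_smul_subset_strictNearPoints_smul hr hlt u)

variable (A) in
def zoneRadius (m : ℕ) (u : E) : ℝ :=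
  sInf {r | 0 < r ∧ (m : ℕ∞) ≤ (nearPoints A 0 (r • u)).encard}

variable {m : ℕ} {u : E}

lemma zoneRadius_nonneg : 0 ≤ zoneRadius A m u :=
  Real.sInf_nonneg fun _ hr => hr.1.le

lemma zoneRadius_le {r : ℝ} (hr : 0 < r) (h : (m : ℕ∞) ≤ (nearPoints A 0 (r • u)).encard) :
    zoneRadius A m u ≤ r :=
  csInf_le ⟨0, fun _ hs => hs.1.le⟩ ⟨hr, h⟩

lemma exists_le_encard_nearPoints_smul
    (hcd : ∀ (v : E) (c : ℝ), v ≠ 0 → (A ∩ {x | inner ℝ v x ≤ c}).Infinite) (hu : u ≠ 0) :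
    ∃ r : ℝ, 0 < r ∧ (m : ℕ∞) ≤ (nearPoints A 0 (r • u)).encard := by
  obtain ⟨W, hWA, hW⟩ := (hcd (-u) (-1) (neg_ne_zero.2 hu)).exists_subset_card_eq m
  have hW1 : ∀ p ∈ W, 1 ≤ inner ℝ u p := fun p hp => by
    have := (hWA hp).2
    simp only [mem_ofPred_eq, inner_neg_left] at this
    linarith
  set r := 1 + ∑ p ∈ W, ‖p‖ ^ 2
  have hWnear : (W : Set E) ⊆ nearPoints A 0 (r • u) := by
    intro p hp
    refine ⟨⟨(hWA hp).1, ?_⟩, ?_⟩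
    · rintro rfl
      linarith [hW1 0 hp, inner_zero_right (𝕜 := ℝ) u]
    · rw [dist_le_dist_zero_iff, real_inner_smul_left]
      have := Finset.single_le_sum (fun q _ => sq_nonneg ‖q‖) (Finset.mem_coe.1 hp)
      nlinarith [hW1 p hp, mul_nonneg (by positivity : (0 : ℝ) ≤ r) (sub_nonneg.2 (hW1 p hp))]
  refine ⟨r, by positivity, ?_⟩
  calc (m : ℕ∞) = (W : Set E).encard := by rw [encard_coe_eq_coe_finsetCard, hW]
    _ ≤ _ := encard_mono hWnear

variable (hloc : ∀ s : Set E, Bornology.IsBounded s → (A ∩ s).Finite)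
  (hcd : ∀ (v : E) (c : ℝ), v ≠ 0 → (A ∩ {x | inner ℝ v x ≤ c}).Infinite)
include hloc hcd

lemma le_encard_nearPoints_zoneRadius (hu : u ≠ 0) :
    (m : ℕ∞) ≤ (nearPoints A 0 (zoneRadius A m u • u)).encard := by
  obtain ⟨r₀, hr₀⟩ := exists_le_encard_nearPoints_smul hcd hu
  have hcl : zoneRadius A m u ∈
      closure {r | 0 < r ∧ (m : ℕ∞) ≤ (nearPoints A 0 (r • u)).encard} :=
    csInf_mem_closure ⟨r₀, hr₀⟩ ⟨0, fun _ hs => hs.1.le⟩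
  have hnear : ∀ᶠ r in 𝓝 (zoneRadius A m u),
      nearPoints A 0 (r • u) ⊆ nearPoints A 0 (zoneRadius A m u • u) :=
    ((continuous_id.smul continuous_const).tendsto _).eventually
      (eventually_nearPoints_subset hloc _)
  obtain ⟨r, hr, hsub⟩ := ((mem_closure_iff_frequently.1 hcl).and_eventually hnear).exists
  exact hr.2.trans (encard_mono hsub)

lemma zoneRadius_pos (hm : m ≠ 0) (hu : u ≠ 0) : 0 < zoneRadius A m u := by
  refine zoneRadius_nonneg.lt_of_ne fun h => hm ?_
  have := le_encard_nearPoints_zoneRadius hloc hcd (m := m) hu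
  rwa [← h, zero_smul, nearPoints_self, encard_empty, nonpos_iff_eq_zero, Nat.cast_eq_zero]
    at this

lemma encard_strictNearPoints_zoneRadius_le (hm : m ≠ 0) (hu : u ≠ 0) :
    (strictNearPoints A 0 (zoneRadius A m u • u)).encard ≤ m := by
  by_contra! hlt
  obtain ⟨F, hFsub, hF⟩ := exists_subset_encard_eq hlt.le
  have hF_near : ∀ᶠ r in 𝓝 (zoneRadius A m u), F ⊆ strictNearPoints A 0 (r • u) :=
    ((continuous_id.smul continuous_const).tendsto _).eventually
      (eventually_subset_strictNearPoints (finite_of_encard_eq_coe hF) hFsub)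
  obtain ⟨r, hFr, hr⟩ := ((hF_near.filter_mono nhdsWithin_le_nhds).and
    (Ioo_mem_nhdsLT (zoneRadius_pos hloc hcd hm hu))).exists
  exact (zoneRadius_le hr.1 (hF.symm.le.trans
    (encard_mono (hFr.trans strictNearPoints_subset_nearPoints)))).not_gt hr.2

lemma continuousAt_zoneRadius (hm : m ≠ 0) (hu : u ≠ 0) : ContinuousAt (zoneRadius A m) u := by
  have hne : ∀ᶠ v in 𝓝 u, v ≠ 0 := isOpen_ne.mem_nhds hu
  refine continuousAt_iff_lower_upperSemicontinuousAt.2 ⟨fun y hy => ?_, fun y hy => ?_⟩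
  · rcases le_or_gt y 0 with hy0 | hy0
    · filter_upwards [hne] with v hv using hy0.trans_lt (zoneRadius_pos hloc hcd hm hv)
    have hfew : ¬ (m : ℕ∞) ≤ (nearPoints A 0 (y • u)).encard :=
      fun h => (zoneRadius_le hy0 h).not_gt hy
    filter_upwards [hne, ((continuous_const.smul continuous_id).tendsto u).eventually
      (eventually_nearPoints_subset hloc (y • u))] with v hv hsub
    by_contra! hle
    exact hfew ((le_encard_nearPoints_zoneRadius hloc hcd hv).trans
      (encard_mono ((nearPoints_smul_mono zoneRadius_nonneg hle v).trans hsub)))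
  · obtain ⟨s, hs, hsy⟩ := exists_between hy
    filter_upwards [((continuous_const.smul continuous_id).tendsto u).eventually
      (eventually_subset_strictNearPoints (nearPoints_finite hloc)
        (nearPoints_smul_subset_strictNearPoints_smul zoneRadius_nonneg hs u))] with v hv
    exact (zoneRadius_le (zoneRadius_nonneg.trans_lt hs) ((le_encard_nearPoints_zoneRadius hloc
      hcd hu).trans (encard_mono (hv.trans strictNearPoints_subset_nearPoints)))).trans_lt hsy

end InnerProductSpace

section EuclideanSpace

variable {d k : ℕ} {A : Set (EuclideanSpace ℝ (Fin d))} {a x : EuclideanSpace ℝ (Fin d)}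

lemma mem_brillouinZone_iff : x ∈ brillouinZone d k A a ↔
    (strictNearPoints A a x).encard ≤ ((k - 1 : ℕ) : ℕ∞) ∧
      ((k - 1 : ℕ) : ℕ∞) ≤ (nearPoints A a x).encard :=
  Iff.rfl

lemma ne_of_mem_brillouinZone (hk : 2 ≤ k) (hx : x ∈ brillouinZone d k A a) : x ≠ a := by
  rintro rfl
  have := (mem_brillouinZone_iff.1 hx).2
  rw [nearPoints_self, encard_empty, nonpos_iff_eq_zero, Nat.cast_eq_zero] at this
  omega

variable (hloc : ∀ s, Bornology.IsBounded s → (A ∩ s).Finite)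
  (hcd : ∀ (v : EuclideanSpace ℝ (Fin d)) (c : ℝ), v ≠ 0 →
    (A ∩ {x | inner ℝ v x ≤ c}).Infinite)
  (hk : 2 ≤ k)
include hloc hcd hk

lemma zoneRadius_smul_mem_brillouinZone {u : EuclideanSpace ℝ (Fin d)} (hu : u ≠ 0) :
    zoneRadius A (k - 1) u • u ∈ brillouinZone d k A 0 :=
  ⟨encard_strictNearPoints_zoneRadius_le hloc hcd (by omega) hu,
    le_encard_nearPoints_zoneRadius hloc hcd hu⟩

lemma smul_mem_brillouinZone (hx : x ∈ brillouinZone d k A 0) {t : ℝ}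
    (ht : t ∈ uIcc (zoneRadius A (k - 1) (‖x‖⁻¹ • x)) ‖x‖) :
    t • ‖x‖⁻¹ • x ∈ brillouinZone d k A 0 := by
  have hx0 : x ≠ 0 := ne_of_mem_brillouinZone hk hx
  set u := ‖x‖⁻¹ • x
  have hxu : ‖x‖ • u = x := smul_inv_smul₀ (norm_ne_zero_iff.2 hx0) x
  have hu : u ≠ 0 := smul_ne_zero (inv_ne_zero (norm_ne_zero_iff.2 hx0)) hx0
  have hle : zoneRadius A (k - 1) u ≤ ‖x‖ :=
    zoneRadius_le (norm_pos_iff.2 hx0) (by rw [hxu]; exact hx.2)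
  rw [uIcc_of_le hle] at ht
  refine ⟨(encard_mono (strictNearPoints_smul_mono (zoneRadius_nonneg.trans ht.1) ht.2 u)).trans
    (by rw [hxu]; exact hx.1), (le_encard_nearPoints_zoneRadius hloc hcd hu).trans
    (encard_mono (nearPoints_smul_mono zoneRadius_nonneg ht.1 u))⟩

end EuclideanSpace

end BrillouinZone

open BrillouinZone in
theorem brillouinZone_homotopyEquiv_sphere_general (d : ℕ)
    (A : Set (EuclideanSpace ℝ (Fin d)))
    (hloc : ∀ s : Set (EuclideanSpace ℝ (Fin d)), Bornology.IsBounded s → (A ∩ s).Finite)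
    (hcd : ∀ (v : EuclideanSpace ℝ (Fin d)) (c : ℝ), v ≠ 0 →
      (A ∩ {x | (inner ℝ v x : ℝ) ≤ c}).Infinite)
    (k : ℕ) (hk : 2 ≤ k) :
    Nonempty (ContinuousMap.HomotopyEquiv (brillouinZone d k A 0)
      (Metric.sphere (0 : EuclideanSpace ℝ (Fin d)) 1)) := by
  have hu {u : EuclideanSpace ℝ (Fin d)} (h : u ∈ sphere 0 1) : u ≠ 0 :=
    ne_zero_of_mem_unit_sphere ⟨u, h⟩
  exact ⟨homotopyEquivSphereOfRadial (zoneRadius A (k - 1))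
    (fun u h => (continuousAt_zoneRadius hloc hcd (by omega) (hu h)).continuousWithinAt)
    (fun u h => zoneRadius_pos hloc hcd (by omega) (hu h))
    (fun u h => zoneRadius_smul_mem_brillouinZone hloc hcd hk (hu h))
    (fun h => ne_of_mem_brillouinZone hk h rfl)
    (fun x hx t ht => smul_mem_brillouinZone hloc hcd hk hx ht)⟩

/-- For a locally finite, coarsely dense `A ⊆ ℝ^d` with `0 ∈ A` and `k ≥ 2`,
the `k`-th Brillouin zone of `0` is homotopy equivalent to the sphere `S^{d-1}`. -/
theorem brillouinZone_homotopyEquiv_sphere (d : ℕ) (hd : 1 ≤ d)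
    (A : Set (EuclideanSpace ℝ (Fin d))) (hA0 : (0 : EuclideanSpace ℝ (Fin d)) ∈ A)
    (hloc : ∀ s : Set (EuclideanSpace ℝ (Fin d)), Bornology.IsBounded s → (A ∩ s).Finite)
    (hcd : ∀ (v : EuclideanSpace ℝ (Fin d)) (c : ℝ), v ≠ 0 →
      (A ∩ {x | (inner ℝ v x : ℝ) ≤ c}).Infinite)
    (k : ℕ) (hk : 2 ≤ k) :
    Nonempty (ContinuousMap.HomotopyEquiv (brillouinZone d k A 0)
      (Metric.sphere (0 : EuclideanSpace ℝ (Fin d)) 1)) :=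
  brillouinZone_homotopyEquiv_sphere_general d A hloc hcd k hk
end
end

section
/- Let H_1, …, H_n be n affine hyperplanes in ℝ^d, given as the zero sets of affine functionals f_1, …, f_n, forming a simple arrangement: every j ≤ d of the hyperplanes intersect in an affine subspace of dimension d−j, and no d+1 of them have a common point. Then for each 0 ≤ p ≤ d, the number of sign vectors σ ∈ {−1, 0, +1}^n that are realized by some point x ∈ ℝ^d (meaning σ_i = sign(f_i(x)) for all i) and have exactly d−p entries equal to 0, equals ∑_{i=0}^{p} C(d−i, p−i)·C(n, d−i), where C(·,·) denotes the binomial coefficient. (This counts the p-dimensional cells of the arrangement.) -/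
open Set Metric MeasureTheory

noncomputable section

open Module

variable {d n : ℕ}

abbrev Ed (d : ℕ) := EuclideanSpace ℝ (Fin d)

lemma zeros_snoc (σ : Fin (n+1) → SignType) :
    (Finset.univ.filter fun i => σ i = 0).card
      = (Finset.univ.filter fun i => σ (Fin.castSucc i) = 0).card
        + (if σ (Fin.last n) = 0 then 1 else 0) := by
  classical
  rw [Finset.card_filter, Finset.card_filter, Fin.sum_univ_castSucc]

lemma sign_add_small {a b : ℝ} (h : |b| < |a|) : SignType.sign (a + b) = SignType.sign a := by
  rcases lt_trichotomy a 0 with ha | ha | ha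
  · rw [sign_neg ha, sign_neg]
    have := abs_lt.mp h
    rw [abs_of_neg ha] at this
    linarith [this.2]
  · subst ha
    rw [abs_zero] at h
    exact absurd h (not_lt.mpr (abs_nonneg b))
  · rw [sign_pos ha, sign_pos]
    have := abs_lt.mp h
    rw [abs_of_pos ha] at this
    linarith [this.1]

lemma aff_apply_add (f : Ed d →ᵃ[ℝ] ℝ) (x v : Ed d) : f (x + v) = f x + f.linear v := by
  have := f.map_vadd x v
  simpa [add_comm] using this

lemma aff_continuous (f : Ed d →ᵃ[ℝ] ℝ) : Continuous f := by
  rw [AffineMap.decomp f]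
  exact (LinearMap.continuous_of_finiteDimensional f.linear).add continuous_const

lemma exists_perturb (f : Fin n → (Ed d →ᵃ[ℝ] ℝ)) (τ : Fin n → SignType)
    (x v : Ed d) (hx : ∀ i, τ i = SignType.sign (f i x))
    (hv : ∀ i, τ i = 0 → (f i).linear v = 0) :
    ∃ t : ℝ, 0 < t ∧ ∀ s : ℝ, 0 ≤ s → s ≤ t →
      ∀ i, τ i = SignType.sign (f i (x + s • v)) := by
  classical
  have key : ∀ i : Fin n, ∃ t : ℝ, 0 < t ∧ ∀ s : ℝ, 0 ≤ s → s ≤ t →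
      τ i = SignType.sign (f i (x + s • v)) := by
    intro i
    by_cases h0 : τ i = 0
    · refine ⟨1, one_pos, fun s _ _ => ?_⟩
      have hx0 : f i x = 0 := by
        apply sign_eq_zero_iff.mp
        rw [← hx i, h0]
      rw [aff_apply_add, _root_.map_smul, hv i h0, smul_zero, add_zero, hx0]
      simpa using h0
    · have hfx : f i x ≠ 0 := by
        intro h
        apply h0
        rw [hx i, h]
        simp
      set c := (f i).linear v with hc
      refine ⟨|f i x| / (|c| + 1), by positivity, fun s hs0 hs1 => ?_⟩
      rw [aff_apply_add, _root_.map_smul]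
      have habs : |s • c| < |f i x| := by
        rw [smul_eq_mul, abs_mul, abs_of_nonneg hs0]
        calc s * |c| ≤ (|f i x| / (|c| + 1)) * |c| := by
              apply mul_le_mul_of_nonneg_right hs1 (abs_nonneg c)
          _ < |f i x| := by
              rw [div_mul_eq_mul_div, div_lt_iff₀ (by positivity)]
              have : |c| < |c| + 1 := by linarith
              have h2 : 0 < |f i x| := abs_pos.mpr hfx
              nlinarith
      rw [hx i, sign_add_small habs]
  choose T hTpos hT using key
  set t := (insert (1:ℝ) (Finset.univ.image T)).min' (by simp) with ht
  have htmem := (insert (1:ℝ) (Finset.univ.image T)).min'_mem (by simp)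
  have htpos : 0 < t := by
    rw [← ht] at htmem
    rcases Finset.mem_insert.mp htmem with h | h
    · rw [h]; exact one_pos
    · obtain ⟨i, _, hi⟩ := Finset.mem_image.mp h
      rw [← hi]; exact hTpos i
  refine ⟨t, htpos, fun s hs0 hs1 i => ?_⟩
  apply hT i s hs0
  calc s ≤ t := hs1
    _ ≤ T i := Finset.min'_le _ _ (Finset.mem_insert_of_mem (Finset.mem_image_of_mem T (Finset.mem_univ i)))

lemma cell_convex (f : Fin n → (Ed d →ᵃ[ℝ] ℝ)) (τ : Fin n → SignType) :
    Convex ℝ {y : Ed d | ∀ i, τ i = SignType.sign (f i y)} := by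
  have : {y : Ed d | ∀ i, τ i = SignType.sign (f i y)}
      = ⋂ i, (f i) ⁻¹' {r : ℝ | τ i = SignType.sign r} := by
    ext y; simp [Set.mem_iInter]
  rw [this]
  apply convex_iInter
  intro i
  apply Convex.affine_preimage
  cases h : τ i with
  | zero =>
    have : {r : ℝ | SignType.zero = SignType.sign r} = {0} := by
      ext r
      simp only [Set.mem_setOf_eq, Set.mem_singleton_iff]
      rw [eq_comm]
      exact sign_eq_zero_iff
    rw [this]
    exact convex_singleton 0
  | pos =>
    have : {r : ℝ | SignType.pos = SignType.sign r} = Set.Ioi 0 := by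
      ext r
      simp only [Set.mem_setOf_eq, Set.mem_Ioi]
      rw [eq_comm]
      exact sign_eq_one_iff
    rw [this]
    exact convex_Ioi 0
  | neg =>
    have : {r : ℝ | SignType.neg = SignType.sign r} = Set.Iio 0 := by
      ext r
      simp only [Set.mem_setOf_eq, Set.mem_Iio]
      rw [eq_comm]
      exact sign_eq_neg_one_iff
    rw [this]
    exact convex_Iio 0

lemma exists_zero_on_segment (g : Ed d →ᵃ[ℝ] ℝ) {C : Set (Ed d)} (hC : Convex ℝ C)
    {yp ym : Ed d} (hyp : yp ∈ C) (hym : ym ∈ C) (hp : 0 < g yp) (hm : g ym < 0) :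
    ∃ z ∈ C, g z = 0 := by
  set γ : ℝ → Ed d := fun t => ym + t • (yp - ym) with hγ
  have hcont : Continuous (g ∘ γ) :=
    (aff_continuous g).comp (continuous_const.add (continuous_id.smul continuous_const))
  have h0 : (g ∘ γ) 0 = g ym := by simp [hγ]
  have h1 : (g ∘ γ) 1 = g yp := by simp [hγ]
  have := intermediate_value_Icc (by norm_num : (0:ℝ) ≤ 1) hcont.continuousOn
  rw [h0, h1] at this
  obtain ⟨t, ht, hgt⟩ := this ⟨le_of_lt hm, le_of_lt hp⟩
  refine ⟨γ t, ?_, hgt⟩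
  have : γ t = (1 - t) • ym + t • yp := by
    rw [hγ]
    simp only
    rw [smul_sub, sub_smul, one_smul]
    abel
  rw [this]
  exact hC hym hyp (by linarith [ht.2]) ht.1 (by ring)

lemma finrank_comap_of_le_range {m d : ℕ} (eL : Ed m →ₗ[ℝ] Ed d) (hinj : Function.Injective eL)
    (q : Submodule ℝ (Ed d)) (hq : q ≤ LinearMap.range eL) :
    finrank ℝ (q.comap eL) = finrank ℝ q := by
  have hmap : (q.comap eL).map eL = q := by
    rw [Submodule.map_comap_eq, inf_eq_right.mpr hq]
  conv_rhs => rw [← hmap]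
  exact (Submodule.equivMapOfInjective eL hinj (q.comap eL)).finrank_eq

lemma direction_comap {m : ℕ} (e : Ed m →ᵃ[ℝ] Ed d) (W : AffineSubspace ℝ (Ed d)) {p0 : Ed m}
    (hp0 : p0 ∈ W.comap e) : (W.comap e).direction = W.direction.comap e.linear := by
  ext u
  rw [← AffineSubspace.vadd_mem_iff_mem_direction u hp0, AffineSubspace.mem_comap,
    AffineMap.map_vadd,
    AffineSubspace.vadd_mem_iff_mem_direction _ (AffineSubspace.mem_comap.mp hp0)]
  exact Iff.rfl


def Fc (n d p : ℕ) : ℕ := ∑ i ∈ Finset.range (p + 1), Nat.choose (d - i) (p - i) * Nat.choose n (d - i)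

lemma Fc_zero (d p : ℕ) (hp : p ≤ d) : Fc 0 d p = if p = d then 1 else 0 := by
  unfold Fc
  rcases eq_or_lt_of_le hp with h | h
  · subst h
    rw [if_pos rfl]
    rw [Finset.sum_eq_single p]
    · simp
    · intro i hi hne
      have hid : i < p := lt_of_le_of_ne (Nat.lt_succ_iff.mp (Finset.mem_range.mp hi)) hne
      rw [Nat.choose_eq_zero_of_lt (by omega : 0 < p - i)]
      ring
    · simp
  · rw [if_neg (by omega)]
    apply Finset.sum_eq_zero
    intro i hi
    have : i ≤ p := Nat.lt_succ_iff.mp (Finset.mem_range.mp hi)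
    rw [Nat.choose_eq_zero_of_lt (by omega : 0 < d - i)]
    ring

lemma Fc_succ (n d p : ℕ) (hd : 1 ≤ d) (hp : p ≤ d) :
    Fc (n + 1) d p
      = Fc n d p + (if p = d then 0 else Fc n (d - 1) p)
          + (if p = 0 then 0 else Fc n (d - 1) (p - 1)) := by
  rcases eq_or_lt_of_le hp with h | h
  · -- p = d
    subst h
    rw [if_pos rfl]
    rcases Nat.eq_zero_or_pos p with h0 | h0
    · omega
    rw [if_neg (by omega)]
    unfold Fc
    rw [Finset.sum_range_succ, Finset.sum_range_succ (n := p)]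
    simp only [Nat.sub_self, Nat.choose_self, Nat.choose_zero_right, one_mul, mul_one]
    have key : ∀ i ∈ Finset.range p,
        Nat.choose (n+1) (p - i) = Nat.choose n (p - i) + Nat.choose n (p - 1 - i) := by
      intro i hi
      have hip : i < p := Finset.mem_range.mp hi
      have h1 : p - i = (p - 1 - i) + 1 := by omega
      rw [h1, Nat.choose_succ_succ']
      omega
    rw [Finset.sum_congr rfl key, Finset.sum_add_distrib]
    have hrange : Finset.range ((p-1)+1) = Finset.range p := by congr 1; omega
    rw [hrange]
    omega
  · -- p < d
    rw [if_neg (by omega)]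
    have hB : ∑ i ∈ Finset.range (p+1), Nat.choose (d - i) (p - i) * Nat.choose n (d - 1 - i)
        = Fc n (d-1) p + (if p = 0 then 0 else Fc n (d - 1) (p - 1)) := by
      unfold Fc
      rw [Finset.sum_range_succ,
        Finset.sum_range_succ (f := fun i => Nat.choose (d-1-i) (p-i) * Nat.choose n (d-1-i))]
      have htop : Nat.choose (d - p) (p - p) * Nat.choose n (d - 1 - p)
          = Nat.choose (d - 1 - p) (p - p) * Nat.choose n (d - 1 - p) := by
        simp [Nat.sub_self]
      rw [htop]
      have split : ∀ i ∈ Finset.range p,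
          Nat.choose (d - i) (p - i) * Nat.choose n (d - 1 - i)
            = Nat.choose (d - 1 - i) (p - i) * Nat.choose n (d - 1 - i)
              + Nat.choose (d - 1 - i) (p - 1 - i) * Nat.choose n (d - 1 - i) := by
        intro i hi
        have hip : i < p := Finset.mem_range.mp hi
        have h1 : d - i = (d - 1 - i) + 1 := by omega
        have h2 : p - i = (p - 1 - i) + 1 := by omega
        rw [h1, h2, Nat.choose_succ_succ]
        have h3 : p - 1 - i + 1 = p - i := by omega
        rw [h3, h2]
        ring
      rw [Finset.sum_congr rfl split, Finset.sum_add_distrib]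
      rcases Nat.eq_zero_or_pos p with h0 | h0
      · subst h0
        simp
      · rw [if_neg (by omega)]
        have hrange : Finset.range ((p-1)+1) = Finset.range p := by congr 1; omega
        rw [hrange]
        omega
    have key : ∀ i ∈ Finset.range (p+1),
        Nat.choose (d - i) (p - i) * Nat.choose (n+1) (d - i)
          = Nat.choose (d - i) (p - i) * Nat.choose n (d - i)
            + Nat.choose (d - i) (p - i) * Nat.choose n (d - 1 - i) := by
      intro i hi
      have hip : i ≤ p := Nat.lt_succ_iff.mp (Finset.mem_range.mp hi)
      have h1 : d - i = (d - 1 - i) + 1 := by omega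
      rw [h1, Nat.choose_succ_succ']
      ring
    have : Fc (n+1) d p = Fc n d p + ∑ i ∈ Finset.range (p+1),
        Nat.choose (d - i) (p - i) * Nat.choose n (d - 1 - i) := by
      unfold Fc
      rw [Finset.sum_congr rfl key, Finset.sum_add_distrib]
    rw [this, hB]
    ring

set_option maxHeartbeats 4000000 in
lemma main_count (d : ℕ) : ∀ (n : ℕ) (f : Fin n → (Ed d →ᵃ[ℝ] ℝ)),
    (∀ s : Finset (Fin n), s.card ≤ d →
      ∃ W : AffineSubspace ℝ (Ed d), (W : Set (Ed d)) = {x | ∀ i ∈ s, f i x = 0} ∧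
        (W : Set (Ed d)).Nonempty ∧ Module.finrank ℝ W.direction = d - s.card) →
    (∀ s : Finset (Fin n), s.card = d + 1 → ¬ ∃ x : Ed d, ∀ i ∈ s, f i x = 0) →
    ∀ (p : ℕ), p ≤ d →
    {σ : Fin n → SignType | (∃ x : Ed d, ∀ i, σ i = SignType.sign (f i x)) ∧
      (Finset.univ.filter fun i => σ i = 0).card = d - p}.ncard = Fc n d p := by
  induction d using Nat.strong_induction_on with
  | _ d IHd =>
  rcases Nat.eq_zero_or_pos d with hd0 | hd1
  · -- d = 0
    subst hd0
    intro n f hs hn p hp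
    have hp0 : p = 0 := Nat.le_zero.mp hp
    subst hp0
    have hsub : ∀ a b : Ed 0, a = b := fun a b => by ext i; exact i.elim0
    have hne : ∀ i, f i 0 ≠ 0 := by
      intro i hzero
      exact hn {i} (by simp) ⟨0, by simpa using hzero⟩
    have hSeq : {σ : Fin 0 → SignType | True} = {σ : Fin 0 → SignType | True} := rfl
    have : {σ : Fin n → SignType | (∃ x : Ed 0, ∀ i, σ i = SignType.sign (f i x)) ∧
        (Finset.univ.filter fun i => σ i = 0).card = 0 - 0}
        = {fun i => SignType.sign (f i 0)} := by
      ext σ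
      simp only [Set.mem_setOf_eq, Set.mem_singleton_iff]
      constructor
      · rintro ⟨⟨x, hx⟩, _⟩
        funext i
        rw [hx i, hsub x 0]
      · rintro rfl
        refine ⟨⟨0, fun i => rfl⟩, ?_⟩
        simp only [Nat.zero_sub]
        rw [Finset.card_eq_zero, Finset.filter_eq_empty_iff]
        intro i _
        simpa [sign_eq_zero_iff] using hne i
    rw [this, Set.ncard_singleton]
    unfold Fc
    simp
  · -- d ≥ 1
    intro n
    induction n with
    | zero =>
      intro f hs hn p hp
      rcases eq_or_ne p d with hpd | hpd
      · have : {σ : Fin 0 → SignType | (∃ x : Ed d, ∀ i, σ i = SignType.sign (f i x)) ∧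
            (Finset.univ.filter fun i => σ i = 0).card = d - p}
            = Set.univ := by
          ext σ
          simp only [Set.mem_setOf_eq, Set.mem_univ, iff_true]
          refine ⟨⟨0, fun i => i.elim0⟩, by simp; omega⟩
        rw [this, Set.ncard_univ, Fc_zero d p hp, if_pos hpd]
        simp [Nat.card_eq_fintype_card]
      · have : {σ : Fin 0 → SignType | (∃ x : Ed d, ∀ i, σ i = SignType.sign (f i x)) ∧
            (Finset.univ.filter fun i => σ i = 0).card = d - p}
            = ∅ := by
          ext σ
          simp only [Set.mem_setOf_eq, Set.mem_empty_iff_false, iff_false, not_and]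
          intro _
          have : (Finset.univ.filter fun i : Fin 0 => σ i = 0) = ∅ := by
            apply Finset.eq_empty_of_forall_notMem
            intro i
            exact i.elim0
          rw [this]
          simp
          omega
        rw [this, Set.ncard_empty, Fc_zero d p hp, if_neg hpd]
    | succ n IHn =>
      intro f hs hn p hp
      classical
      set fc : Fin n → (Ed d →ᵃ[ℝ] ℝ) := fun i => f i.castSucc with hfcdef
      set flast : Ed d →ᵃ[ℝ] ℝ := f (Fin.last n) with hflastdef
      have hmapset : ∀ (s : Finset (Fin n)) (x : Ed d),
          (∀ i ∈ s.map Fin.castSuccEmb, f i x = 0) ↔ (∀ i ∈ s, fc i x = 0) := by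
        intro s x
        constructor
        · intro h i hi
          exact h _ (Finset.mem_map_of_mem _ hi)
        · intro h i hi
          obtain ⟨a, ha, rfl⟩ := Finset.mem_map.mp hi
          exact h a ha
      have hs' : ∀ s : Finset (Fin n), s.card ≤ d →
          ∃ W : AffineSubspace ℝ (Ed d), (W : Set (Ed d)) = {x | ∀ i ∈ s, fc i x = 0} ∧
            (W : Set (Ed d)).Nonempty ∧ Module.finrank ℝ W.direction = d - s.card := by
        intro s hc
        obtain ⟨W, h1, h2, h3⟩ := hs (s.map Fin.castSuccEmb) (by rwa [Finset.card_map])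
        rw [Finset.card_map] at h3
        refine ⟨W, ?_, h2, h3⟩
        rw [h1]
        ext x
        exact hmapset s x
      have hn' : ∀ s : Finset (Fin n), s.card = d + 1 → ¬ ∃ x : Ed d, ∀ i ∈ s, fc i x = 0 := by
        rintro s hc ⟨x, hx⟩
        exact hn (s.map Fin.castSuccEmb) (by rwa [Finset.card_map]) ⟨x, (hmapset s x).mpr hx⟩
      obtain ⟨H, hHcoe0, hHne, hHdim0⟩ := hs {Fin.last n} (by simp; omega)
      have hHcoe : (H : Set (Ed d)) = {x | flast x = 0} := by
        rw [hHcoe0]; ext x; simp [hflastdef]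
      have hHdim : Module.finrank ℝ H.direction = d - 1 := by simpa using hHdim0
      obtain ⟨x0, hx0⟩ := hHne
      have hx0' : x0 ∈ H := hx0
      have hdim' : Module.finrank ℝ (Ed (d-1)) = Module.finrank ℝ H.direction := by
        rw [finrank_euclideanSpace_fin, hHdim]
      set ℓ : Ed (d-1) ≃ₗ[ℝ] H.direction := LinearEquiv.ofFinrankEq _ _ hdim' with hldef
      set eL : Ed (d-1) →ₗ[ℝ] Ed d := H.direction.subtype ∘ₗ ℓ.toLinearMap with heLdef
      have heL_inj : Function.Injective eL := (Submodule.injective_subtype _).comp ℓ.injective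
      have heL_range : LinearMap.range eL = H.direction := by
        rw [heLdef, LinearMap.range_comp, LinearEquiv.range, Submodule.map_top,
          Submodule.range_subtype]
      set e : Ed (d-1) →ᵃ[ℝ] Ed d :=
        { toFun := fun v => eL v + x0
          linear := eL
          map_vadd' := by
            intro q v
            show eL (v + q) + x0 = eL v + (eL q + x0)
            rw [map_add, add_assoc] } with hedef
      have he_apply : ∀ v, e v = eL v + x0 := fun _ => rfl
      have he_linear : e.linear = eL := rfl
      have he_mem : ∀ v, e v ∈ H := by
        intro v
        have h1 : eL v ∈ H.direction := by
          rw [heLdef]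
          exact (ℓ v).2
        have h2 := AffineSubspace.vadd_mem_of_mem_direction h1 hx0'
        show eL v + x0 ∈ H
        rwa [← vadd_eq_add]
      have he_last : ∀ v, flast (e v) = 0 := by
        intro v
        have h1 := he_mem v
        rw [← SetLike.mem_coe, hHcoe] at h1
        exact h1
      have he_surj : ∀ x, x ∈ H → ∃ v, e v = x := by
        intro x hx
        have hmem : x - x0 ∈ H.direction := by
          have h1 := AffineSubspace.vsub_mem_direction hx hx0'
          rwa [vsub_eq_sub] at h1
        refine ⟨ℓ.symm ⟨x - x0, hmem⟩, ?_⟩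
        show eL (ℓ.symm ⟨x - x0, hmem⟩) + x0 = x
        have h2 : eL (ℓ.symm ⟨x - x0, hmem⟩) = x - x0 := by
          rw [heLdef]
          show (↑(ℓ (ℓ.symm ⟨x - x0, hmem⟩)) : Ed d) = x - x0
          rw [LinearEquiv.apply_symm_apply]
        rw [h2, sub_add_cancel]
      set g : Fin n → (Ed (d-1) →ᵃ[ℝ] ℝ) := fun i => (fc i).comp e with hgdef
      have hg_apply : ∀ i v, g i v = fc i (e v) := fun _ _ => rfl
      have hlast_not_mem : ∀ s : Finset (Fin n), Fin.last n ∉ s.map Fin.castSuccEmb := by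
        intro s hmem
        obtain ⟨a, _, ha⟩ := Finset.mem_map.mp hmem
        exact absurd ha (Fin.castSucc_lt_last a).ne
      have hgs : ∀ s : Finset (Fin n), s.card ≤ d - 1 →
          ∃ W : AffineSubspace ℝ (Ed (d-1)), (W : Set (Ed (d-1))) = {x | ∀ i ∈ s, g i x = 0} ∧
            (W : Set (Ed (d-1))).Nonempty ∧ Module.finrank ℝ W.direction = (d-1) - s.card := by
        intro s hc
        have hcard : (insert (Fin.last n) (s.map Fin.castSuccEmb)).card = s.card + 1 := by
          rw [Finset.card_insert_of_notMem (hlast_not_mem s), Finset.card_map]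
        obtain ⟨W2, h1, h2, h3⟩ := hs _ (by rw [hcard]; omega)
        rw [hcard] at h3
        have hW2coe : (W2 : Set (Ed d)) = {x | flast x = 0 ∧ ∀ i ∈ s, fc i x = 0} := by
          rw [h1]; ext x
          simp only [Set.mem_setOf_eq, Finset.mem_insert]
          constructor
          · intro h
            exact ⟨h _ (Or.inl rfl), fun i hi => h _ (Or.inr (Finset.mem_map_of_mem _ hi))⟩
          · rintro ⟨h0, h⟩ i hi
            rcases hi with rfl | hi
            · exact h0
            · obtain ⟨a, ha, rfl⟩ := Finset.mem_map.mp hi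
              exact h a ha
        have hW2H : W2 ≤ H := by
          intro x hx
          have hx' : x ∈ (W2 : Set (Ed d)) := hx
          rw [hW2coe] at hx'
          show x ∈ (H : Set (Ed d))
          rw [hHcoe]
          exact hx'.1
        obtain ⟨y2, hy2⟩ := h2
        obtain ⟨v2, hv2⟩ := he_surj y2 (hW2H hy2)
        have hv2mem : v2 ∈ W2.comap e := by
          rw [AffineSubspace.mem_comap, hv2]; exact hy2
        refine ⟨W2.comap e, ?_, ⟨v2, hv2mem⟩, ?_⟩
        · rw [AffineSubspace.coe_comap]
          ext v
          simp only [Set.mem_preimage, Set.mem_setOf_eq]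
          rw [show (W2 : Set (Ed d)) = _ from hW2coe]
          simp only [Set.mem_setOf_eq]
          constructor
          · intro h i hi; exact h.2 i hi
          · intro h
            exact ⟨he_last v, h⟩
        · rw [direction_comap e W2 hv2mem, he_linear,
            finrank_comap_of_le_range eL heL_inj _
              (by rw [heL_range]; exact AffineSubspace.direction_le hW2H),
            h3]
          omega
      have hgn : ∀ s : Finset (Fin n), s.card = (d-1) + 1 →
          ¬ ∃ v : Ed (d-1), ∀ i ∈ s, g i v = 0 := by
        rintro s hc ⟨v, hv⟩
        apply hn (insert (Fin.last n) (s.map Fin.castSuccEmb))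
        · rw [Finset.card_insert_of_notMem (hlast_not_mem s), Finset.card_map, hc]; omega
        refine ⟨e v, fun i hi => ?_⟩
        rcases Finset.mem_insert.mp hi with rfl | hi
        · exact he_last v
        · obtain ⟨a, ha, rfl⟩ := Finset.mem_map.mp hi
          exact hv a ha
      have getW : ∀ τ : Fin n → SignType,
          (Finset.univ.filter fun i => τ i = 0).card = d - p →
          ∃ W : AffineSubspace ℝ (Ed d),
            (W : Set (Ed d)) = {x | ∀ i ∈ Finset.univ.filter (fun i => τ i = 0), fc i x = 0} ∧
            (W : Set (Ed d)).Nonempty ∧ Module.finrank ℝ W.direction = p := by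
        intro τ hτ
        obtain ⟨W, h1, h2, h3⟩ := hs' _ (le_trans (le_of_eq hτ) (Nat.sub_le d p))
        exact ⟨W, h1, h2, by rw [h3, hτ]; omega⟩
      have hmemW : ∀ (τ : Fin n → SignType) (W : AffineSubspace ℝ (Ed d)),
          (W : Set (Ed d)) = {x | ∀ i ∈ Finset.univ.filter (fun i => τ i = 0), fc i x = 0} →
          ∀ x, (∀ i, τ i = SignType.sign (fc i x)) → x ∈ (W : Set (Ed d)) := by
        intro τ W hWcoe x hx
        rw [hWcoe]
        intro i hi
        have h0 : τ i = 0 := (Finset.mem_filter.mp hi).2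
        exact sign_eq_zero_iff.mp (by rw [← hx i, h0])
      have hdirlin : ∀ (Z : Finset (Fin n)) (W : AffineSubspace ℝ (Ed d)),
          (W : Set (Ed d)) = {x | ∀ i ∈ Z, fc i x = 0} → (W : Set (Ed d)).Nonempty →
          ∀ u ∈ W.direction, ∀ i ∈ Z, (fc i).linear u = 0 := by
        intro Z W hWcoe hWne u hu i hi
        have hds := AffineSubspace.coe_direction_eq_vsub_set hWne
        have hu' : u ∈ ((W : Set (Ed d)) -ᵥ (W : Set (Ed d))) := by
          rw [← hds]; exact hu
        obtain ⟨y1, hy1, y2, hy2, rfl⟩ := hu'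
        rw [AffineMap.linearMap_vsub]
        rw [hWcoe] at hy1 hy2
        rw [hy1 i hi, hy2 i hi]
        simp
      have keyW : ∀ (Z : Finset (Fin n)), Z.card = d - p →
          ∀ (W : AffineSubspace ℝ (Ed d)), (W : Set (Ed d)) = {x | ∀ i ∈ Z, fc i x = 0} →
          (W : Set (Ed d)).Nonempty → Module.finrank ℝ W.direction = p →
          ((W : Set (Ed d)) ⊆ {x | flast x = 0}) → False := by
        intro Z hZcard W hWcoe hWne hWdim hsub
        rcases Nat.eq_zero_or_pos p with hp0 | hp1
        · obtain ⟨y, hy⟩ := hWne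
          apply hn (insert (Fin.last n) (Z.map Fin.castSuccEmb))
          · rw [Finset.card_insert_of_notMem (hlast_not_mem Z), Finset.card_map, hZcard]; omega
          refine ⟨y, fun i hi => ?_⟩
          rcases Finset.mem_insert.mp hi with rfl | hi
          · exact hsub hy
          · obtain ⟨a, ha, rfl⟩ := Finset.mem_map.mp hi
            rw [hWcoe] at hy
            exact hy a ha
        · obtain ⟨W2, h1, h2, h3⟩ := hs (insert (Fin.last n) (Z.map Fin.castSuccEmb))
            (by rw [Finset.card_insert_of_notMem (hlast_not_mem Z), Finset.card_map, hZcard]; omega)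
          have hW2coe : (W2 : Set (Ed d)) = (W : Set (Ed d)) := by
            rw [h1, hWcoe]
            ext x
            simp only [Set.mem_setOf_eq, Finset.mem_insert]
            constructor
            · intro h a ha
              exact h _ (Or.inr (Finset.mem_map_of_mem _ ha))
            · intro h i hi
              rcases hi with rfl | hi
              · exact hsub (show x ∈ (W : Set (Ed d)) by rw [hWcoe]; exact h)
              · obtain ⟨a, ha, rfl⟩ := Finset.mem_map.mp hi
                exact h a ha
          have hW2W : W2 = W := SetLike.coe_set_eq.mp hW2coe
          rw [hW2W, hWdim] at h3
          rw [Finset.card_insert_of_notMem (hlast_not_mem Z), Finset.card_map, hZcard] at h3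
          omega
      have fact1 : ∀ τ : Fin n → SignType, (∃ x, ∀ i, τ i = SignType.sign (fc i x)) →
          (Finset.univ.filter fun i => τ i = 0).card = d - p →
          ∃ y, (∀ i, τ i = SignType.sign (fc i y)) ∧ flast y ≠ 0 := by
        rintro τ ⟨x, hx⟩ hτ
        by_contra hcon
        push_neg at hcon
        obtain ⟨W, hWcoe, hWne, hWdim⟩ := getW τ hτ
        have hxW : x ∈ (W : Set (Ed d)) := hmemW τ W hWcoe x hx
        have hlin0 : ∀ u ∈ W.direction, flast.linear u = 0 := by
          intro u hu
          obtain ⟨t, ht, hreal⟩ := exists_perturb fc τ x u hx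
            (fun i h0 => hdirlin _ W hWcoe hWne u hu i
              (Finset.mem_filter.mpr ⟨Finset.mem_univ i, h0⟩))
          have h1 : flast (x + t • u) = 0 := hcon _ (hreal t (le_of_lt ht) le_rfl)
          have h2 : flast x = 0 := hcon x hx
          rw [aff_apply_add, h2, _root_.map_smul, smul_eq_mul, zero_add] at h1
          rcases mul_eq_zero.mp h1 with h | h
          · exact absurd h ht.ne'
          · exact h
        apply keyW _ hτ W hWcoe hWne hWdim
        intro y hy
        have hdm : y - x ∈ W.direction := by
          have h1 := AffineSubspace.vsub_mem_direction (hy : y ∈ W) (hxW : x ∈ W)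
          rwa [vsub_eq_sub] at h1
        have hyx : x + (y - x) = y := by abel
        show flast y = 0
        rw [← hyx, aff_apply_add, hcon x hx, hlin0 _ hdm, add_zero]
      have fact2 : ∀ τ : Fin n → SignType,
          (Finset.univ.filter fun i => τ i = 0).card = d - p →
          ∀ z, (∀ i, τ i = SignType.sign (fc i z)) → flast z = 0 →
          (∃ y, (∀ i, τ i = SignType.sign (fc i y)) ∧ 0 < flast y) ∧
          (∃ y, (∀ i, τ i = SignType.sign (fc i y)) ∧ flast y < 0) := by
        intro τ hτ z hz hz0
        obtain ⟨W, hWcoe, hWne, hWdim⟩ := getW τ hτ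
        have hzW : z ∈ (W : Set (Ed d)) := hmemW τ W hWcoe z hz
        have hex : ∃ u ∈ W.direction, flast.linear u ≠ 0 := by
          by_contra hcon
          push_neg at hcon
          apply keyW _ hτ W hWcoe hWne hWdim
          intro y hy
          have hdm : y - z ∈ W.direction := by
            have h1 := AffineSubspace.vsub_mem_direction (hy : y ∈ W) (hzW : z ∈ W)
            rwa [vsub_eq_sub] at h1
          have hyz : z + (y - z) = y := by abel
          show flast y = 0
          rw [← hyz, aff_apply_add, hz0, hcon _ hdm, add_zero]
        obtain ⟨u, huW, hu0⟩ := hex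
        have side : ∀ u', u' ∈ W.direction → 0 < flast.linear u' →
            ∃ y, (∀ i, τ i = SignType.sign (fc i y)) ∧ 0 < flast y := by
          intro u' hu' hpos
          obtain ⟨t, ht, hreal⟩ := exists_perturb fc τ z u' hz
            (fun i h0 => hdirlin _ W hWcoe hWne u' hu' i
              (Finset.mem_filter.mpr ⟨Finset.mem_univ i, h0⟩))
          refine ⟨z + t • u', hreal t (le_of_lt ht) le_rfl, ?_⟩
          rw [aff_apply_add, hz0, _root_.map_smul, smul_eq_mul, zero_add]
          exact mul_pos ht hpos
        have side' : ∀ u', u' ∈ W.direction → flast.linear u' < 0 →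
            ∃ y, (∀ i, τ i = SignType.sign (fc i y)) ∧ flast y < 0 := by
          intro u' hu' hneg
          obtain ⟨t, ht, hreal⟩ := exists_perturb fc τ z u' hz
            (fun i h0 => hdirlin _ W hWcoe hWne u' hu' i
              (Finset.mem_filter.mpr ⟨Finset.mem_univ i, h0⟩))
          refine ⟨z + t • u', hreal t (le_of_lt ht) le_rfl, ?_⟩
          rw [aff_apply_add, hz0, _root_.map_smul, smul_eq_mul, zero_add]
          exact mul_neg_of_pos_of_neg ht hneg
        rcases lt_or_gt_of_ne hu0 with hneg | hpos
        · refine ⟨side (-u) (neg_mem huW) (by rw [map_neg]; linarith), side' u huW hneg⟩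
        · refine ⟨side u huW hpos, side' (-u) (neg_mem huW) (by rw [map_neg]; linarith)⟩
      -- snoc helpers
      have hsnoc_inj : ∀ c : SignType, Function.Injective (fun τ : Fin n → SignType => (Fin.snoc τ c : Fin (n+1) → SignType)) := by
        intro c τ1 τ2 h
        funext i
        have h1 := congrFun h i.castSucc
        simpa [Fin.snoc_castSucc] using h1
      have hzeros_snoc : ∀ (τ : Fin n → SignType) (c : SignType),
          (Finset.univ.filter fun i : Fin (n+1) => (Fin.snoc τ c : Fin (n+1) → SignType) i = 0).card
            = (Finset.univ.filter fun i => τ i = 0).card + (if c = 0 then 1 else 0) := by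
        intro τ c
        rw [zeros_snoc]
        simp only [Fin.snoc_castSucc, Fin.snoc_last]
      have hreal_snoc : ∀ (τ : Fin n → SignType) (c : SignType) (x : Ed d),
          (∀ i, τ i = SignType.sign (fc i x)) → c = SignType.sign (flast x) →
          ∀ i : Fin (n+1), (Fin.snoc τ c : Fin (n+1) → SignType) i = SignType.sign (f i x) := by
        intro τ c x hτ hc i
        induction i using Fin.lastCases with
        | last => simpa [Fin.snoc_last] using hc
        | cast j => simpa [Fin.snoc_castSucc] using hτ j
      -- the sets
      set S : Set (Fin (n+1) → SignType) :=
        {σ | (∃ x : Ed d, ∀ i, σ i = SignType.sign (f i x)) ∧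
          (Finset.univ.filter fun i => σ i = 0).card = d - p} with hSdef
      set T : Set (Fin n → SignType) :=
        {τ | (∃ x : Ed d, ∀ i, τ i = SignType.sign (fc i x)) ∧
          (Finset.univ.filter fun i => τ i = 0).card = d - p} with hTdef
      have hTcard : T.ncard = Fc n d p := IHn fc hs' hn' p hp
      set Tz : Set (Fin n → SignType) :=
        {τ | (∃ x : Ed d, flast x = 0 ∧ ∀ i, τ i = SignType.sign (fc i x)) ∧
          (Finset.univ.filter fun i => τ i = 0).card = d - p} with hTzdef
      set Az : Set (Fin n → SignType) :=
        {τ | (∃ x : Ed d, flast x = 0 ∧ ∀ i, τ i = SignType.sign (fc i x)) ∧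
          (Finset.univ.filter fun i => τ i = 0).card = d - p - 1} with hAzdef
      set P : Set (Fin n → SignType) := {τ | Fin.snoc τ 1 ∈ S} with hPdef
      set M : Set (Fin n → SignType) := {τ | Fin.snoc τ (-1) ∈ S} with hMdef
      set A : Set (Fin (n+1) → SignType) := {σ | σ ∈ S ∧ σ (Fin.last n) = 0} with hAdef
      set Bp : Set (Fin (n+1) → SignType) := {σ | σ ∈ S ∧ σ (Fin.last n) = 1} with hBpdef
      set Bm : Set (Fin (n+1) → SignType) := {σ | σ ∈ S ∧ σ (Fin.last n) = -1} with hBmdef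
      -- realized-on-H sets transported to dimension d-1
      have htrans : ∀ (τ : Fin n → SignType),
          (∃ x : Ed d, flast x = 0 ∧ ∀ i, τ i = SignType.sign (fc i x))
            ↔ (∃ v : Ed (d-1), ∀ i, τ i = SignType.sign (g i v)) := by
        intro τ
        constructor
        · rintro ⟨x, hx0, hx⟩
          have hxH : x ∈ H := by
            rw [← SetLike.mem_coe, hHcoe]
            exact hx0
          obtain ⟨v, rfl⟩ := he_surj x hxH
          exact ⟨v, hx⟩
        · rintro ⟨v, hv⟩
          exact ⟨e v, he_last v, hv⟩
      have hTz_card : Tz.ncard = (if p = 0 then 0 else Fc n (d-1) (p-1)) := by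
        rcases Nat.eq_zero_or_pos p with hp0 | hp1
        · rw [if_pos hp0]
          have : Tz = ∅ := by
            ext τ
            simp only [hTzdef, Set.mem_setOf_eq, Set.mem_empty_iff_false, iff_false, not_and]
            rintro ⟨x, hx0, hx⟩ hτ
            refine hn (insert (Fin.last n) ((Finset.univ.filter fun i => τ i = 0).map Fin.castSuccEmb))
              (by rw [Finset.card_insert_of_notMem (hlast_not_mem _), Finset.card_map, hτ]; omega)
              ⟨x, fun i hi => ?_⟩
            rcases Finset.mem_insert.mp hi with rfl | hi
            · exact hx0
            · obtain ⟨a, ha, rfl⟩ := Finset.mem_map.mp hi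
              exact sign_eq_zero_iff.mp
                (show SignType.sign (fc a x) = 0 by rw [← hx a, (Finset.mem_filter.mp ha).2])
          rw [this, Set.ncard_empty]
        · rw [if_neg (by omega)]
          have hTzeq : Tz = {τ : Fin n → SignType |
              (∃ v : Ed (d-1), ∀ i, τ i = SignType.sign (g i v)) ∧
              (Finset.univ.filter fun i => τ i = 0).card = (d-1) - (p-1)} := by
            ext τ
            simp only [hTzdef, Set.mem_setOf_eq]
            rw [htrans τ]
            have : d - p = (d-1) - (p-1) := by omega
            rw [this]
          rw [hTzeq]
          exact IHd (d-1) (by omega) n g hgs hgn (p-1) (by omega)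
      have hAz_card : p < d → Az.ncard = Fc n (d-1) p := by
        intro hpd
        have hAzeq : Az = {τ : Fin n → SignType |
            (∃ v : Ed (d-1), ∀ i, τ i = SignType.sign (g i v)) ∧
            (Finset.univ.filter fun i => τ i = 0).card = (d-1) - p} := by
          ext τ
          simp only [hAzdef, Set.mem_setOf_eq]
          rw [htrans τ]
          have : d - p - 1 = (d-1) - p := by omega
          rw [this]
        rw [hAzeq]
        exact IHd (d-1) (by omega) n g hgs hgn p (by omega)
      -- A as image of Az
      have hA_card : A.ncard = (if p = d then 0 else Fc n (d-1) p) := by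
        rcases eq_or_ne p d with hpd | hpd
        · rw [if_pos hpd]
          have : A = ∅ := by
            ext σ
            simp only [hAdef, hSdef, Set.mem_setOf_eq, Set.mem_empty_iff_false, iff_false, not_and]
            rintro ⟨hreal, hcards⟩ hlast0
            have hmem : Fin.last n ∈ Finset.univ.filter fun i => σ i = 0 :=
              Finset.mem_filter.mpr ⟨Finset.mem_univ _, hlast0⟩
            have := Finset.card_pos.mpr ⟨_, hmem⟩
            omega
          rw [this, Set.ncard_empty]
        · rw [if_neg hpd]
          have hpd' : p < d := lt_of_le_of_ne hp hpd
          have himg : A = (fun τ : Fin n → SignType => (Fin.snoc τ 0 : Fin (n+1) → SignType)) '' Az := by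
            ext σ
            simp only [hAdef, hAzdef, hSdef, Set.mem_setOf_eq, Set.mem_image]
            constructor
            · rintro ⟨⟨⟨x, hx⟩, hcards⟩, hlast0⟩
              refine ⟨fun i => σ i.castSucc, ⟨⟨x, ?_, fun i => hx i.castSucc⟩, ?_⟩, ?_⟩
              · exact sign_eq_zero_iff.mp (by rw [← hx (Fin.last n), hlast0])
              · have hz := zeros_snoc σ
                rw [if_pos hlast0] at hz
                show (Finset.univ.filter fun i : Fin n => σ i.castSucc = 0).card = d - p - 1
                omega
              · have := Fin.snoc_init_self σ
                rw [← hlast0]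
                exact this
            · rintro ⟨τ, ⟨⟨x, hx0, hx⟩, hcard⟩, rfl⟩
              refine ⟨⟨⟨x, hreal_snoc τ 0 x hx (by rw [hx0]; simp)⟩, ?_⟩, Fin.snoc_last ..⟩
              rw [hzeros_snoc, if_pos rfl, hcard]
              omega
          rw [himg, Set.ncard_image_of_injective Az (hsnoc_inj 0)]
          exact hAz_card hpd'
      -- B± as images of P, M
      have himgP : Bp = (fun τ : Fin n → SignType => (Fin.snoc τ 1 : Fin (n+1) → SignType)) '' P := by
        ext σ
        simp only [hBpdef, hPdef, Set.mem_setOf_eq, Set.mem_image]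
        constructor
        · rintro ⟨hσS, hlast1⟩
          refine ⟨fun i => σ i.castSucc, ?_, ?_⟩
          · have := Fin.snoc_init_self σ
            rw [hlast1] at this
            show Fin.snoc _ 1 ∈ S
            rw [show (Fin.snoc (fun i => σ i.castSucc) 1 : Fin (n+1) → SignType) = σ from this]
            exact hσS
          · have := Fin.snoc_init_self σ
            rw [hlast1] at this
            exact this
        · rintro ⟨τ, hτ, rfl⟩
          exact ⟨hτ, Fin.snoc_last ..⟩
      have himgM : Bm = (fun τ : Fin n → SignType => (Fin.snoc τ (-1) : Fin (n+1) → SignType)) '' M := by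
        ext σ
        simp only [hBmdef, hMdef, Set.mem_setOf_eq, Set.mem_image]
        constructor
        · rintro ⟨hσS, hlast1⟩
          refine ⟨fun i => σ i.castSucc, ?_, ?_⟩
          · have := Fin.snoc_init_self σ
            rw [hlast1] at this
            show Fin.snoc _ (-1) ∈ S
            rw [show (Fin.snoc (fun i => σ i.castSucc) (-1) : Fin (n+1) → SignType) = σ from this]
            exact hσS
          · have := Fin.snoc_init_self σ
            rw [hlast1] at this
            exact this
        · rintro ⟨τ, hτ, rfl⟩
          exact ⟨hτ, Fin.snoc_last ..⟩
      -- P ∪ M = T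
      have hPM_union : P ∪ M = T := by
        ext τ
        simp only [hPdef, hMdef, hTdef, hSdef, Set.mem_union, Set.mem_setOf_eq]
        constructor
        · rintro (⟨⟨x, hx⟩, hcards⟩ | ⟨⟨x, hx⟩, hcards⟩)
          · refine ⟨⟨x, fun i => by simpa [Fin.snoc_castSucc] using hx i.castSucc⟩, ?_⟩
            rw [hzeros_snoc, if_neg (by decide)] at hcards
            omega
          · refine ⟨⟨x, fun i => by simpa [Fin.snoc_castSucc] using hx i.castSucc⟩, ?_⟩
            rw [hzeros_snoc, if_neg (by decide)] at hcards
            omega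
        · rintro ⟨hex, hcard⟩
          obtain ⟨y, hy, hy0⟩ := fact1 τ hex hcard
          rcases lt_or_gt_of_ne hy0 with hneg | hpos
          · right
            refine ⟨⟨y, hreal_snoc τ (-1) y hy (by rw [sign_neg hneg])⟩, ?_⟩
            rw [hzeros_snoc, if_neg (by decide), hcard]
            omega
          · left
            refine ⟨⟨y, hreal_snoc τ 1 y hy (by rw [sign_pos hpos])⟩, ?_⟩
            rw [hzeros_snoc, if_neg (by decide), hcard]
            omega
      -- P ∩ M = Tz
      have hPM_inter : P ∩ M = Tz := by
        ext τ
        simp only [hPdef, hMdef, hTzdef, hSdef, Set.mem_inter_iff, Set.mem_setOf_eq]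
        constructor
        · rintro ⟨⟨⟨xp, hxp⟩, hcards⟩, ⟨⟨xm, hxm⟩, _⟩⟩
          have hcard : (Finset.univ.filter fun i => τ i = 0).card = d - p := by
            rw [hzeros_snoc, if_neg (by decide)] at hcards
            omega
          have hxpC : ∀ i, τ i = SignType.sign (fc i xp) := fun i => by
            simpa [Fin.snoc_castSucc] using hxp i.castSucc
          have hxmC : ∀ i, τ i = SignType.sign (fc i xm) := fun i => by
            simpa [Fin.snoc_castSucc] using hxm i.castSucc
          have hxpPos : 0 < flast xp := by
            apply sign_eq_one_iff.mp
            have := hxp (Fin.last n)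
            rw [Fin.snoc_last] at this
            exact this.symm
          have hxmNeg : flast xm < 0 := by
            apply sign_eq_neg_one_iff.mp
            have := hxm (Fin.last n)
            rw [Fin.snoc_last] at this
            exact this.symm
          obtain ⟨z, hzC, hz0⟩ := exists_zero_on_segment flast (cell_convex fc τ) hxpC hxmC hxpPos hxmNeg
          exact ⟨⟨z, hz0, hzC⟩, hcard⟩
        · rintro ⟨⟨z, hz0, hz⟩, hcard⟩
          obtain ⟨⟨yp, hypC, hypPos⟩, ⟨ym, hymC, hymNeg⟩⟩ := fact2 τ hcard z hz hz0
          constructor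
          · refine ⟨⟨yp, hreal_snoc τ 1 yp hypC (by rw [sign_pos hypPos])⟩, ?_⟩
            rw [hzeros_snoc, if_neg (by decide), hcard]
            omega
          · refine ⟨⟨ym, hreal_snoc τ (-1) ym hymC (by rw [sign_neg hymNeg])⟩, ?_⟩
            rw [hzeros_snoc, if_neg (by decide), hcard]
            omega
      -- final counting
      have hfin : ∀ s : Set (Fin (n+1) → SignType), s.Finite := fun s => Set.toFinite s
      have hfin' : ∀ s : Set (Fin n → SignType), s.Finite := fun s => Set.toFinite s
      have hSsplit : S = A ∪ Bp ∪ Bm := by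
        ext σ
        simp only [hAdef, hBpdef, hBmdef, Set.mem_union, Set.mem_setOf_eq]
        constructor
        · intro hσ
          cases h : σ (Fin.last n) with
          | zero => exact Or.inl (Or.inl ⟨hσ, by decide⟩)
          | pos => exact Or.inl (Or.inr ⟨hσ, by decide⟩)
          | neg => exact Or.inr ⟨hσ, by decide⟩
        · rintro ((⟨h, _⟩ | ⟨h, _⟩) | ⟨h, _⟩) <;> exact h
      have hdisj1 : Disjoint A Bp := by
        rw [Set.disjoint_left]
        rintro σ ⟨_, h0⟩ ⟨_, h1⟩
        rw [h0] at h1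
        exact absurd h1 (by decide)
      have hdisj2 : Disjoint (A ∪ Bp) Bm := by
        rw [Set.disjoint_left]
        rintro σ hσ ⟨_, hm⟩
        rcases hσ with ⟨_, h0⟩ | ⟨_, h1⟩
        · rw [h0] at hm; exact absurd hm (by decide)
        · rw [h1] at hm; exact absurd hm (by decide)
      have hScard : S.ncard = A.ncard + Bp.ncard + Bm.ncard := by
        rw [hSsplit, Set.ncard_union_eq hdisj2 (hfin _) (hfin _),
          Set.ncard_union_eq hdisj1 (hfin _) (hfin _)]
      have hBpcard : Bp.ncard = P.ncard := by
        rw [himgP, Set.ncard_image_of_injective P (hsnoc_inj 1)]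
      have hBmcard : Bm.ncard = M.ncard := by
        rw [himgM, Set.ncard_image_of_injective M (hsnoc_inj (-1))]
      have hPMcard : P.ncard + M.ncard = T.ncard + Tz.ncard := by
        rw [← hPM_union, ← hPM_inter]
        exact (Set.ncard_union_add_ncard_inter P M (hfin' _) (hfin' _)).symm
      show S.ncard = Fc (n+1) d p
      rw [Fc_succ n d p hd1 hp, hScard, hBpcard, hBmcard, hA_card]
      omega


/-- In a simple arrangement of `n` affine hyperplanes in `ℝ^d`, the number of
realized sign vectors with exactly `d - p` zero entries equals
`∑_{i=0}^{p} C(d-i, p-i) * C(n, d-i)`. -/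
theorem count_cells_simple_arrangement (d n : ℕ) (hd : 1 ≤ d)
    (f : Fin n → (EuclideanSpace ℝ (Fin d) →ᵃ[ℝ] ℝ))
    (hsimple : ∀ s : Finset (Fin n), s.card ≤ d →
      ∃ W : AffineSubspace ℝ (EuclideanSpace ℝ (Fin d)),
        (W : Set (EuclideanSpace ℝ (Fin d))) = {x | ∀ i ∈ s, f i x = 0} ∧
        (W : Set (EuclideanSpace ℝ (Fin d))).Nonempty ∧
        Module.finrank ℝ W.direction = d - s.card)
    (hnocommon : ∀ s : Finset (Fin n), s.card = d + 1 →
      ¬ ∃ x : EuclideanSpace ℝ (Fin d), ∀ i ∈ s, f i x = 0)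
    (p : ℕ) (hp : p ≤ d) :
    {σ : Fin n → SignType |
        (∃ x : EuclideanSpace ℝ (Fin d), ∀ i, σ i = SignType.sign (f i x)) ∧
        (Finset.univ.filter fun i => σ i = 0).card = d - p}.ncard
      = ∑ i ∈ Finset.range (p + 1), Nat.choose (d - i) (p - i) * Nat.choose n (d - i) := by
  have h := main_count d n f hsimple hnocommon p hp
  exact h
end
end

section
/- Let d ≥ 1. For a locally finite set A ⊆ ℝ^d with 0 ∈ A and an integer k ≥ 1, let D_k(0, A) = {x ∈ ℝ^d : fewer than k points a ∈ A \ {0} satisfy ‖x − a‖ < ‖x‖}, and let ∂D_k(0, A) denote its topological boundary. Then for every integer k ≥ 1 and every real ε > 0, there exists τ > 0 such that: for every injective map φ: ℤ^d → ℝ^d with φ(0) = 0 and sup_{a∈ℤ^d} ‖a − φ(a)‖ < τ, every unit vector u ∈ ℝ^d, and all reals λ, μ ≥ 0 with λu ∈ ∂D_k(0, ℤ^d) and μu ∈ ∂D_k(0, φ(ℤ^d)), one has |λ − μ| < ε. -/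
open Set Metric MeasureTheory

noncomputable section

/-- `D_k(0, A)`: the set of points `x` such that fewer than `k` points of `A \ {0}` are
strictly closer to `x` than `0`; it is the union of the first `k` Brillouin zones of `0`. -/
def bzUnion (d k : ℕ) (A : Set (EuclideanSpace ℝ (Fin d))) :
    Set (EuclideanSpace ℝ (Fin d)) :=
  {x | {a | a ∈ A \ {0} ∧ dist x a < ‖x‖}.encard < (k : ℕ∞)}

/-!
A frontier point `x` of `D_k(0, A)` has fewer than `k` points of `A \ {0}` in the open ball
`B(x, ‖x‖)` and at least `k` in every closed ball `B[x, r]` with `r > ‖x‖`. Moving the points of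
`A` by less than `τ` preserves this up to an error `τ` in the radius, so both `λu` and `μu` are
approximate frontier points for `ℤ^d`. Along the ray `t ↦ tu` the balls `B[tu, t]` grow, and
they swallow nonzero lattice points with a uniform margin: since `‖a‖ ≥ 1`, a point `a` with
`‖tu - a‖ ≤ t + τ` has `⟪u, a⟫ ≳ 1 / t`, hence `‖t'u - a‖ < t' - τ` as soon as `t' ≥ t + ε` and
`τ ≪ ε / (t + 1)²`. As `λ ≤ d k`, two approximate crossings of the same ray are `ε`-close.
-/

section Counting

open Function

variable {E : Type*} [NormedAddCommGroup E]

def openCount (A : Set E) (x : E) (r : ℝ) : ℕ∞ := {a | a ∈ A \ {0} ∧ dist x a < r}.encard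

def closedCount (A : Set E) (x : E) (r : ℝ) : ℕ∞ := {a | a ∈ A \ {0} ∧ dist x a ≤ r}.encard

-- `D_k(0, A) = {x | openCount A x ‖x‖ < k}`; this says that `x` is on its boundary up to an
-- error `τ` in the radius.
def IsNearBoundary (k : ℕ) (A : Set E) (τ : ℝ) (x : E) : Prop :=
  openCount A x (‖x‖ - τ) < k ∧ (k : ℕ∞) ≤ closedCount A x (‖x‖ + τ)

lemma openCount_mono {A : Set E} {x : E} {r r' : ℝ} (h : r ≤ r') :
    openCount A x r ≤ openCount A x r' :=
  encard_mono fun _ ha => ⟨ha.1, ha.2.trans_le h⟩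

lemma encard_setOf_mem_range_diff_zero {ι : Type*} {p : ι → E} (hp : Injective p) (P : E → Prop) :
    {a | a ∈ range p \ {0} ∧ P a}.encard = {i | p i ≠ 0 ∧ P (p i)}.encard := by
  rw [← hp.injOn.encard_image]
  congr 1
  ext a
  constructor
  · rintro ⟨⟨⟨i, rfl⟩, hi⟩, hP⟩
    exact ⟨i, ⟨hi, hP⟩, rfl⟩
  · rintro ⟨i, ⟨hi, hP⟩, rfl⟩
    exact ⟨⟨mem_range_self i, hi⟩, hP⟩

variable {ι : Type*} {p q : ι → E} {τ : ℝ}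

lemma openCount_range_le (hp : Injective p) (hq : Injective q) (hzero : ∀ i, p i = 0 ↔ q i = 0)
    (hpq : ∀ i, dist (p i) (q i) ≤ τ) (x : E) (r : ℝ) :
    openCount (range p) x r ≤ openCount (range q) x (r + τ) := by
  rw [openCount, openCount, encard_setOf_mem_range_diff_zero hp,
    encard_setOf_mem_range_diff_zero hq]
  exact encard_mono fun i ⟨hi0, hi⟩ =>
    ⟨(hzero i).not.1 hi0, (dist_triangle _ _ _).trans_lt (by linarith [hpq i])⟩

lemma closedCount_range_le (hp : Injective p) (hq : Injective q) (hzero : ∀ i, p i = 0 ↔ q i = 0)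
    (hpq : ∀ i, dist (p i) (q i) ≤ τ) (x : E) (r : ℝ) :
    closedCount (range p) x r ≤ closedCount (range q) x (r + τ) := by
  rw [closedCount, closedCount, encard_setOf_mem_range_diff_zero hp,
    encard_setOf_mem_range_diff_zero hq]
  exact encard_mono fun i ⟨hi0, hi⟩ =>
    ⟨(hzero i).not.1 hi0, (dist_triangle _ _ _).trans (by linarith [hpq i])⟩

lemma IsNearBoundary.of_range {k : ℕ} {x : E} {τ' : ℝ} (hp : Injective p) (hq : Injective q)
    (hzero : ∀ i, p i = 0 ↔ q i = 0) (hpq : ∀ i, dist (p i) (q i) ≤ τ)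
    (hx : IsNearBoundary k (range q) τ' x) : IsNearBoundary k (range p) (τ' + τ) x := by
  refine ⟨?_, hx.2.trans ?_⟩
  · calc openCount (range p) x (‖x‖ - (τ' + τ))
        ≤ openCount (range q) x (‖x‖ - (τ' + τ) + τ) := openCount_range_le hp hq hzero hpq _ _
      _ = openCount (range q) x (‖x‖ - τ') := by ring_nf
      _ < k := hx.1
  · calc closedCount (range q) x (‖x‖ + τ')
        ≤ closedCount (range p) x (‖x‖ + τ' + τ) :=
          closedCount_range_le hq hp (fun i => (hzero i).symm)
            (fun i => dist_comm (q i) (p i) ▸ hpq i) _ _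
      _ = closedCount (range p) x (‖x‖ + (τ' + τ)) := by rw [add_assoc]

end Counting

section Frontier

open Filter Topology

variable {d k : ℕ} {A : Set (EuclideanSpace ℝ (Fin d))} {x : EuclideanSpace ℝ (Fin d)}

lemma isClosed_bzUnion : IsClosed (bzUnion d k A) := by
  refine isOpen_compl_iff.1 (isOpen_iff_mem_nhds.2 fun x hx => ?_)
  obtain ⟨T, hTsub, hTcard⟩ := exists_subset_encard_eq (not_lt.1 hx)
  have hnear : ∀ᶠ y in 𝓝 x, ∀ a ∈ T, dist y a < ‖y‖ :=
    (eventually_all_finite (finite_of_encard_eq_coe hTcard)).2 fun a ha =>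
      (continuous_id.dist continuous_const).continuousAt.eventually_lt
        continuous_norm.continuousAt (hTsub ha).2
  filter_upwards [hnear] with y hy
  have hcount : (k : ℕ∞) ≤ openCount A y ‖y‖ :=
    hTcard ▸ encard_mono fun a ha => ⟨(hTsub ha).1, hy a ha⟩
  exact not_lt.2 hcount

lemma le_closedCount_of_mem_closure_compl (hx : x ∈ closure (bzUnion d k A)ᶜ) {r : ℝ}
    (hr : ‖x‖ < r) : (k : ℕ∞) ≤ closedCount A x r := by
  obtain ⟨y, hy, hxy⟩ := Metric.mem_closure_iff.1 hx ((r - ‖x‖) / 2) (by linarith)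
  have hcount : (k : ℕ∞) ≤ openCount A y ‖y‖ := not_lt.1 hy
  refine hcount.trans (encard_mono fun a ha => ⟨ha.1, ?_⟩)
  have hyx : ‖y‖ ≤ ‖x‖ + dist x y := by
    rw [dist_comm, dist_eq_norm]; linarith [norm_le_norm_add_norm_sub' y x]
  linarith [dist_triangle x y a, ha.2]

lemma isNearBoundary_of_mem_frontier (hx : x ∈ frontier (bzUnion d k A)) {τ : ℝ} (hτ : 0 < τ) :
    IsNearBoundary k A τ x :=
  ⟨(openCount_mono (by linarith)).trans_lt (isClosed_bzUnion.frontier_subset hx),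
    le_closedCount_of_mem_closure_compl (frontier_subset_closure (by rwa [frontier_compl]))
      (by linarith)⟩

end Frontier

section RayGeometry

variable {E : Type*} [NormedAddCommGroup E] [InnerProductSpace ℝ E]

lemma norm_smul_sub_sq {u : E} (hu : ‖u‖ = 1) (t : ℝ) (a : E) :
    ‖t • u - a‖ ^ 2 = t ^ 2 - 2 * t * inner ℝ u a + ‖a‖ ^ 2 := by
  rw [norm_sub_sq_real, norm_smul, hu, real_inner_smul_left, Real.norm_eq_abs, mul_one, sq_abs]
  ring

lemma norm_sub_smul_lt_norm {x v : E} {c : ℝ} (hc : 0 < c)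
    (h : c * ‖v‖ ^ 2 < 2 * inner ℝ x v) : ‖x - c • v‖ < ‖x‖ := by
  refine lt_of_pow_lt_pow_left₀ 2 (norm_nonneg x) ?_
  rw [norm_sub_sq_real, norm_smul, real_inner_smul_right, Real.norm_eq_abs, abs_of_pos hc]
  nlinarith

lemma dist_smul_lt_of_dist_smul_le {u a : E} (hu : ‖u‖ = 1) (ha : 1 ≤ ‖a‖)
    {C t t' τ ε : ℝ} (ht : 0 ≤ t) (htC : t ≤ C) (hτ : 0 ≤ τ)
    (hτε : 16 * (C + 1) ^ 2 * τ < min ε 1) (htt' : t + ε ≤ t') (h : dist (t • u) a ≤ t + τ) :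
    dist (t' • u) a < t' - τ := by
  rw [dist_eq_norm] at h ⊢
  have hτC : 8 * (C + 1) * τ ≤ 1 := by nlinarith [min_le_right ε 1]
  replace hτε : 16 * (C + 1) ^ 2 * τ < ε := hτε.trans_le (min_le_left ε 1)
  have h1 : t ^ 2 - 2 * t * inner ℝ u a + ‖a‖ ^ 2 ≤ (t + τ) ^ 2 := by
    rw [← norm_smul_sub_sq hu]
    exact pow_le_pow_left₀ (norm_nonneg _) h 2
  have ha2 : 1 ≤ ‖a‖ ^ 2 := by nlinarith
  have htτ : 8 * t * τ ≤ 1 - 8 * τ := by nlinarith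
  have hP : 1 ≤ 4 * t * inner ℝ u a := by nlinarith
  have ht0 : 0 < t := lt_of_le_of_ne ht (by rintro rfl; linarith)
  have hτ_le : τ ≤ 16 * (C + 1) ^ 2 * τ := le_mul_of_one_le_left hτ (by nlinarith)
  have hgap : t' - t ≤ (t' - t) * (4 * t * inner ℝ u a) :=
    le_mul_of_one_le_right (by linarith) hP
  have hslope : 4 * t * τ * (t' - t) ≤ (t' - t) / 2 := by nlinarith
  have hsq : 8 * t ^ 2 * τ < ε / 2 := by
    nlinarith [mul_le_mul_of_nonneg_right (pow_le_pow_left₀ ht (by linarith : t ≤ C + 1) 2) hτ]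
  have hkey : τ * (t' + t) < (t' - t) * inner ℝ u a := by
    refine lt_of_mul_lt_mul_left ?_ (by positivity : 0 ≤ 4 * t)
    calc 4 * t * (τ * (t' + t)) = 4 * t * τ * (t' - t) + 8 * t ^ 2 * τ := by ring
      _ < t' - t := by linarith
      _ ≤ (t' - t) * (4 * t * inner ℝ u a) := hgap
      _ = 4 * t * ((t' - t) * inner ℝ u a) := by ring
  refine lt_of_pow_lt_pow_left₀ 2 (by linarith) ?_
  rw [norm_smul_sub_sq hu]
  nlinarith

end RayGeometry

section Lattice

open Function

variable {d : ℕ}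

lemma toEuc_injective : Injective (toEuc d) := fun a b h => funext fun i => by
  simpa [toEuc] using congrArg (· i) h

lemma intLattice_eq_range : intLattice d = range (toEuc d) := by
  ext x
  refine ⟨fun hx => ⟨fun i => (hx i).choose, ?_⟩, ?_⟩
  · ext i
    exact ((hx i).choose_spec).symm
  · rintro ⟨a, rfl⟩ i
    exact ⟨a i, rfl⟩

lemma natCast_smul_mem_intLattice (n : ℕ) {a : EuclideanSpace ℝ (Fin d)}
    (ha : a ∈ intLattice d) : (n : ℝ) • a ∈ intLattice d := fun i => by
  obtain ⟨m, hm⟩ := ha i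
  exact ⟨n * m, by simp [hm]⟩

lemma one_le_norm_of_mem_intLattice {a : EuclideanSpace ℝ (Fin d)} (ha : a ∈ intLattice d)
    (ha0 : a ≠ 0) : 1 ≤ ‖a‖ := by
  obtain ⟨i, hi⟩ : ∃ i, a i ≠ 0 := by
    by_contra! h
    exact ha0 (by ext i; simp [h i])
  obtain ⟨n, hn⟩ := ha i
  rw [hn, Int.cast_ne_zero] at hi
  calc (1 : ℝ) ≤ |(n : ℝ)| := by exact_mod_cast Int.one_le_abs hi
    _ = ‖a i‖ := by rw [hn, Real.norm_eq_abs]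
    _ ≤ ‖a‖ := PiLp.norm_apply_le a i

lemma exists_lt_abs_apply {c : ℝ} (hc : 0 ≤ c) {x : EuclideanSpace ℝ (Fin d)}
    (hx : d * c < ‖x‖) : ∃ i, c < |x i| := by
  by_contra! h
  have hsq : ‖x‖ ^ 2 ≤ (d * c) ^ 2 := by
    calc ‖x‖ ^ 2 = ∑ i, x i ^ 2 := EuclideanSpace.real_norm_sq_eq x
      _ ≤ ∑ _i : Fin d, c ^ 2 := Finset.sum_le_sum fun i _ => by
          rw [← sq_abs]; exact pow_le_pow_left₀ (abs_nonneg _) (h i) 2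
      _ = d * c ^ 2 := by simp
      _ ≤ (d * c) ^ 2 := by
          have : (d : ℝ) ≤ d ^ 2 := by exact_mod_cast Nat.le_self_pow two_ne_zero d
          nlinarith [sq_nonneg c]
  exact ((pow_le_pow_iff_left₀ (norm_nonneg x) (by positivity) two_ne_zero).1 hsq).not_gt hx

lemma le_openCount_intLattice {k : ℕ} {x : EuclideanSpace ℝ (Fin d)} (hx : d * k < ‖x‖) :
    (k : ℕ∞) ≤ openCount (intLattice d) x ‖x‖ := by
  obtain ⟨i, hi⟩ := exists_lt_abs_apply (Nat.cast_nonneg k) hx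
  set σ : ℤ := if 0 ≤ x i then 1 else -1
  set v := EuclideanSpace.single i (σ : ℝ)
  have hv : v ∈ intLattice d := fun j =>
    ⟨if j = i then σ else 0, by simp only [v, PiLp.single_apply]; split_ifs <;> simp⟩
  have hv_norm : ‖v‖ = 1 := by simp only [v, σ, PiLp.norm_single]; split_ifs <;> simp
  have hxv : inner ℝ x v = |x i| := by
    simp only [v, σ, EuclideanSpace.inner_single_right, conj_trivial]
    split_ifs with h
    · simp [abs_of_nonneg h]
    · simp [abs_of_neg (not_le.1 h)]
  have hv0 : v ≠ 0 := norm_ne_zero_iff.1 (by simp [hv_norm])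
  have hinj : InjOn (fun j : ℕ => (j : ℝ) • v) (Finset.Icc 1 k : Set ℕ) := fun j _ j' _ h =>
    Nat.cast_injective (smul_left_injective ℝ hv0 h)
  calc (k : ℕ∞) = (Finset.Icc 1 k : Set ℕ).encard := by
        rw [encard_coe_eq_coe_finsetCard, Nat.card_Icc, Nat.add_sub_cancel]
    _ = ((fun j : ℕ => (j : ℝ) • v) '' (Finset.Icc 1 k : Set ℕ)).encard := hinj.encard_image.symm
    _ ≤ openCount (intLattice d) x ‖x‖ := by
      refine encard_mono ?_
      rintro _ ⟨j, hj, rfl⟩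
      simp only [Finset.coe_Icc, Set.mem_Icc] at hj
      have hj0 : (0 : ℝ) < j := by exact_mod_cast hj.1
      have hjk : (j : ℝ) ≤ k := by exact_mod_cast hj.2
      refine ⟨⟨natCast_smul_mem_intLattice j hv, smul_ne_zero hj0.ne' hv0⟩, ?_⟩
      rw [dist_eq_norm]
      exact norm_sub_smul_lt_norm hj0 (by rw [hv_norm, hxv]; linarith)

lemma norm_le_of_mem_bzUnion_intLattice {k : ℕ} {x : EuclideanSpace ℝ (Fin d)}
    (hx : x ∈ bzUnion d k (intLattice d)) : ‖x‖ ≤ d * k := by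
  by_contra! h
  exact (le_openCount_intLattice h).not_gt hx

end Lattice

section Crossings

variable {E : Type*} [NormedAddCommGroup E] [InnerProductSpace ℝ E] {A : Set E} {u : E}
  {C τ ε : ℝ}

lemma closedCount_le_openCount_of_add_le (hA : ∀ a ∈ A \ {0}, 1 ≤ ‖a‖) (hu : ‖u‖ = 1)
    {t t' : ℝ} (ht : 0 ≤ t) (htC : t ≤ C) (hτ : 0 ≤ τ) (hτε : 16 * (C + 1) ^ 2 * τ < min ε 1)
    (htt' : t + ε ≤ t') :
    closedCount A (t • u) (t + τ) ≤ openCount A (t' • u) (t' - τ) :=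
  encard_mono fun a ha =>
    ⟨ha.1, dist_smul_lt_of_dist_smul_le hu (hA a ha.1) ht htC hτ hτε htt' ha.2⟩

lemma abs_sub_lt_of_isNearBoundary (hA : ∀ a ∈ A \ {0}, 1 ≤ ‖a‖) (hu : ‖u‖ = 1) {k : ℕ}
    {lam mu : ℝ} (hlam : 0 ≤ lam) (hmu : 0 ≤ mu) (hlamC : lam ≤ C) (hτ : 0 ≤ τ)
    (hτε : 16 * (C + 1) ^ 2 * τ < min ε 1) (hlam_near : IsNearBoundary k A τ (lam • u))
    (hmu_near : IsNearBoundary k A τ (mu • u)) :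
    |lam - mu| < ε := by
  have hnorm : ∀ t, 0 ≤ t → ‖t • u‖ = t := fun t ht => by
    rw [norm_smul, hu, mul_one, Real.norm_eq_abs, abs_of_nonneg ht]
  rw [IsNearBoundary, hnorm lam hlam] at hlam_near
  rw [IsNearBoundary, hnorm mu hmu] at hmu_near
  have hε : 0 ≤ ε :=
    (by positivity : 0 ≤ 16 * (C + 1) ^ 2 * τ).trans (hτε.le.trans (min_le_left ε 1))
  by_contra! h
  rcases le_abs'.1 h with h | h
  · exact (hlam_near.2.trans (closedCount_le_openCount_of_add_le hA hu hlam hlamC hτ hτε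
      (by linarith))).not_gt hmu_near.1
  · exact (hmu_near.2.trans (closedCount_le_openCount_of_add_le hA hu hmu (by linarith) hτ hτε
      (by linarith))).not_gt hlam_near.1

end Crossings

theorem stability_of_brillouin_zones_general (d : ℕ) (k : ℕ)
    (ε : ℝ) (hε : 0 < ε) :
    ∃ τ > (0 : ℝ), ∀ φ : (Fin d → ℤ) → EuclideanSpace ℝ (Fin d),
      Function.Injective φ → φ 0 = 0 → (∀ a, ‖toEuc d a - φ a‖ < τ) →
      ∀ u : EuclideanSpace ℝ (Fin d), ‖u‖ = 1 →
      ∀ lam mu : ℝ, 0 ≤ lam → 0 ≤ mu →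
        lam • u ∈ frontier (bzUnion d k (intLattice d)) →
        mu • u ∈ frontier (bzUnion d k (Set.range φ)) →
        |lam - mu| < ε := by
  set C : ℝ := d * k
  set τ : ℝ := min ε 1 / (64 * (C + 1) ^ 2) with hτ_def
  have hC : 0 < C + 1 := by positivity
  have hτ : 0 < τ := by positivity
  have hτε : 16 * (C + 1) ^ 2 * (τ + τ) < min ε 1 := by
    have : 16 * (C + 1) ^ 2 * (τ + τ) = min ε 1 / 2 := by
      rw [hτ_def]; field_simp; ring
    rw [this]
    exact half_lt_self (lt_min hε one_pos)
  refine ⟨τ, hτ, fun φ hφ hφ0 hφτ u hu lam mu hlam hmu hlam_fr hmu_fr => ?_⟩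
  have hlamC : lam ≤ C := by
    simpa [norm_smul, hu, abs_of_nonneg hlam] using
      norm_le_of_mem_bzUnion_intLattice (isClosed_bzUnion.frontier_subset hlam_fr)
  have hzero : ∀ a, toEuc d a = 0 ↔ φ a = 0 := fun a =>
    (toEuc_injective.eq_iff' (by ext; simp [toEuc])).trans (hφ.eq_iff' hφ0).symm
  have hmu_near : IsNearBoundary k (intLattice d) (τ + τ) (mu • u) := by
    rw [intLattice_eq_range]
    exact (isNearBoundary_of_mem_frontier hmu_fr hτ).of_range toEuc_injective hφ hzero
      fun a => (hφτ a).le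
  exact abs_sub_lt_of_isNearBoundary (fun a ha => one_le_norm_of_mem_intLattice ha.1 ha.2) hu
    hlam hmu hlamC (by positivity) hτε (isNearBoundary_of_mem_frontier hlam_fr (by positivity))
    hmu_near

/-- Stability of Brillouin zones: for every `k ≥ 1` and `ε > 0` there is
`τ > 0` such that for every perturbation of `ℤ^d` of magnitude less than `τ` fixing `0`,
and every direction `u`, the crossing parameters of the ray `λ ↦ λu` with the boundaries
of `D_k` before and after the perturbation differ by less than `ε`. -/
theorem stability_of_brillouin_zones (d : ℕ) (hd : 1 ≤ d) (k : ℕ) (hk : 1 ≤ k)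
    (ε : ℝ) (hε : 0 < ε) :
    ∃ τ > (0 : ℝ), ∀ φ : (Fin d → ℤ) → EuclideanSpace ℝ (Fin d),
      Function.Injective φ → φ 0 = 0 → (∀ a, ‖toEuc d a - φ a‖ < τ) →
      ∀ u : EuclideanSpace ℝ (Fin d), ‖u‖ = 1 →
      ∀ lam mu : ℝ, 0 ≤ lam → 0 ≤ mu →
        lam • u ∈ frontier (bzUnion d k (intLattice d)) →
        mu • u ∈ frontier (bzUnion d k (Set.range φ)) →
        |lam - mu| < ε :=
  stability_of_brillouin_zones_general d k ε hε
end
end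

section
/- For every ε > 0 there exists a constant C > 0 such that for every center c ∈ ℝ² and every radius R ≥ 1, the number of points of ℤ² lying on the circle {x ∈ ℝ² : ‖x − c‖ = R} is at most C·R^ε. -/
open Set Metric MeasureTheory ENNReal

noncomputable section

set_option maxHeartbeats 1600000
set_option synthInstance.maxHeartbeats 400000

/-- The set of Gaussian integers of norm `n`. -/
def rSet (n : ℕ) : Set GaussianInt := {w | Zsqrtd.norm w = (n : ℤ)}

lemma gi_prime_of_norm_prime (π : GaussianInt) {p : ℕ} (hp : p.Prime)
    (h : π.norm = (p : ℤ)) : Prime π := by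
  rw [← irreducible_iff_prime]
  constructor
  · rw [← Zsqrtd.norm_eq_one_iff, h]
    simpa using hp.ne_one
  · intro a b hab
    have hmul : a.norm.natAbs * b.norm.natAbs = p := by
      rw [← Int.natAbs_mul, ← Zsqrtd.norm_mul, ← hab, h, Int.natAbs_natCast]
    rcases hp.isUnit_or_isUnit hmul.symm with h1 | h1
    · exact Or.inl (Zsqrtd.norm_eq_one_iff.mp (Nat.isUnit_iff.mp h1))
    · exact Or.inr (Zsqrtd.norm_eq_one_iff.mp (Nat.isUnit_iff.mp h1))

lemma gi_rset_one : (rSet 1).encard ≤ 4 := by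
  have hsub : rSet 1 ⊆ {⟨1,0⟩, ⟨-1,0⟩, ⟨0,1⟩, ⟨0,-1⟩} := by
    rintro ⟨a, b⟩ hw
    have hn : a * a + b * b = 1 := by
      have : Zsqrtd.norm ⟨a, b⟩ = 1 := hw
      simpa [Zsqrtd.norm] using this
    have ha1 : -1 ≤ a := by nlinarith
    have ha2 : a ≤ 1 := by nlinarith
    have hcase : a = -1 ∨ a = 0 ∨ a = 1 := by omega
    simp only [Set.mem_insert_iff, Set.mem_singleton_iff, Zsqrtd.ext_iff]
    rcases hcase with rfl | rfl | rfl
    · have hb : b = 0 := by nlinarith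
      simp [hb]
    · have hb : b = 1 ∨ b = -1 := by
        have : b * b = 1 := by omega
        exact mul_self_eq_one_iff.mp this
      rcases hb with rfl | rfl <;> simp
    · have hb : b = 0 := by nlinarith
      simp [hb]
  refine le_trans (Set.encard_le_encard hsub) ?_
  calc ({⟨1,0⟩, ⟨-1,0⟩, ⟨0,1⟩, ⟨0,-1⟩} : Set GaussianInt).encard
      ≤ ({⟨-1,0⟩, ⟨0,1⟩, ⟨0,-1⟩} : Set GaussianInt).encard + 1 := Set.encard_insert_le _ _
    _ ≤ (({⟨0,1⟩, ⟨0,-1⟩} : Set GaussianInt).encard + 1) + 1 :=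
        add_le_add_left (Set.encard_insert_le _ _) 1
    _ ≤ ((({⟨0,-1⟩} : Set GaussianInt).encard + 1) + 1) + 1 :=
        add_le_add_left (add_le_add_left (Set.encard_insert_le _ _) 1) 1
    _ = 4 := by rw [Set.encard_singleton]; rfl

lemma gi_decomp_split {p M : ℕ} (hp : p.Prime) (π : GaussianInt) (hπp : π.norm = (p : ℤ)) :
    ∀ (a : ℕ) (w : GaussianInt), w.norm = (p : ℤ) ^ a * M →
      ∃ k ≤ a, ∃ w₁ : GaussianInt, w₁.norm = (M : ℤ) ∧ w = π ^ k * (star π) ^ (a - k) * w₁ := by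
  have hπ : Prime π := gi_prime_of_norm_prime π hp hπp
  have hp0 : (p : ℤ) ≠ 0 := by exact_mod_cast hp.ne_zero
  intro a
  induction a with
  | zero => intro w hw; exact ⟨0, le_rfl, w, by simpa using hw, by simp⟩
  | succ a ih =>
    intro w hw
    have hππ : π * star π = (p : GaussianInt) := by
      have h1 := Zsqrtd.norm_eq_mul_conj π
      rw [hπp] at h1
      exact_mod_cast h1.symm
    have hdvd : π ∣ w * star w := by
      have h1 : (w.norm : GaussianInt) = w * star w := Zsqrtd.norm_eq_mul_conj w
      have h2 : (p : GaussianInt) ∣ (w.norm : GaussianInt) := by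
        rw [hw]
        push_cast
        exact ⟨(p : GaussianInt) ^ a * (M : GaussianInt), by ring⟩
      rw [← h1]
      exact dvd_trans ⟨star π, hππ.symm⟩ h2
    rcases hπ.2.2 w (star w) hdvd with h | h
    · obtain ⟨w', rfl⟩ := h
      have hw' : w'.norm = (p : ℤ) ^ a * M := by
        have h1 : π.norm * w'.norm = (p : ℤ) * ((p : ℤ) ^ a * M) := by
          rw [← Zsqrtd.norm_mul, hw]; ring
        rw [hπp] at h1
        exact mul_left_cancel₀ hp0 h1
      obtain ⟨k, hk, w₁, h1, h2⟩ := ih w' hw'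
      refine ⟨k + 1, by omega, w₁, h1, ?_⟩
      rw [h2]
      have : a + 1 - (k + 1) = a - k := by omega
      rw [this]; ring
    · have h' : star π ∣ w := by
        obtain ⟨v, hv⟩ := h
        exact ⟨star v, by rw [← star_star w, hv, star_mul']⟩
      obtain ⟨w', rfl⟩ := h'
      have hw' : w'.norm = (p : ℤ) ^ a * M := by
        have h1 : (star π).norm * w'.norm = (p : ℤ) * ((p : ℤ) ^ a * M) := by
          rw [← Zsqrtd.norm_mul, hw]; ring
        rw [Zsqrtd.norm_conj, hπp] at h1
        exact mul_left_cancel₀ hp0 h1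
      obtain ⟨k, hk, w₁, h1, h2⟩ := ih w' hw'
      refine ⟨k, by omega, w₁, h1, ?_⟩
      rw [h2]
      have : a + 1 - k = (a - k) + 1 := by omega
      rw [this]; ring

lemma gi_decomp_inert {p M : ℕ} (hp : Prime (p : GaussianInt)) (hpn : p.Prime)
    (hM : ¬ (p : ℤ) ∣ (M : ℤ)) :
    ∀ (a : ℕ) (w : GaussianInt), w.norm = (p : ℤ) ^ a * M →
      ∃ k, a = 2 * k ∧ ∃ w₁ : GaussianInt, w₁.norm = (M : ℤ) ∧ w = (p : GaussianInt) ^ k * w₁ := by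
  have hp0 : (p : ℤ) ≠ 0 := by exact_mod_cast hpn.ne_zero
  have hnormp : Zsqrtd.norm (p : GaussianInt) = (p : ℤ) ^ 2 := by
    simp [Zsqrtd.norm]; ring
  intro a
  induction a using Nat.strong_induction_on with
  | _ a ih =>
    intro w hw
    rcases Nat.eq_zero_or_pos a with rfl | ha
    · exact ⟨0, rfl, w, by simpa using hw, by simp⟩
    · have hdvd : (p : GaussianInt) ∣ w * star w := by
        have h1 : (w.norm : GaussianInt) = w * star w := Zsqrtd.norm_eq_mul_conj w
        have h2 : (p : GaussianInt) ∣ (w.norm : GaussianInt) := by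
          rw [hw]
          push_cast
          exact ⟨(p : GaussianInt) ^ (a - 1) * (M : GaussianInt), by
            rw [← mul_assoc, ← pow_succ']
            congr 2
            omega⟩
        rw [← h1]; exact h2
      have hpw : (p : GaussianInt) ∣ w := by
        rcases hp.2.2 w (star w) hdvd with h | h
        · exact h
        · obtain ⟨v, hv⟩ := h
          exact ⟨star v, by rw [← star_star w, hv, star_mul', star_natCast]⟩
      obtain ⟨w', rfl⟩ := hpw
      have hw' : (p : ℤ) ^ 2 * w'.norm = (p : ℤ) ^ a * M := by
        rw [← hnormp, ← Zsqrtd.norm_mul, hw]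
      have ha2 : 2 ≤ a := by
        by_contra hlt
        have ha1 : a = 1 := by omega
        rw [ha1, pow_one] at hw'
        have : (p : ℤ) ∣ (M : ℤ) := ⟨w'.norm, by
          have := mul_left_cancel₀ hp0 (by linarith [hw'] : (p:ℤ) * ((p:ℤ) * w'.norm) = (p:ℤ) * M)
          linarith [this]⟩
        exact hM this
      have hw'2 : w'.norm = (p : ℤ) ^ (a - 2) * M := by
        have : (p : ℤ) ^ 2 * w'.norm = (p : ℤ) ^ 2 * ((p : ℤ) ^ (a - 2) * M) := by
          rw [hw']
          rw [← mul_assoc, ← pow_add]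
          congr 2
          omega
        exact mul_left_cancel₀ (pow_ne_zero _ hp0) this
      obtain ⟨j, hj, w₁, h1, h2⟩ := ih (a - 2) (by omega) w' hw'2
      exact ⟨j + 1, by omega, w₁, h1, by rw [h2]; ring⟩

lemma encard_biUnion_le' {β : Type*} (f : ℕ → Set β) (b : ℕ∞) (h : ∀ k, (f k).encard ≤ b) :
    ∀ a : ℕ, (⋃ k ∈ Finset.range (a + 1), f k).encard ≤ ((a : ℕ∞) + 1) * b := by
  intro a
  induction a with
  | zero => simpa using h 0
  | succ a ih =>
    have heq : (⋃ k ∈ Finset.range (a + 2), f k)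
        = f (a + 1) ∪ ⋃ k ∈ Finset.range (a + 1), f k := by
      rw [Finset.range_add_one, Finset.set_biUnion_insert]
    rw [heq]
    calc (f (a + 1) ∪ ⋃ k ∈ Finset.range (a + 1), f k).encard
        ≤ (f (a + 1)).encard + (⋃ k ∈ Finset.range (a + 1), f k).encard :=
          Set.encard_union_le _ _
      _ ≤ b + ((a : ℕ∞) + 1) * b := add_le_add (h _) ih
      _ = ((a : ℕ∞) + 1 + 1) * b := by ring
      _ = (((a : ℕ) + 1 : ℕ∞) + 1) * b := by norm_cast

lemma gi_step_split {p M : ℕ} (hp : p.Prime) (π : GaussianInt) (hπp : π.norm = (p : ℤ))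
    (a : ℕ) : (rSet (p ^ a * M)).encard ≤ ((a : ℕ∞) + 1) * (rSet M).encard := by
  classical
  have hdecomp := gi_decomp_split (M := M) hp π hπp
  have hsub : rSet (p ^ a * M) ⊆
      ⋃ k ∈ Finset.range (a + 1), (fun w₁ => π ^ k * (star π) ^ (a - k) * w₁) '' rSet M := by
    intro w hw
    have hw' : w.norm = (p : ℤ) ^ a * M := by
      have : w.norm = ((p ^ a * M : ℕ) : ℤ) := hw
      rw [this]; push_cast; ring
    obtain ⟨k, hk, w₁, h1, h2⟩ := hdecomp a w hw'
    exact Set.mem_biUnion (Finset.mem_range.mpr (by omega)) ⟨w₁, h1, h2.symm⟩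
  exact le_trans (Set.encard_le_encard hsub)
    (encard_biUnion_le' _ _ (fun k => Set.encard_image_le _ _) a)

lemma gi_step_inert {p M : ℕ} (hp : Prime (p : GaussianInt)) (hpn : p.Prime)
    (hM : ¬ (p : ℤ) ∣ (M : ℤ)) (a : ℕ) :
    (rSet (p ^ a * M)).encard ≤ ((a : ℕ∞) + 1) * (rSet M).encard := by
  have hdecomp := gi_decomp_inert hp hpn hM
  have hsub : rSet (p ^ a * M) ⊆ (fun w₁ => (p : GaussianInt) ^ (a / 2) * w₁) '' rSet M := by
    intro w hw
    have hw' : w.norm = (p : ℤ) ^ a * M := by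
      have : w.norm = ((p ^ a * M : ℕ) : ℤ) := hw
      rw [this]; push_cast; ring
    obtain ⟨k, hk, w₁, h1, h2⟩ := hdecomp a w hw'
    have : a / 2 = k := by omega
    rw [this]
    exact ⟨w₁, h1, h2.symm⟩
  refine le_trans (le_trans (Set.encard_le_encard hsub) (Set.encard_image_le _ _)) ?_
  exact le_mul_of_one_le_left (zero_le) (by exact le_add_self)

theorem gi_count_le_divisors : ∀ N : ℕ, 1 ≤ N →
    (rSet N).encard ≤ ((4 * N.divisors.card : ℕ) : ℕ∞) := by
  intro N
  induction N using Nat.strong_induction_on with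
  | _ N ih =>
    intro hN
    rcases eq_or_lt_of_le hN with h1 | h1
    · rw [← h1]
      simpa using gi_rset_one
    · have hN0 : N ≠ 0 := by omega
      set p := N.minFac with hpdef
      have hp : p.Prime := Nat.minFac_prime (by omega)
      haveI : Fact p.Prime := ⟨hp⟩
      set a := N.factorization p with hadef
      set M := N / p ^ a with hMdef
      have hNeq : p ^ a * M = N := Nat.ordProj_mul_ordCompl_eq_self N p
      have hpM : ¬ p ∣ M := Nat.not_dvd_ordCompl hp hN0
      have hM0 : M ≠ 0 := by
        intro h; rw [h, mul_zero] at hNeq; exact hN0 hNeq.symm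
      have hpa : 1 ≤ a := hp.factorization_pos_of_dvd hN0 (Nat.minFac_dvd N)
      have hMlt : M < N := by
        have h2 : 1 < p ^ a := Nat.one_lt_pow (by omega) hp.one_lt
        rw [← hNeq]
        have := mul_lt_mul_of_pos_right h2 (Nat.pos_of_ne_zero hM0)
        simpa using this
      have hcop : Nat.Coprime (p ^ a) M := Nat.Coprime.pow_left a
        ((Nat.Prime.coprime_iff_not_dvd hp).mpr hpM)
      have hdN : N.divisors.card = (a + 1) * M.divisors.card := by
        rw [← hNeq, hcop.card_divisors_mul]
        congr 1
        rw [Nat.divisors_prime_pow hp, Finset.card_map, Finset.card_range]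
      have hstep : (rSet N).encard ≤ ((a : ℕ∞) + 1) * (rSet M).encard := by
        rw [← hNeq]
        by_cases h3 : p % 4 = 3
        · exact gi_step_inert ((GaussianInt.prime_iff_mod_four_eq_three_of_nat_prime p).mpr h3)
            hp (by simpa [Int.natCast_dvd_natCast] using hpM) a
        · obtain ⟨x, y, hxy⟩ := Nat.Prime.sq_add_sq h3
          refine gi_step_split hp ⟨(x : ℤ), (y : ℤ)⟩ ?_ a
          show (x : ℤ) * x - (-1) * y * y = (p : ℤ)
          push_cast [← hxy]
          ring
      calc (rSet N).encard ≤ ((a : ℕ∞) + 1) * (rSet M).encard := hstep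
        _ ≤ ((a : ℕ∞) + 1) * ((4 * M.divisors.card : ℕ) : ℕ∞) :=
            mul_le_mul_right (ih M hMlt (Nat.pos_of_ne_zero hM0)) _
        _ = (((a + 1) * (4 * M.divisors.card) : ℕ) : ℕ∞) := by push_cast; ring
        _ = ((4 * N.divisors.card : ℕ) : ℕ∞) := by rw [hdN]; congr 1; ring

theorem divisor_bound (δ : ℝ) (hδ : 0 < δ) :
    ∃ C > (0 : ℝ), ∀ N : ℕ, 1 ≤ N → (N.divisors.card : ℝ) ≤ C * (N : ℝ) ^ δ := by
  obtain ⟨ε, hε, hεδ⟩ : ∃ ε : ℝ, 0 < ε ∧ ε + ε = δ := ⟨δ / 2, by positivity, by ring⟩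
  obtain ⟨B, hB1, hB2⟩ : ∃ B : ℕ, 1 ≤ B ∧ (2 : ℝ) ^ (1 / ε) ≤ (B : ℝ) :=
    ⟨max 1 ⌈(2 : ℝ) ^ (1 / ε)⌉₊, le_max_left _ _,
      le_trans (Nat.le_ceil _) (Nat.cast_le.mpr (le_max_right _ _))⟩
  obtain ⟨t, ht, htB⟩ : ∃ t : ℝ, 0 < t ∧ t * B = ε := by
    refine ⟨ε / B, by positivity, ?_⟩
    field_simp
  have hlog2 : 0 < Real.log 2 := Real.log_pos (by norm_num)
  obtain ⟨c1, hc1, hc1def⟩ : ∃ c1 : ℝ, 1 ≤ c1 ∧ c1 = 1 + 1 / (t * Real.log 2) :=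
    ⟨1 + 1 / (t * Real.log 2), le_add_of_nonneg_right (by positivity), rfl⟩
  refine ⟨c1 ^ B, by positivity, ?_⟩
  intro N hN
  have hN0 : N ≠ 0 := by omega
  have hNR : (1 : ℝ) ≤ (N : ℝ) := by exact_mod_cast hN
  have hNpos : (0 : ℝ) < N := by linarith
  have hNt1 : (1 : ℝ) ≤ (N : ℝ) ^ t := Real.one_le_rpow hNR (le_of_lt ht)
  classical
  have hsplit : (∏ p ∈ N.primeFactors, ((N.factorization p + 1 : ℕ) : ℝ))
      = (∏ p ∈ N.primeFactors.filter (fun p => p < B), ((N.factorization p + 1 : ℕ) : ℝ))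
        * (∏ p ∈ N.primeFactors.filter (fun p => ¬ p < B), ((N.factorization p + 1 : ℕ) : ℝ)) :=
    (Finset.prod_filter_mul_prod_filter_not _ _ _).symm
  have hbound2 : (∏ p ∈ N.primeFactors.filter (fun p => ¬ p < B), ((N.factorization p + 1 : ℕ) : ℝ))
      ≤ (N : ℝ) ^ ε := by
    have hterm : ∀ p ∈ N.primeFactors.filter (fun p => ¬ p < B),
        ((N.factorization p + 1 : ℕ) : ℝ) ≤ ((p ^ N.factorization p : ℕ) : ℝ) ^ ε := by
      intro p hp
      rw [Finset.mem_filter] at hp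
      obtain ⟨hpF, hpB⟩ := hp
      have hpprime : p.Prime := Nat.prime_of_mem_primeFactors hpF
      have hp2 : (2 : ℝ) ≤ (p : ℝ) ^ ε := by
        have h1 : ((2 : ℝ) ^ (1 / ε)) ≤ (p : ℝ) :=
          le_trans hB2 (Nat.cast_le.mpr (by omega))
        have h2 : ((2 : ℝ) ^ (1 / ε)) ^ ε = 2 := by
          rw [← Real.rpow_mul (by norm_num : (0:ℝ) ≤ 2), one_div_mul_cancel (ne_of_gt hε),
            Real.rpow_one]
        calc (2 : ℝ) = ((2 : ℝ) ^ (1 / ε)) ^ ε := h2.symm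
          _ ≤ (p : ℝ) ^ ε := Real.rpow_le_rpow (by positivity) h1 (le_of_lt hε)
      have h21 : ((N.factorization p + 1 : ℕ) : ℝ) ≤ (2 : ℝ) ^ (N.factorization p) := by
        exact_mod_cast (by have := Nat.lt_two_pow_self (n := N.factorization p); omega :
          N.factorization p + 1 ≤ 2 ^ N.factorization p)
      calc ((N.factorization p + 1 : ℕ) : ℝ) ≤ (2 : ℝ) ^ (N.factorization p) := h21
        _ ≤ ((p : ℝ) ^ ε) ^ (N.factorization p) := pow_le_pow_left₀ (by norm_num) hp2 _
        _ = ((p : ℝ) ^ (N.factorization p)) ^ ε := by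
            rw [← Real.rpow_natCast ((p : ℝ) ^ ε) _, ← Real.rpow_mul (by positivity),
              mul_comm, Real.rpow_mul (by positivity), Real.rpow_natCast]
        _ = ((p ^ N.factorization p : ℕ) : ℝ) ^ ε := by norm_cast
    calc (∏ p ∈ N.primeFactors.filter (fun p => ¬ p < B), ((N.factorization p + 1 : ℕ) : ℝ))
        ≤ ∏ p ∈ N.primeFactors.filter (fun p => ¬ p < B), ((p ^ N.factorization p : ℕ) : ℝ) ^ ε :=
          Finset.prod_le_prod (fun i _ => by positivity) hterm
      _ = ((∏ p ∈ N.primeFactors.filter (fun p => ¬ p < B), ((p ^ N.factorization p : ℕ) : ℝ))) ^ ε :=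
          Real.finset_prod_rpow _ _ (fun i _ => by positivity) _
      _ ≤ (N : ℝ) ^ ε := by
          refine Real.rpow_le_rpow (Finset.prod_nonneg (fun i _ => by positivity)) ?_ (le_of_lt hε)
          have hprodN : ∏ p ∈ N.primeFactors, p ^ N.factorization p = N := by
            have h := Nat.factorization_prod_pow_eq_self hN0
            rwa [Finsupp.prod, Nat.support_factorization] at h
          have hdvd : (∏ p ∈ N.primeFactors.filter (fun p => ¬ p < B), p ^ N.factorization p) ∣ N := by
            refine dvd_trans ?_ (dvd_of_eq hprodN)
            exact Finset.prod_dvd_prod_of_subset (N.primeFactors.filter (fun p => ¬ p < B)) N.primeFactors (fun p => p ^ N.factorization p) (Finset.filter_subset _ _)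
          have hle := Nat.le_of_dvd (by omega) hdvd
          push_cast
          exact_mod_cast hle
  have hbound1 : (∏ p ∈ N.primeFactors.filter (fun p => p < B), ((N.factorization p + 1 : ℕ) : ℝ))
      ≤ c1 ^ B * (N : ℝ) ^ ε := by
    have hlogN : Real.log N ≤ (N : ℝ) ^ t / t := by
      have h1 : Real.log ((N : ℝ) ^ t) ≤ (N : ℝ) ^ t - 1 :=
        Real.log_le_sub_one_of_pos (by positivity)
      rw [Real.log_rpow hNpos] at h1
      rw [le_div_iff₀ ht, mul_comm]
      linarith
    have hL : ∀ p ∈ N.primeFactors.filter (fun p => p < B),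
        ((N.factorization p + 1 : ℕ) : ℝ) ≤ c1 * (N : ℝ) ^ t := by
      intro p hp
      rw [Finset.mem_filter] at hp
      obtain ⟨hpF, hpB⟩ := hp
      have hpprime : p.Prime := Nat.prime_of_mem_primeFactors hpF
      have h2e : (2 : ℝ) ^ (N.factorization p : ℕ) ≤ (N : ℝ) := by
        have h1 : 2 ^ N.factorization p ≤ p ^ N.factorization p :=
          Nat.pow_le_pow_left hpprime.two_le _
        have h3 : p ^ N.factorization p ≤ N := Nat.le_of_dvd (by omega) (Nat.ordProj_dvd N p)
        exact_mod_cast le_trans h1 h3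
      have helog : ((N.factorization p : ℕ) : ℝ) ≤ Real.log N / Real.log 2 := by
        have h1 : Real.log ((2 : ℝ) ^ (N.factorization p : ℕ)) ≤ Real.log N :=
          Real.log_le_log (by positivity) h2e
        rw [Real.log_pow] at h1
        rw [le_div_iff₀ hlog2]
        exact_mod_cast h1
      calc ((N.factorization p + 1 : ℕ) : ℝ) = ((N.factorization p : ℕ) : ℝ) + 1 := by
            push_cast; ring
        _ ≤ Real.log N / Real.log 2 + 1 := by linarith
        _ ≤ ((N : ℝ) ^ t / t) / Real.log 2 + 1 :=
            add_le_add_left (div_le_div_of_nonneg_right hlogN (le_of_lt hlog2)) 1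
        _ = (N : ℝ) ^ t * (1 / (t * Real.log 2)) + 1 := by field_simp
        _ ≤ (N : ℝ) ^ t * (1 / (t * Real.log 2)) + (N : ℝ) ^ t * 1 := by nlinarith
        _ = c1 * (N : ℝ) ^ t := by rw [hc1def]; ring
    have hcard : (N.primeFactors.filter (fun p => p < B)).card ≤ B := by
      have hsub : N.primeFactors.filter (fun p => p < B) ⊆ Finset.range B := by
        intro p hp
        rw [Finset.mem_filter] at hp
        exact Finset.mem_range.mpr hp.2
      calc (N.primeFactors.filter (fun p => p < B)).card ≤ (Finset.range B).card :=
            Finset.card_le_card hsub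
        _ = B := Finset.card_range B
    have hc1N : (1 : ℝ) ≤ c1 * (N : ℝ) ^ t := by nlinarith
    calc (∏ p ∈ N.primeFactors.filter (fun p => p < B), ((N.factorization p + 1 : ℕ) : ℝ))
        ≤ ∏ _p ∈ N.primeFactors.filter (fun p => p < B), (c1 * (N : ℝ) ^ t) :=
          Finset.prod_le_prod (fun i _ => by positivity) hL
      _ = (c1 * (N : ℝ) ^ t) ^ (N.primeFactors.filter (fun p => p < B)).card :=
          Finset.prod_const _
      _ ≤ (c1 * (N : ℝ) ^ t) ^ B := pow_le_pow_right₀ hc1N hcard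
      _ = c1 ^ B * ((N : ℝ) ^ t) ^ B := mul_pow _ _ _
      _ = c1 ^ B * (N : ℝ) ^ ε := by
          congr 1
          rw [← Real.rpow_natCast ((N : ℝ) ^ t) B, ← Real.rpow_mul (by positivity), htB]
  calc (N.divisors.card : ℝ)
      = ∏ p ∈ N.primeFactors, ((N.factorization p + 1 : ℕ) : ℝ) := by
        rw [Nat.card_divisors hN0]; push_cast; rfl
    _ = (∏ p ∈ N.primeFactors.filter (fun p => p < B), ((N.factorization p + 1 : ℕ) : ℝ))
        * (∏ p ∈ N.primeFactors.filter (fun p => ¬ p < B), ((N.factorization p + 1 : ℕ) : ℝ)) :=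
        hsplit
    _ ≤ (c1 ^ B * (N : ℝ) ^ ε) * (N : ℝ) ^ ε := by
        apply mul_le_mul hbound1 hbound2 (Finset.prod_nonneg (fun i _ => by positivity))
        positivity
    _ = c1 ^ B * (N : ℝ) ^ δ := by
        rw [mul_assoc, ← Real.rpow_add hNpos, hεδ]

lemma euclid_ext2 {x y : EuclideanSpace ℝ (Fin 2)} (h0 : x 0 = y 0) (h1 : x 1 = y 1) :
    x = y := by
  refine PiLp.ext fun i => ?_
  fin_cases i
  · exact h0
  · exact h1

lemma sphere_sq {c x : EuclideanSpace ℝ (Fin 2)} {R : ℝ} (h : x ∈ Metric.sphere c R)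
    (hR : 0 ≤ R) : (x 0 - c 0) ^ 2 + (x 1 - c 1) ^ 2 = R ^ 2 := by
  have hd : dist x c = R := mem_sphere.mp h
  rw [EuclideanSpace.dist_eq] at hd
  have h2 : ∑ i : Fin 2, dist (x i) (c i) ^ 2 = R ^ 2 := by
    rw [← hd]
    rw [Real.sq_sqrt]
    positivity
  rw [Fin.sum_univ_two, Real.dist_eq, Real.dist_eq] at h2
  rw [← sq_abs (x 0 - c 0), ← sq_abs (x 1 - c 1)]
  exact h2

lemma coord_le_dist0 (x y : EuclideanSpace ℝ (Fin 2)) : |x 0 - y 0| ≤ dist x y := by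
  rw [EuclideanSpace.dist_eq, Fin.sum_univ_two,
    Real.le_sqrt (abs_nonneg _) (by positivity), sq_abs, Real.dist_eq, Real.dist_eq,
    sq_abs, sq_abs]
  nlinarith [sq_nonneg (x 1 - y 1)]

lemma coord_le_dist1 (x y : EuclideanSpace ℝ (Fin 2)) : |x 1 - y 1| ≤ dist x y := by
  rw [EuclideanSpace.dist_eq, Fin.sum_univ_two,
    Real.le_sqrt (abs_nonneg _) (by positivity), sq_abs, Real.dist_eq, Real.dist_eq,
    sq_abs, sq_abs]
  nlinarith [sq_nonneg (x 0 - y 0)]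

lemma not_collinear_on_sphere {c a b e : EuclideanSpace ℝ (Fin 2)} {R : ℝ} (hR : 0 ≤ R)
    (ha : a ∈ Metric.sphere c R) (hb : b ∈ Metric.sphere c R) (he : e ∈ Metric.sphere c R)
    (hab : a ≠ b) (hae : a ≠ e) (hbe : b ≠ e)
    (hcross : (b 0 - a 0) * (e 1 - a 1) - (b 1 - a 1) * (e 0 - a 0) = 0) : False := by
  have sa := sphere_sq ha hR
  have sb := sphere_sq hb hR
  have se := sphere_sq he hR
  have e0 : (c 0 - a 0) ^ 2 + (c 1 - a 1) ^ 2 = R ^ 2 := by linear_combination sa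
  have e1 : ((b 0 - a 0) - (c 0 - a 0)) ^ 2 + ((b 1 - a 1) - (c 1 - a 1)) ^ 2 = R ^ 2 := by
    linear_combination sb
  have e2 : ((e 0 - a 0) - (c 0 - a 0)) ^ 2 + ((e 1 - a 1) - (c 1 - a 1)) ^ 2 = R ^ 2 := by
    linear_combination se
  have hu : ¬ (b 0 - a 0 = 0 ∧ b 1 - a 1 = 0) := by
    rintro ⟨h1, h2⟩
    exact hab (euclid_ext2 (by linarith) (by linarith))
  -- find t with e - a = t (b - a)
  obtain ⟨t, ht0, ht1⟩ : ∃ t : ℝ, e 0 - a 0 = t * (b 0 - a 0) ∧ e 1 - a 1 = t * (b 1 - a 1) := by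
    by_cases h0 : b 0 - a 0 = 0
    · have h1 : b 1 - a 1 ≠ 0 := fun h => hu ⟨h0, h⟩
      refine ⟨(e 1 - a 1) / (b 1 - a 1), ?_, by field_simp⟩
      rw [h0, mul_zero]
      have : (b 1 - a 1) * (e 0 - a 0) = 0 := by linear_combination -hcross + (e 1 - a 1) * h0
      rcases mul_eq_zero.mp this with h | h
      · exact absurd h h1
      · exact h
    · refine ⟨(e 0 - a 0) / (b 0 - a 0), by field_simp, ?_⟩
      field_simp
      linear_combination hcross
  have hkey : t * (t - 1) * ((b 0 - a 0) ^ 2 + (b 1 - a 1) ^ 2) = 0 := by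
    have d1 : (b 0 - a 0) ^ 2 + (b 1 - a 1) ^ 2
        = 2 * ((b 0 - a 0) * (c 0 - a 0) + (b 1 - a 1) * (c 1 - a 1)) := by
      linear_combination e1 - e0
    have d2 : t ^ 2 * ((b 0 - a 0) ^ 2 + (b 1 - a 1) ^ 2)
        = 2 * t * ((b 0 - a 0) * (c 0 - a 0) + (b 1 - a 1) * (c 1 - a 1)) := by
      linear_combination e2 - e0 - ((e 0 - a 0) + t * (b 0 - a 0) - 2 * (c 0 - a 0)) * ht0
        - ((e 1 - a 1) + t * (b 1 - a 1) - 2 * (c 1 - a 1)) * ht1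
    linear_combination d2 - t * d1
  have hS : (b 0 - a 0) ^ 2 + (b 1 - a 1) ^ 2 ≠ 0 := by
    intro h
    apply hu
    constructor <;> nlinarith [sq_nonneg (b 0 - a 0), sq_nonneg (b 1 - a 1)]
  rcases mul_eq_zero.mp hkey with h | h
  · rcases mul_eq_zero.mp h with h | h
    · rw [h, zero_mul] at ht0 ht1
      exact hae (euclid_ext2 (by linarith) (by linarith))
    · have ht : t = 1 := by linarith
      rw [ht, one_mul] at ht0 ht1
      exact hbe (euclid_ext2 (by linarith) (by linarith))
  · exact absurd h hS

/-- For every `ε > 0` there is a constant `C > 0` such that every circle of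
radius `R ≥ 1` in the plane passes through at most `C·R^ε` integer points. -/
theorem integer_points_on_circle (ε : ℝ) (hε : 0 < ε) :
    ∃ C > (0 : ℝ), ∀ (c : EuclideanSpace ℝ (Fin 2)) (R : ℝ), 1 ≤ R →
      ((intLattice 2 ∩ Metric.sphere c R).encard : ℝ≥0∞) ≤ ENNReal.ofReal (C * R ^ ε) := by
  obtain ⟨C1, hC1pos, hC1⟩ := divisor_bound (ε / 6) (by positivity)
  refine ⟨max 2 (4 * C1 * (256 : ℝ) ^ (ε / 6)),
    lt_of_lt_of_le (by norm_num) (le_max_left _ _), ?_⟩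
  intro c R hR
  have hR0 : (0 : ℝ) < R := by linarith
  have hRε : (1 : ℝ) ≤ R ^ ε := Real.one_le_rpow hR hε.le
  suffices h : ∃ k : ℕ, (intLattice 2 ∩ Metric.sphere c R).encard ≤ (k : ℕ∞) ∧
      (k : ℝ) ≤ max 2 (4 * C1 * (256 : ℝ) ^ (ε / 6)) * R ^ ε by
    obtain ⟨k, hk1, hk2⟩ := h
    calc ((intLattice 2 ∩ Metric.sphere c R).encard : ℝ≥0∞)
        ≤ ((k : ℕ∞) : ℝ≥0∞) := ENat.toENNReal_le.mpr hk1
      _ = ((k : ℕ) : ℝ≥0∞) := ENat.toENNReal_coe k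
      _ = ENNReal.ofReal (k : ℝ) := (ENNReal.ofReal_natCast k).symm
      _ ≤ ENNReal.ofReal _ := ENNReal.ofReal_le_ofReal hk2
  by_cases hgen : ∃ p0 ∈ intLattice 2 ∩ Metric.sphere c R,
      ∃ p1 ∈ intLattice 2 ∩ Metric.sphere c R, ∃ p2 ∈ intLattice 2 ∩ Metric.sphere c R,
      (p1 0 - p0 0) * (p2 1 - p0 1) - (p1 1 - p0 1) * (p2 0 - p0 0) ≠ 0
  case neg =>
    push_neg at hgen
    refine ⟨2, ?_, ?_⟩
    · by_contra hcon
      push_neg at hcon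
      obtain ⟨T, hTsub, hT3⟩ := Set.exists_subset_encard_eq (Order.add_one_le_of_lt hcon)
      have hT3' : T.encard = 3 := by rw [hT3]; norm_num
      rw [Set.encard_eq_three] at hT3'
      obtain ⟨x, y, z, hxy, hxz, hyz, rfl⟩ := hT3'
      have hx := hTsub (show x ∈ ({x, y, z} : Set _) by simp)
      have hy := hTsub (show y ∈ ({x, y, z} : Set _) by simp)
      have hz := hTsub (show z ∈ ({x, y, z} : Set _) by simp)
      exact not_collinear_on_sphere hR0.le hx.2 hy.2 hz.2 hxy hxz hyz (hgen x hx y hy z hz)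
    · calc (2 : ℝ) = 2 * 1 := by ring
        _ ≤ max 2 (4 * C1 * (256 : ℝ) ^ (ε / 6)) * R ^ ε :=
          mul_le_mul (le_max_left _ _) hRε (by norm_num)
            (le_trans (by norm_num) (le_max_left _ _))
  case pos =>
  obtain ⟨p0, hp0, p1, hp1, p2, hp2, hcross⟩ := hgen
  obtain ⟨n00, h00⟩ := hp0.1 0
  obtain ⟨n01, h01⟩ := hp0.1 1
  obtain ⟨n10, h10⟩ := hp1.1 0
  obtain ⟨n11, h11⟩ := hp1.1 1
  obtain ⟨n20, h20⟩ := hp2.1 0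
  obtain ⟨n21, h21⟩ := hp2.1 1
  have sa := sphere_sq hp0.2 hR0.le
  have sb := sphere_sq hp1.2 hR0.le
  have sc := sphere_sq hp2.2 hR0.le
  set α := c 0 - p0 0 with hα
  set β := c 1 - p0 1 with hβ
  set ru1 := p1 0 - p0 0 with hru1
  set ru2 := p1 1 - p0 1 with hru2
  set rv1 := p2 0 - p0 0 with hrv1
  set rv2 := p2 1 - p0 1 with hrv2
  set Dr := 2 * (ru1 * rv2 - ru2 * rv1) with hDr
  set Ar := (ru1 ^ 2 + ru2 ^ 2) * rv2 - (rv1 ^ 2 + rv2 ^ 2) * ru2 with hAr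
  set Br := ru1 * (rv1 ^ 2 + rv2 ^ 2) - rv1 * (ru1 ^ 2 + ru2 ^ 2) with hBr
  have hDne : Dr ≠ 0 := by
    rw [hDr]
    intro h
    apply hcross
    linarith only [h]
  have e0 : α ^ 2 + β ^ 2 = R ^ 2 := by rw [hα, hβ]; linear_combination sa
  have e1 : (ru1 - α) ^ 2 + (ru2 - β) ^ 2 = R ^ 2 := by
    rw [hru1, hru2, hα, hβ]; linear_combination sb
  have e2 : (rv1 - α) ^ 2 + (rv2 - β) ^ 2 = R ^ 2 := by
    rw [hrv1, hrv2, hα, hβ]; linear_combination sc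
  have d1 : ru1 ^ 2 + ru2 ^ 2 = 2 * (ru1 * α + ru2 * β) := by linear_combination e1 - e0
  have d2 : rv1 ^ 2 + rv2 ^ 2 = 2 * (rv1 * α + rv2 * β) := by linear_combination e2 - e0
  have hDα : Dr * α = Ar := by
    rw [hDr, hAr]; linear_combination ru2 * d2 - rv2 * d1
  have hDβ : Dr * β = Br := by
    rw [hDr, hBr]; linear_combination rv1 * d1 - ru1 * d2
  -- integer versions
  set u1 : ℤ := n10 - n00 with hu1
  set u2 : ℤ := n11 - n01 with hu2
  set v1 : ℤ := n20 - n00 with hv1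
  set v2 : ℤ := n21 - n01 with hv2
  have hcu1 : ((u1 : ℤ) : ℝ) = ru1 := by rw [hu1, hru1, h10, h00]; push_cast; ring
  have hcu2 : ((u2 : ℤ) : ℝ) = ru2 := by rw [hu2, hru2, h11, h01]; push_cast; ring
  have hcv1 : ((v1 : ℤ) : ℝ) = rv1 := by rw [hv1, hrv1, h20, h00]; push_cast; ring
  have hcv2 : ((v2 : ℤ) : ℝ) = rv2 := by rw [hv2, hrv2, h21, h01]; push_cast; ring
  set A : ℤ := (u1 ^ 2 + u2 ^ 2) * v2 - (v1 ^ 2 + v2 ^ 2) * u2 with hA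
  set Bz : ℤ := u1 * (v1 ^ 2 + v2 ^ 2) - v1 * (u1 ^ 2 + u2 ^ 2) with hB
  set D : ℤ := 2 * (u1 * v2 - u2 * v1) with hD
  have hcA : ((A : ℤ) : ℝ) = Ar := by
    rw [hA, hAr]; push_cast; rw [hcu1, hcu2, hcv1, hcv2]
  have hcB : ((Bz : ℤ) : ℝ) = Br := by
    rw [hB, hBr]; push_cast; rw [hcu1, hcu2, hcv1, hcv2]
  have hcD : ((D : ℤ) : ℝ) = Dr := by
    rw [hD, hDr]; push_cast; rw [hcu1, hcu2, hcv1, hcv2]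
  set N : ℕ := (A ^ 2 + Bz ^ 2).toNat with hN
  have hNZ : ((N : ℕ) : ℤ) = A ^ 2 + Bz ^ 2 := by
    rw [hN]; exact Int.toNat_of_nonneg (by positivity)
  have hNr : ((N : ℕ) : ℝ) = Dr ^ 2 * R ^ 2 := by
    have h1 : ((N : ℕ) : ℝ) = ((A : ℝ)) ^ 2 + ((Bz : ℝ)) ^ 2 := by
      have := congrArg (fun z : ℤ => (z : ℝ)) hNZ
      push_cast at this
      simpa using this
    rw [h1, hcA, hcB, ← hDα, ← hDβ]
    linear_combination Dr ^ 2 * e0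
  have hN1 : 1 ≤ N := by
    rcases Nat.eq_zero_or_pos N with h | h
    · exfalso
      rw [h] at hNr
      have h2 : 0 < Dr ^ 2 := lt_of_le_of_ne (sq_nonneg _) (Ne.symm (pow_ne_zero 2 hDne))
      have h3 : 0 < Dr ^ 2 * R ^ 2 := mul_pos h2 (by positivity)
      rw [← hNr] at h3
      simp at h3
    · exact h
  have habs_u1 : |ru1| ≤ 2 * R := by
    rw [hru1]
    calc |p1 0 - p0 0| ≤ dist p1 p0 := coord_le_dist0 _ _
      _ ≤ dist p1 c + dist c p0 := dist_triangle _ _ _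
      _ = R + R := by rw [mem_sphere.mp hp1.2, dist_comm, mem_sphere.mp hp0.2]
      _ = 2 * R := by ring
  have habs_u2 : |ru2| ≤ 2 * R := by
    rw [hru2]
    calc |p1 1 - p0 1| ≤ dist p1 p0 := coord_le_dist1 _ _
      _ ≤ dist p1 c + dist c p0 := dist_triangle _ _ _
      _ = R + R := by rw [mem_sphere.mp hp1.2, dist_comm, mem_sphere.mp hp0.2]
      _ = 2 * R := by ring
  have habs_v1 : |rv1| ≤ 2 * R := by
    rw [hrv1]
    calc |p2 0 - p0 0| ≤ dist p2 p0 := coord_le_dist0 _ _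
      _ ≤ dist p2 c + dist c p0 := dist_triangle _ _ _
      _ = R + R := by rw [mem_sphere.mp hp2.2, dist_comm, mem_sphere.mp hp0.2]
      _ = 2 * R := by ring
  have habs_v2 : |rv2| ≤ 2 * R := by
    rw [hrv2]
    calc |p2 1 - p0 1| ≤ dist p2 p0 := coord_le_dist1 _ _
      _ ≤ dist p2 c + dist c p0 := dist_triangle _ _ _
      _ = R + R := by rw [mem_sphere.mp hp2.2, dist_comm, mem_sphere.mp hp0.2]
      _ = 2 * R := by ring
  have hDrle : Dr ^ 2 ≤ 256 * R ^ 4 := by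
    have h1 : |Dr| ≤ 16 * R ^ 2 := by
      rw [hDr]
      calc |2 * (ru1 * rv2 - ru2 * rv1)| = 2 * |ru1 * rv2 - ru2 * rv1| := by
            rw [abs_mul]; norm_num
        _ ≤ 2 * (|ru1 * rv2| + |ru2 * rv1|) := by
            have h := abs_sub (ru1 * rv2) (ru2 * rv1); linarith only [h]
        _ = 2 * (|ru1| * |rv2| + |ru2| * |rv1|) := by rw [abs_mul, abs_mul]
        _ ≤ 2 * ((2 * R) * (2 * R) + (2 * R) * (2 * R)) := by
            have hm1 := mul_le_mul habs_u1 habs_v2 (abs_nonneg _) (by linarith only [hR0])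
            have hm2 := mul_le_mul habs_u2 habs_v1 (abs_nonneg _) (by linarith only [hR0])
            linarith only [hm1, hm2]
        _ = 16 * R ^ 2 := by ring
    calc Dr ^ 2 = |Dr| ^ 2 := (sq_abs Dr).symm
      _ ≤ (16 * R ^ 2) ^ 2 := pow_le_pow_left₀ (abs_nonneg Dr) h1 2
      _ = 256 * R ^ 4 := by ring
  have hNle : ((N : ℕ) : ℝ) ≤ 256 * R ^ 6 := by
    rw [hNr]
    calc Dr ^ 2 * R ^ 2 ≤ (256 * R ^ 4) * R ^ 2 :=
        mul_le_mul_of_nonneg_right hDrle (sq_nonneg R)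
      _ = 256 * R ^ 6 := by ring
  -- the injection
  set Φ : EuclideanSpace ℝ (Fin 2) → GaussianInt :=
    fun x => ⟨round (Dr * (x 0 - p0 0) - Ar), round (Dr * (x 1 - p0 1) - Br)⟩ with hΦ
  have hint : ∀ p ∈ intLattice 2,
      (∃ z : ℤ, Dr * (p 0 - p0 0) - Ar = (z : ℝ)) ∧
      (∃ z : ℤ, Dr * (p 1 - p0 1) - Br = (z : ℝ)) := by
    intro p hp
    obtain ⟨m0, hm0⟩ := hp 0
    obtain ⟨m1, hm1⟩ := hp 1
    constructor
    · refine ⟨D * (m0 - n00) - A, ?_⟩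
      push_cast
      rw [hcD, hcA, ← hm0, ← h00]
    · refine ⟨D * (m1 - n01) - Bz, ?_⟩
      push_cast
      rw [hcD, hcB, ← hm1, ← h01]
  have hmaps : Set.MapsTo Φ (intLattice 2 ∩ Metric.sphere c R)
      {w : GaussianInt | Zsqrtd.norm w = (N : ℤ)} := by
    intro p hp
    obtain ⟨⟨z0, hz0⟩, ⟨z1, hz1⟩⟩ := hint p hp.1
    have hr0 : (Φ p).re = z0 := by
      show round (Dr * (p 0 - p0 0) - Ar) = z0
      rw [hz0, round_intCast]
    have hr1 : (Φ p).im = z1 := by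
      show round (Dr * (p 1 - p0 1) - Br) = z1
      rw [hz1, round_intCast]
    show Zsqrtd.norm (Φ p) = (N : ℤ)
    have hnorm : Zsqrtd.norm (Φ p) = z0 * z0 + z1 * z1 := by
      rw [Zsqrtd.norm_def, hr0, hr1]; ring
    rw [hnorm]
    have hreal : ((z0 * z0 + z1 * z1 : ℤ) : ℝ) = ((N : ℤ) : ℝ) := by
      have sp := sphere_sq hp.2 hR0.le
      have k0 : (z0 : ℝ) = Dr * (p 0 - c 0) := by
        rw [← hz0, ← hDα]; rw [hα]; ring
      have k1 : (z1 : ℝ) = Dr * (p 1 - c 1) := by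
        rw [← hz1, ← hDβ]; rw [hβ]; ring
      push_cast
      rw [k0, k1]
      have : ((N : ℕ) : ℝ) = Dr ^ 2 * R ^ 2 := hNr
      rw [this]
      linear_combination Dr ^ 2 * sp
    exact_mod_cast hreal
  have hinj : Set.InjOn Φ (intLattice 2 ∩ Metric.sphere c R) := by
    intro p hp q hq hpq
    obtain ⟨⟨z0, hz0⟩, ⟨z1, hz1⟩⟩ := hint p hp.1
    obtain ⟨⟨y0, hy0⟩, ⟨y1, hy1⟩⟩ := hint q hq.1
    have hr0 : (Φ p).re = z0 := by
      show round (Dr * (p 0 - p0 0) - Ar) = z0; rw [hz0, round_intCast]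
    have hs0 : (Φ q).re = y0 := by
      show round (Dr * (q 0 - p0 0) - Ar) = y0; rw [hy0, round_intCast]
    have hr1 : (Φ p).im = z1 := by
      show round (Dr * (p 1 - p0 1) - Br) = z1; rw [hz1, round_intCast]
    have hs1 : (Φ q).im = y1 := by
      show round (Dr * (q 1 - p0 1) - Br) = y1; rw [hy1, round_intCast]
    have hz : z0 = y0 := by rw [← hr0, ← hs0, hpq]
    have hw : z1 = y1 := by rw [← hr1, ← hs1, hpq]
    have he0 : Dr * (p 0 - p0 0) - Ar = Dr * (q 0 - p0 0) - Ar := by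
      rw [hz0, hy0, hz]
    have he1 : Dr * (p 1 - p0 1) - Br = Dr * (q 1 - p0 1) - Br := by
      rw [hz1, hy1, hw]
    have hp0' : p 0 = q 0 := by
      have h := mul_left_cancel₀ hDne
        (by linarith only [he0] : Dr * (p 0 - p0 0) = Dr * (q 0 - p0 0))
      linarith only [h]
    have hp1' : p 1 = q 1 := by
      have h := mul_left_cancel₀ hDne
        (by linarith only [he1] : Dr * (p 1 - p0 1) = Dr * (q 1 - p0 1))
      linarith only [h]
    exact euclid_ext2 hp0' hp1'
  refine ⟨4 * N.divisors.card, ?_, ?_⟩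
  · calc (intLattice 2 ∩ Metric.sphere c R).encard
        ≤ ({w : GaussianInt | Zsqrtd.norm w = (N : ℤ)}).encard :=
          Set.encard_le_encard_of_injOn hmaps hinj
      _ ≤ ((4 * N.divisors.card : ℕ) : ℕ∞) := gi_count_le_divisors N hN1
  · have hd : (N.divisors.card : ℝ) ≤ C1 * (N : ℝ) ^ (ε / 6) := hC1 N hN1
    have h6 : ((N : ℝ)) ^ (ε / 6) ≤ (256 * R ^ 6) ^ (ε / 6) :=
      Real.rpow_le_rpow (by positivity) hNle (by positivity)
    have h7 : ((256 : ℝ) * R ^ 6) ^ (ε / 6) = 256 ^ (ε / 6) * R ^ ε := by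
      rw [Real.mul_rpow (by norm_num) (by positivity)]
      congr 1
      rw [← Real.rpow_natCast R 6, ← Real.rpow_mul hR0.le]
      congr 1
      push_cast
      ring
    calc ((4 * N.divisors.card : ℕ) : ℝ) = 4 * (N.divisors.card : ℝ) := by push_cast; ring
      _ ≤ 4 * (C1 * (N : ℝ) ^ (ε / 6)) := by
          apply mul_le_mul_of_nonneg_left hd (by norm_num)
      _ ≤ 4 * (C1 * ((256 * R ^ 6) ^ (ε / 6))) := by
          apply mul_le_mul_of_nonneg_left
            (mul_le_mul_of_nonneg_left h6 hC1pos.le) (by norm_num)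
      _ = (4 * C1 * 256 ^ (ε / 6)) * R ^ ε := by rw [h7]; ring
      _ ≤ max 2 (4 * C1 * 256 ^ (ε / 6)) * R ^ ε :=
          mul_le_mul_of_nonneg_right (le_max_right _ _) (by positivity)
end
end

section
/- Let d ≥ 2. There exists a constant C ≥ 1, depending only on d, such that for every integer k ≥ 1, the number of chambers of the k-th Brillouin zone Bz_k(0, ℤ^d) of the origin in the integer lattice ℤ^d is at most e_{k−1}(d, ⌈C·k⌉), where e_j(d, n) denotes the maximum, over all sets A ⊂ ℝ^d of n points, of the number of j-sets of A. -/
open Set Metric MeasureTheory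

noncomputable section

/-- The number of `j`-sets of a finite set `A ⊂ ℝ^d`: subsets of size `j` that can be cut
off by an open half-space. -/
def numJSets (d j : ℕ) (A : Finset (EuclideanSpace ℝ (Fin d))) : ℕ :=
  {S : Finset (EuclideanSpace ℝ (Fin d)) | S ⊆ A ∧ S.card = j ∧
    ∃ v : EuclideanSpace ℝ (Fin d), v ≠ 0 ∧ ∃ c : ℝ,
      (S : Set (EuclideanSpace ℝ (Fin d)))
        = (A : Set (EuclideanSpace ℝ (Fin d))) ∩ {x | c < (inner ℝ v x : ℝ)}}.ncard

/-- `e_j(d, n)`: the maximum number of `j`-sets over all `n`-point subsets of `ℝ^d`. -/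
def maxJSets (d j n : ℕ) : ℕ :=
  sSup {m | ∃ A : Finset (EuclideanSpace ℝ (Fin d)), A.card = n ∧ m = numJSets d j A}

/-!
For `x` off the bisectors, let `T(x)` be the set of points of `A \ {0}` closer to `x` than `0`.
The points with a given `T(x)` form an intersection of open half-spaces, which is convex and,
`A` being locally finite, open; hence the chambers of `Bz_k(0, A)` are exactly these cells with
`|T| = k - 1`, and they are counted by their sets `T`. Inverting in the unit sphere,
`p ∈ T(x)` iff `⟪x, p / ‖p‖²⟫ > 1/2`, so the inverted `T(x)` is a `(k - 1)`-set of the inverted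
points. For `A = ℤ^d`, the ball with diameter `[0, x]` lies in the region closer to `x` than `0`
and contains about `(‖x‖ / √d)^d` lattice points, so every chamber lies in a ball of radius
`O(√d k^{1/d})`; only the `O_d(k)` lattice points of twice that norm can belong to some `T(x)`.
Padding them with points near the origin, which lie in none of the half-spaces, gives exactly
`⌈C k⌉` points.
-/

open Set Metric EuclideanGeometry Filter Topology
open scoped RealInnerProductSpace

theorem Set.Infinite.exists_superset_card_eq {α : Type*} {s : Set α} (hs : s.Infinite)
    {B : Finset α} {n : ℕ} (hn : B.card ≤ n) :
    ∃ A : Finset α, B ⊆ A ∧ A.card = n ∧ (A : Set α) ⊆ B ∪ s := by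
  classical
  obtain ⟨t, hts, htc⟩ := hs.exists_subset_card_eq n
  obtain ⟨A, hBA, hAt, hA⟩ := Finset.exists_subsuperset_card_eq Finset.subset_union_left hn
    (htc ▸ Finset.card_le_card Finset.subset_union_right : n ≤ (B ∪ t).card)
  refine ⟨A, hBA, hA, fun y hy => ?_⟩
  rcases Finset.mem_union.1 (hAt hy) with hyB | hyt
  · exact Or.inl hyB
  · exact Or.inr (hts hyt)

theorem EuclideanSpace.norm_le_sqrt_card_mul {ι : Type*} [Fintype ι] {v : EuclideanSpace ℝ ι}
    {t : ℝ} (ht : 0 ≤ t) (hv : ∀ i, |v i| ≤ t) : ‖v‖ ≤ √(Fintype.card ι) * t := by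
  calc ‖v‖ = √(∑ i, ‖v i‖ ^ 2) := EuclideanSpace.norm_eq v
    _ ≤ √(∑ _ : ι, t ^ 2) := by
      gcongr with i
      rw [Real.norm_eq_abs]
      exact hv i
    _ = √(Fintype.card ι) * t := by
      rw [Finset.sum_const, Finset.card_univ, nsmul_eq_mul, Real.sqrt_mul (Nat.cast_nonneg _),
        Real.sqrt_sq ht]

namespace Brillouin

section NormedAddCommGroup

variable {E : Type*} [NormedAddCommGroup E] (A : Set E)

def closerSet (x : E) : Set E := {p | p ∈ A \ {0} ∧ dist x p < dist x 0}

def cell (T : Set E) : Set E :=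
  {x | ∀ p ∈ A \ {0}, (p ∈ T → dist x p < dist x 0) ∧ (p ∉ T → dist x 0 < dist x p)}

variable {A}

theorem dist_zero_lt_dist_of_two_mul_norm_lt {z p : E} (h : 2 * ‖z‖ < ‖p‖) :
    dist z 0 < dist z p := by
  rw [dist_zero_right, dist_comm, dist_eq_norm]
  linarith [norm_sub_norm_le p z]

theorem norm_le_two_mul_of_dist_lt_dist_zero {z p : E} (h : dist z p < dist z 0) :
    ‖p‖ ≤ 2 * ‖z‖ :=
  not_lt.1 fun hp => (dist_zero_lt_dist_of_two_mul_norm_lt hp).not_gt h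

theorem isOpen_cell (hA : ∀ r, (A ∩ closedBall 0 r).Finite) (T : Set E) : IsOpen (cell A T) := by
  have hopen (p : E) :
      IsOpen {x : E | (p ∈ T → dist x p < dist x 0) ∧ (p ∉ T → dist x 0 < dist x p)} := by
    by_cases hpT : p ∈ T <;>
      simp only [hpT, not_true, not_false_eq_true, true_imp_iff, false_imp_iff, and_true,
        true_and] <;>
      exact isOpen_lt (by fun_prop) (by fun_prop)
  refine isOpen_iff_eventually.2 fun x hx => ?_
  have hnear : ∀ᶠ y in 𝓝 x, ∀ p ∈ A ∩ closedBall 0 (2 * ‖x‖ + 2), p ≠ 0 →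
      (p ∈ T → dist y p < dist y 0) ∧ (p ∉ T → dist y 0 < dist y p) :=
    (hA _).eventually_all.2 fun p hp => eventually_imp_distrib_left.2 fun hp0 =>
      (hopen p).mem_nhds (hx p ⟨hp.1, hp0⟩)
  filter_upwards [hnear, ball_mem_nhds x one_pos] with y hy hyx p ⟨hpA, hp0⟩
  by_cases hpx : ‖p‖ ≤ 2 * ‖x‖ + 2
  · exact hy p ⟨hpA, mem_closedBall_zero_iff.2 hpx⟩ hp0
  · have hfar (z : E) (hz : dist z x < 1) : dist z 0 < dist z p := by
      refine dist_zero_lt_dist_of_two_mul_norm_lt ?_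
      linarith [norm_le_of_mem_closedBall (mem_closedBall.2 hz.le)]
    have hpT : p ∉ T := fun hpT =>
      ((hx p ⟨hpA, hp0⟩).1 hpT).not_gt (hfar x (by simp))
    exact ⟨fun h => absurd h hpT, fun _ => hfar y hyx⟩

theorem closerSet_zero : closerSet A 0 = ∅ := by
  simp [closerSet, (norm_nonneg _).not_gt]

theorem closerSet_subset (x : E) : closerSet A x ⊆ A \ {0} := fun _ hp => hp.1

theorem mem_cell_closerSet {x : E} (hx : ∀ p ∈ A \ {0}, dist x p ≠ dist x 0) :
    x ∈ cell A (closerSet A x) := fun p hp =>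
  ⟨fun hpx => hpx.2, fun hpx => (hx p hp).symm.lt_of_le (not_lt.1 fun h => hpx ⟨hp, h⟩)⟩

theorem closerSet_eq_of_mem_cell {T : Set E} (hT : T ⊆ A \ {0}) {x : E} (hx : x ∈ cell A T) :
    closerSet A x = T := by
  ext p
  refine ⟨fun ⟨hpA, hp⟩ => ?_, fun hpT => ⟨hT hpT, (hx p (hT hpT)).1 hpT⟩⟩
  by_contra hpT
  exact (hp.trans ((hx p hpA).2 hpT)).false

theorem dist_ne_of_mem_cell {T : Set E} {x : E} (hx : x ∈ cell A T) :
    ∀ p ∈ A \ {0}, dist x p ≠ dist x 0 := fun p hp => by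
  by_cases hpT : p ∈ T
  · exact ((hx p hp).1 hpT).ne
  · exact ((hx p hp).2 hpT).ne'

end NormedAddCommGroup

section InnerProductSpace

variable {E : Type*} [NormedAddCommGroup E] [InnerProductSpace ℝ E] {A : Set E}

theorem dist_lt_dist_zero_iff (x p : E) : dist x p < dist x 0 ↔ ‖p‖ ^ 2 < 2 * ⟪p, x⟫ := by
  rw [dist_eq_norm, dist_zero_right, ← sq_lt_sq₀ (norm_nonneg _) (norm_nonneg _),
    norm_sub_sq_real, real_inner_comm]
  constructor <;> intro h <;> linarith

theorem dist_zero_lt_dist_iff (x p : E) : dist x 0 < dist x p ↔ 2 * ⟪p, x⟫ < ‖p‖ ^ 2 := by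
  rw [dist_zero_right, dist_eq_norm, ← sq_lt_sq₀ (norm_nonneg _) (norm_nonneg _),
    norm_sub_sq_real, real_inner_comm]
  constructor <;> intro h <;> linarith

theorem dist_lt_dist_zero_of_mem_ball {x p : E} (hp : p ∈ ball ((2 : ℝ)⁻¹ • x) (‖x‖ / 2)) :
    dist x p < dist x 0 := by
  have hx : dist x ((2 : ℝ)⁻¹ • x) = ‖x‖ / 2 := by
    rw [dist_eq_norm, show x - (2 : ℝ)⁻¹ • x = (2 : ℝ)⁻¹ • x by module, norm_smul]
    norm_num [div_eq_inv_mul]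
  calc dist x p ≤ dist x ((2 : ℝ)⁻¹ • x) + dist ((2 : ℝ)⁻¹ • x) p := dist_triangle _ _ _
    _ < ‖x‖ / 2 + ‖x‖ / 2 := by rw [hx, dist_comm]; gcongr; exact hp
    _ = dist x 0 := by rw [dist_zero_right]; ring

theorem half_lt_inner_inversion_iff (x p : E) :
    1 / 2 < ⟪x, inversion 0 1 p⟫ ↔ dist x p < dist x 0 := by
  rcases eq_or_ne p 0 with rfl | hp
  · simp
  have hp2 : 0 < ‖p‖ ^ 2 := by positivity
  rw [dist_lt_dist_zero_iff, inversion, vsub_eq_sub, sub_zero, vadd_eq_add, add_zero,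
    dist_zero_right, real_inner_smul_right, real_inner_comm, div_pow, one_pow, one_div_mul_eq_div,
    lt_div_iff₀ hp2]
  constructor <;> intro h <;> linarith

theorem convex_cell (T : Set E) : Convex ℝ (cell A T) := by
  have hlin (p : E) : IsLinearMap ℝ fun x : E => 2 * ⟪p, x⟫ := by
    constructor
    · intro x y; rw [inner_add_right, mul_add]
    · intro c x; rw [real_inner_smul_right, smul_eq_mul]; ring
  have hcell : cell A T = ⋂ p ∈ A \ {0},
      {x | p ∈ T → ‖p‖ ^ 2 < 2 * ⟪p, x⟫} ∩ {x | p ∉ T → 2 * ⟪p, x⟫ < ‖p‖ ^ 2} := by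
    ext x
    simp only [cell, dist_lt_dist_zero_iff, dist_zero_lt_dist_iff, mem_ofPred_eq, mem_iInter,
      mem_inter_iff]
  rw [hcell]
  refine convex_iInter₂ fun p _ => Convex.inter ?_ ?_ <;> by_cases hpT : p ∈ T <;>
    simp only [hpT, not_true, not_false_eq_true, true_imp_iff, false_imp_iff, ofPred_true,
      convex_univ]
  · exact convex_halfSpace_gt (hlin p) _
  · exact convex_halfSpace_lt (hlin p) _

theorem inversion_closerSet_eq_inter {A' : Set E} {x : E} {ρ : ℝ} (hx : ‖x‖ < ρ)
    (hA' : A' ⊆ inversion 0 1 '' A ∪ ball 0 (2 * ρ)⁻¹)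
    (hsub : inversion 0 1 '' closerSet A x ⊆ A') :
    inversion 0 1 '' closerSet A x = A' ∩ {y | 1 / 2 < ⟪x, y⟫} := by
  ext y
  constructor
  · rintro ⟨p, hp, rfl⟩
    exact ⟨hsub ⟨p, hp, rfl⟩, (half_lt_inner_inversion_iff x p).2 hp.2⟩
  rintro ⟨hyA', hy⟩
  rcases hA' hyA' with ⟨p, hp, rfl⟩ | hy0
  · have hclose := (half_lt_inner_inversion_iff x p).1 hy
    exact ⟨p, ⟨⟨hp, fun hp0 => hclose.ne (by rw [mem_singleton_iff.1 hp0])⟩, hclose⟩, rfl⟩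
  · have hρ : 0 < ρ := (norm_nonneg x).trans_lt hx
    have : ⟪x, y⟫ < 1 / 2 := calc
      ⟪x, y⟫ ≤ ‖x‖ * ‖y‖ := real_inner_le_norm x y
      _ ≤ ρ * ‖y‖ := by gcongr
      _ < ρ * (2 * ρ)⁻¹ := by gcongr; exact mem_ball_zero_iff.1 hy0
      _ = 1 / 2 := by field_simp
    exact absurd hy this.not_gt

end InnerProductSpace

section chamber

variable {d k : ℕ} {A : Set (EuclideanSpace ℝ (Fin d))}

theorem cell_closerSet_subset_chamberRegion {x : EuclideanSpace ℝ (Fin d)}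
    (hx : x ∈ chamberRegion d k A 0) : cell A (closerSet A x) ⊆ chamberRegion d k A 0 :=
  fun _ hy => ⟨(congrArg encard (closerSet_eq_of_mem_cell (closerSet_subset x) hy)).trans hx.1,
    dist_ne_of_mem_cell hy⟩

theorem connectedComponentIn_chamberRegion (hA : ∀ r, (A ∩ closedBall 0 r).Finite)
    {x : EuclideanSpace ℝ (Fin d)} (hx : x ∈ chamberRegion d k A 0) :
    connectedComponentIn (chamberRegion d k A 0) x = cell A (closerSet A x) := by
  set cr := chamberRegion d k A 0
  have hxx : x ∈ cell A (closerSet A x) := mem_cell_closerSet hx.2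
  -- the chamber region is covered by the open cell of `x` and the union of the other cells
  refine (isPreconnected_connectedComponentIn.subset_left_of_subset_union (isOpen_cell hA _)
    (isOpen_biUnion fun y (_ : y ∈ {y ∈ cr | closerSet A y ≠ closerSet A x}) =>
      isOpen_cell hA (closerSet A y)) ?_ ?_ ⟨x, mem_connectedComponentIn hx, hxx⟩).antisymm
    ((convex_cell _).isPreconnected.subset_connectedComponentIn hxx
      (cell_closerSet_subset_chamberRegion hx))
  · refine disjoint_left.2 fun z hz hz' => ?_
    obtain ⟨y, hy, hzy⟩ := mem_iUnion₂.1 hz'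
    exact hy.2 ((closerSet_eq_of_mem_cell (closerSet_subset y) hzy).symm.trans
      (closerSet_eq_of_mem_cell (closerSet_subset x) hz))
  · intro y hy
    have hy' := connectedComponentIn_subset cr x hy
    by_cases hyx : closerSet A y = closerSet A x
    · exact Or.inl (hyx ▸ mem_cell_closerSet hy'.2)
    · exact Or.inr (mem_biUnion ⟨hy', hyx⟩ (mem_cell_closerSet hy'.2))

theorem chambers_eq_image (hA : ∀ r, (A ∩ closedBall 0 r).Finite) :
    chambers d k A 0 = cell A '' (closerSet A '' chamberRegion d k A 0) := by
  rw [image_image]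
  ext C
  constructor <;> rintro ⟨x, hx, rfl⟩ <;>
    exact ⟨x, hx, (connectedComponentIn_chamberRegion hA hx).symm⟩

end chamber

section lattice

variable {d : ℕ}

theorem encard_intLattice_inter_closedBall_le (R : ℝ) :
    (intLattice d ∩ closedBall 0 R).encard ≤ ((2 * ⌊R⌋₊ + 1) ^ d : ℕ) := by
  set M := ⌊R⌋₊
  set G := Fintype.piFinset fun _ : Fin d => Finset.Icc (-(M : ℤ)) M
  have hsub : intLattice d ∩ closedBall 0 R ⊆ toEuc d '' G := by
    rintro p ⟨hp, hpR⟩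
    choose n hn using hp
    refine ⟨n, Fintype.mem_piFinset.2 fun i => ?_, PiLp.ext fun i => (hn i).symm⟩
    have hni : (n i).natAbs ≤ M := Nat.le_floor <| by
      rw [Nat.cast_natAbs, Int.cast_abs, ← hn i, ← Real.norm_eq_abs]
      exact (PiLp.norm_apply_le p i).trans (mem_closedBall_zero_iff.1 hpR)
    rw [Finset.mem_Icc]
    omega
  calc (intLattice d ∩ closedBall 0 R).encard ≤ (toEuc d '' G).encard := encard_le_encard hsub
    _ ≤ (G : Set (Fin d → ℤ)).encard := encard_image_le _ _
    _ = ((2 * M + 1) ^ d : ℕ) := by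
      rw [encard_coe_eq_coe_finsetCard, Fintype.card_piFinset, Int.card_Icc, Finset.prod_const,
        Finset.card_univ, Fintype.card_fin]
      congr
      omega

theorem intLattice_inter_closedBall_finite (R : ℝ) : (intLattice d ∩ closedBall 0 R).Finite :=
  finite_of_encard_le_coe (encard_intLattice_inter_closedBall_le R)

theorem floor_pow_le_encard_intLattice_inter_closedBall (c : EuclideanSpace ℝ (Fin d)) {t : ℝ}
    (ht : 0 ≤ t) : ((⌊2 * t⌋₊ ^ d : ℕ) : ℕ∞) ≤ (intLattice d ∩ closedBall c (√d * t)).encard := by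
  set L := ⌊2 * t⌋₊
  -- the points `⌈c - t⌉ + f` with `0 ≤ f i < L` lie in the cube `c + [-t, t]^d`
  let ψ : (Fin d → Fin L) → EuclideanSpace ℝ (Fin d) :=
    fun f => toEuc d fun i => ⌈c i - t⌉ + (f i : ℤ)
  have hψ (f : Fin d → Fin L) (i : Fin d) : ψ f i = ⌈c i - t⌉ + (f i : ℝ) := by
    simp [ψ, toEuc]
  have hinj : Function.Injective ψ := fun f g hfg => funext fun i => Fin.ext <| by
    have := congrArg (· i) hfg
    simp only [hψ, add_right_inj, Nat.cast_inj] at this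
    exact this
  have hmaps : range ψ ⊆ intLattice d ∩ closedBall c (√d * t) := by
    rintro _ ⟨f, rfl⟩
    refine ⟨fun i => ⟨_, rfl⟩, ?_⟩
    rw [mem_closedBall, dist_eq_norm]
    refine (EuclideanSpace.norm_le_sqrt_card_mul ht fun i => ?_).trans_eq
      (by rw [Fintype.card_fin])
    have h1 : c i - t ≤ ⌈c i - t⌉ := Int.le_ceil _
    have h2 : (⌈c i - t⌉ : ℝ) < c i - t + 1 := Int.ceil_lt_add_one _
    have h3 : (f i : ℝ) + 1 ≤ L := by exact_mod_cast (f i).isLt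
    have h4 : (L : ℝ) ≤ 2 * t := Nat.floor_le (by positivity)
    rw [PiLp.sub_apply, hψ, abs_le]
    constructor <;> linarith [Nat.cast_nonneg (α := ℝ) (f i : ℕ)]
  calc ((L ^ d : ℕ) : ℕ∞) = (range ψ).encard := by
        rw [← image_univ, hinj.encard_image, encard_univ, ENat.card_eq_coe_fintype_card]
        simp
    _ ≤ _ := encard_le_encard hmaps

theorem norm_lt_of_mem_chamberRegion_intLattice [NeZero d] {k : ℕ} (hk : 1 ≤ k)
    {x : EuclideanSpace ℝ (Fin d)} (hx : x ∈ chamberRegion d k (intLattice d) 0) :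
    ‖x‖ < 4 * √d * (k : ℝ) ^ (d⁻¹ : ℝ) := by
  have hsd : 0 < √(d : ℝ) := Real.sqrt_pos.2 (Nat.cast_pos.2 (NeZero.pos d))
  set t := ‖x‖ / (4 * √d) with ht
  have ht0 : 0 ≤ t := by positivity
  suffices hpow : t ^ d < k by
    have hroot : t < (k : ℝ) ^ (d⁻¹ : ℝ) := lt_of_pow_lt_pow_left₀ d (by positivity) <| by
      rwa [Real.rpow_inv_natCast_pow (Nat.cast_nonneg k) (NeZero.ne d)]
    rw [ht, div_lt_iff₀ (by positivity)] at hroot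
    linarith
  rcases lt_or_ge t 1 with ht1 | ht1
  · exact (pow_lt_one₀ ht0 ht1 (NeZero.ne d)).trans_le (by exact_mod_cast hk)
  have hx0 : 0 < ‖x‖ := by
    rw [ht, le_div_iff₀ (by positivity)] at ht1
    linarith
  have hsub :
      intLattice d ∩ closedBall ((2 : ℝ)⁻¹ • x) (√d * t) ⊆ closerSet (intLattice d) x := by
    rintro p ⟨hpΛ, hp⟩
    have hclose : dist x p < dist x 0 := dist_lt_dist_zero_of_mem_ball <| closedBall_subset_ball
      (by rw [ht, mul_div_assoc', mul_comm, mul_div_mul_right _ _ hsd.ne']; linarith) hp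
    exact ⟨⟨hpΛ, fun hp0 => hclose.ne (by rw [mem_singleton_iff.1 hp0])⟩, hclose⟩
  have hcount : ⌊2 * t⌋₊ ^ d ≤ k - 1 := by
    have := (floor_pow_le_encard_intLattice_inter_closedBall ((2 : ℝ)⁻¹ • x) ht0).trans
      ((encard_le_encard hsub).trans hx.1.le)
    exact_mod_cast this
  have hfloor : t ≤ ⌊2 * t⌋₊ := by linarith [Nat.lt_floor_add_one (2 * t)]
  calc t ^ d ≤ (⌊2 * t⌋₊ : ℝ) ^ d := by gcongr
    _ ≤ ((k - 1 : ℕ) : ℝ) := by exact_mod_cast hcount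
    _ < k := by rw [Nat.cast_sub hk, Nat.cast_one]; linarith

end lattice

section jSets

variable {d j : ℕ}

def jSets (d j : ℕ) (A : Finset (EuclideanSpace ℝ (Fin d))) :
    Set (Finset (EuclideanSpace ℝ (Fin d))) :=
  {S | S ⊆ A ∧ S.card = j ∧ ∃ v : EuclideanSpace ℝ (Fin d), v ≠ 0 ∧ ∃ c : ℝ,
    (S : Set (EuclideanSpace ℝ (Fin d))) =
      (A : Set (EuclideanSpace ℝ (Fin d))) ∩ {x | c < ⟪v, x⟫}}

theorem jSets_finite (A : Finset (EuclideanSpace ℝ (Fin d))) : (jSets d j A).Finite :=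
  A.powerset.finite_toSet.subset fun _ hS => Finset.mem_powerset.2 hS.1

theorem numJSets_le_maxJSets (A : Finset (EuclideanSpace ℝ (Fin d))) :
    numJSets d j A ≤ maxJSets d j A.card := by
  refine le_csSup ⟨2 ^ A.card, ?_⟩ ⟨A, rfl, rfl⟩
  rintro _ ⟨B, hB, rfl⟩
  rw [← hB]
  calc numJSets d j B = (jSets d j B).ncard := rfl
    _ ≤ (B.powerset : Set (Finset (EuclideanSpace ℝ (Fin d)))).ncard :=
      ncard_le_ncard (fun _ hS => Finset.mem_powerset.2 hS.1) B.powerset.finite_toSet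
    _ = 2 ^ B.card := by rw [ncard_coe_finset, Finset.card_powerset]

theorem exists_mem_jSets_coe_eq {A : Finset (EuclideanSpace ℝ (Fin d))}
    {T : Set (EuclideanSpace ℝ (Fin d))} (hT : T.encard = j) {v : EuclideanSpace ℝ (Fin d)}
    (hv : v ≠ 0) {c : ℝ} (hTA : T = (A : Set _) ∩ {x | c < ⟪v, x⟫}) :
    ∃ S ∈ jSets d j A, (S : Set _) = T := by
  have hfin : T.Finite := A.finite_toSet.subset (hTA ▸ inter_subset_left)
  refine ⟨hfin.toFinset, ⟨fun y hy => ?_, ?_, v, hv, c, ?_⟩, hfin.coe_toFinset⟩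
  · have hyT : y ∈ T := hfin.mem_toFinset.1 hy
    rw [hTA] at hyT
    exact hyT.1
  · rwa [← Nat.cast_inj (R := ℕ∞), ← encard_coe_eq_coe_finsetCard, hfin.coe_toFinset]
  · rwa [hfin.coe_toFinset]

end jSets

theorem encard_chambers_le_numJSets {d k : ℕ} {A : Set (EuclideanSpace ℝ (Fin d))}
    (hA : ∀ r, (A ∩ closedBall 0 r).Finite) {A' : Finset (EuclideanSpace ℝ (Fin d))}
    (hA' : ∀ x ∈ chamberRegion d k A 0,
      ∃ S ∈ jSets d (k - 1) A', (S : Set _) = inversion 0 1 '' closerSet A x) :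
    (chambers d k A 0).encard ≤ numJSets d (k - 1) A' := by
  set cr := chamberRegion d k A 0
  calc (chambers d k A 0).encard ≤ (closerSet A '' cr).encard :=
        chambers_eq_image hA ▸ encard_image_le _ _
    _ = ((inversion 0 1 '' ·) '' (closerSet A '' cr)).encard :=
        ((image_injective.2 (inversion_injective 0 one_ne_zero)).encard_image _).symm
    _ ≤ ((↑) '' jSets d (k - 1) A' : Set (Set (EuclideanSpace ℝ (Fin d)))).encard := by
        refine encard_le_encard ?_
        rintro _ ⟨_, ⟨x, hx, rfl⟩, rfl⟩
        exact hA' x hx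
    _ = numJSets d (k - 1) A' := by
        rw [Finset.coe_injective.encard_image, ← (jSets_finite A').cast_ncard_eq]
        rfl

theorem exists_mem_jSets_inversion_closerSet {d k : ℕ} [NeZero d]
    {A : Set (EuclideanSpace ℝ (Fin d))} {A' : Finset (EuclideanSpace ℝ (Fin d))}
    {x : EuclideanSpace ℝ (Fin d)} (hx : x ∈ chamberRegion d k A 0) {ρ : ℝ} (hxρ : ‖x‖ < ρ)
    (hA' : (A' : Set _) ⊆ inversion 0 1 '' A ∪ ball 0 (2 * ρ)⁻¹)
    (hsub : inversion 0 1 '' closerSet A x ⊆ A') :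
    ∃ S ∈ jSets d (k - 1) A', (S : Set _) = inversion 0 1 '' closerSet A x := by
  have hT : (inversion 0 1 '' closerSet A x).encard = (k - 1 : ℕ) :=
    ((inversion_injective 0 one_ne_zero).encard_image _).trans hx.1
  rcases eq_or_ne x 0 with rfl | hx0
  · obtain ⟨v, hv⟩ := exists_ne (0 : EuclideanSpace ℝ (Fin d))
    obtain ⟨c, hc⟩ := (A'.finite_toSet.image fun y => ⟪v, y⟫).bddAbove
    refine exists_mem_jSets_coe_eq hT hv (c := c) ?_
    rw [closerSet_zero, image_empty, eq_comm, eq_empty_iff_forall_notMem]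
    exact fun y ⟨hy, hcy⟩ => (hc ⟨y, hy, rfl⟩).not_gt hcy
  · exact exists_mem_jSets_coe_eq hT hx0 (inversion_closerSet_eq_inter hxρ hA' hsub)

theorem encard_chambers_le_maxJSets {d : ℕ} [NeZero d] {A : Set (EuclideanSpace ℝ (Fin d))}
    (hA : ∀ r, (A ∩ closedBall 0 r).Finite) {k n : ℕ} {ρ : ℝ} (hρ : 0 < ρ)
    (hcr : ∀ x ∈ chamberRegion d k A 0, ‖x‖ < ρ) (hn : (A ∩ closedBall 0 (2 * ρ)).encard ≤ n) :
    (chambers d k A 0).encard ≤ maxJSets d (k - 1) n := by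
  set B := ((hA (2 * ρ)).image (inversion 0 1)).toFinset
  have hBn : B.card ≤ n := by
    have : (B.card : ℕ∞) ≤ n := by
      rw [← encard_coe_eq_coe_finsetCard, Finite.coe_toFinset]
      exact (encard_image_le _ _).trans hn
    exact_mod_cast this
  -- the padding points are too close to the origin to lie in any half-space `1/2 < ⟪x, ·⟫`
  obtain ⟨A', hBA', rfl, hA'⟩ := (infinite_of_mem_nhds 0
    (ball_mem_nhds 0 (by positivity : 0 < (2 * ρ)⁻¹))).exists_superset_card_eq hBn
  have hA'B : (A' : Set _) ⊆ inversion 0 1 '' A ∪ ball 0 (2 * ρ)⁻¹ := by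
    refine hA'.trans (union_subset_union_left _ ?_)
    rw [Finite.coe_toFinset]
    exact image_mono inter_subset_left
  have hsub (x) (hx : x ∈ chamberRegion d k A 0) : inversion 0 1 '' closerSet A x ⊆ A' := by
    rintro _ ⟨p, hp, rfl⟩
    refine hBA' ((Finite.mem_toFinset _).2 ⟨p, ⟨hp.1.1, mem_closedBall_zero_iff.2 ?_⟩, rfl⟩)
    linarith [norm_le_two_mul_of_dist_lt_dist_zero hp.2, hcr x hx]
  calc (chambers d k A 0).encard ≤ numJSets d (k - 1) A' :=
        encard_chambers_le_numJSets hA fun x hx =>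
          exists_mem_jSets_inversion_closerSet hx (hcr x hx) hA'B (hsub x hx)
    _ ≤ maxJSets d (k - 1) A'.card := by exact_mod_cast numJSets_le_maxJSets A'

end Brillouin

/-- There is a constant `C ≥ 1`, depending only on `d`, such that for every
`k ≥ 1` the number of chambers of the `k`-th Brillouin zone of `0 ∈ ℤ^d` is at most
`e_{k-1}(d, ⌈C·k⌉)`. -/
theorem chambers_le_ksets (d : ℕ) (hd : 2 ≤ d) :
    ∃ C : ℝ, 1 ≤ C ∧ ∀ k : ℕ, 1 ≤ k →
      (chambers d k (intLattice d) 0).encard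
        ≤ ((maxJSets d (k - 1) ⌈C * (k : ℝ)⌉₊ : ℕ) : ℕ∞) := by
  have : NeZero d := ⟨by omega⟩
  have hsd : 1 ≤ √(d : ℝ) := Real.one_le_sqrt.2 (by exact_mod_cast NeZero.one_le)
  -- chambers lie in the ball of radius `ρ` below, and the ball of radius `2ρ` contains at most
  -- `(5ρ)^d = (20√d)^d k` lattice points
  refine ⟨(20 * √d) ^ d, one_le_pow₀ (by linarith), fun k hk => ?_⟩
  set ρ := 4 * √d * (k : ℝ) ^ (d⁻¹ : ℝ)
  have hρ1 : 1 ≤ ρ := by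
    have : 1 ≤ (k : ℝ) ^ (d⁻¹ : ℝ) := Real.one_le_rpow (by exact_mod_cast hk) (by positivity)
    nlinarith
  have hρd : ρ ^ d = (4 * √d) ^ d * k := by
    rw [mul_pow, Real.rpow_inv_natCast_pow (Nat.cast_nonneg k) (NeZero.ne d)]
  have hcount : (((2 * ⌊2 * ρ⌋₊ + 1) ^ d : ℕ) : ℝ) ≤ (20 * √d) ^ d * k := calc
    (((2 * ⌊2 * ρ⌋₊ + 1) ^ d : ℕ) : ℝ) ≤ (5 * ρ) ^ d := by
      push_cast
      gcongr
      linarith [Nat.floor_le (by positivity : 0 ≤ 2 * ρ)]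
    _ = (20 * √d) ^ d * k := by
      rw [mul_pow, hρd, ← mul_assoc, ← mul_pow, ← mul_assoc]
      norm_num
  refine Brillouin.encard_chambers_le_maxJSets Brillouin.intLattice_inter_closedBall_finite
    (by positivity) (fun x hx => Brillouin.norm_lt_of_mem_chamberRegion_intLattice hk hx)
    ((Brillouin.encard_intLattice_inter_closedBall_le _).trans ?_)
  exact_mod_cast (Nat.cast_le.1 (hcount.trans (Nat.le_ceil _)) : _ ≤ ⌈(20 * √d) ^ d * k⌉₊)
end
end

section
/- Let d ≥ 2, let z ∈ ℝ^d, let R ≥ √d, and let Σ = {x ∈ ℝ^d : ‖x − z‖ = R}. Then for every pole p of Σ (i.e., every point of the form p = z + R·e_i or p = z − R·e_i with e_i a standard basis vector), there exists a point a ∈ ℤ^d with ‖a − z‖ ≤ R, with ‖a − p‖ ≤ √(2√d·R), and whose Euclidean distance to Σ (i.e., inf{‖a − s‖ : s ∈ Σ}) is at most 2√d·(2√d/R)^{1 − 1/2^{d−1}}. -/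
open Set Metric MeasureTheory

noncomputable section

/-!
Round every coordinate of `z` other than the `i`-th to the nearest integer, at a cost of at most
`(d - 1) / 4` in squared distance, and move the `i`-th coordinate towards the pole by an integer
amount that falls short of the remaining budget `c = √(R² - E)` by less than one. This puts the
point within `1 + E / R` of the pole along the axis and leaves a deficit `R² - ‖a - z‖² ≤ 2R`.
The other coordinates are then pushed outwards one by one, each by the largest integer step that
keeps `‖a - z‖ ≤ R`; one such step turns a deficit `D` into one of at most `2√D + 1`, so after
`d - 1` steps the deficit is `O(R ^ (1 / 2 ^ (d - 1)))`, and `R - ‖a - z‖ ≤ (R² - ‖a - z‖²) / R`.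
-/

open Finset

/-- One greedy step turns a squared-radius deficit `D` into one of at most `greedyDeficit D`. -/
def greedyDeficit (x : ℝ) : ℝ := 2 * √x + 1

lemma greedyDeficit_mono : Monotone greedyDeficit := fun _ _ h => by
  unfold greedyDeficit; gcongr

lemma greedyDeficit_iterate_one_le_six (m : ℕ) : greedyDeficit^[m] 1 ≤ 6 := by
  induction m with
  | zero => norm_num
  | succ m ih =>
    have hsqrt : √6 ≤ 5 / 2 := Real.sqrt_le_iff.2 ⟨by norm_num, by norm_num⟩
    calc greedyDeficit^[m + 1] 1 = greedyDeficit (greedyDeficit^[m] 1) :=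
          Function.iterate_succ_apply' ..
      _ ≤ greedyDeficit 6 := greedyDeficit_mono ih
      _ ≤ 6 := by unfold greedyDeficit; linarith

lemma greedyDeficit_mul_le {K X : ℝ} (hX : 1 ≤ X) :
    greedyDeficit (K * X) ≤ greedyDeficit K * √X := by
  have : 1 ≤ √X := Real.one_le_sqrt.2 hX
  unfold greedyDeficit
  rw [Real.sqrt_mul' K (by linarith)]
  nlinarith [Real.sqrt_nonneg K]

lemma greedyDeficit_iterate_le_mul_rpow (m : ℕ) {B : ℝ} (hB : 1 ≤ B) :
    greedyDeficit^[m] B ≤ greedyDeficit^[m] 1 * B ^ (1 / 2 ^ m : ℝ) := by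
  induction m with
  | zero => simp
  | succ m ih =>
    have hBm : 1 ≤ B ^ (1 / 2 ^ m : ℝ) := Real.one_le_rpow hB (by positivity)
    have hsqrt : √(B ^ (1 / 2 ^ m : ℝ)) = B ^ (1 / 2 ^ (m + 1) : ℝ) := by
      rw [Real.sqrt_eq_rpow, ← Real.rpow_mul (by linarith)]
      congr 1; ring
    rw [Function.iterate_succ_apply', Function.iterate_succ_apply', ← hsqrt]
    exact (greedyDeficit_mono ih).trans (greedyDeficit_mul_le hBm)

lemma greedyDeficit_iterate_mul_rpow_le (m : ℕ) :
    greedyDeficit^[m] 1 * (4 * √(m + 1)) ^ (1 / 2 ^ m : ℝ) ≤ 4 * (m + 1) := by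
  set u := √((m : ℝ) + 1)
  have hu2 : u ^ 2 = m + 1 := Real.sq_sqrt (by positivity)
  have hu0 : 0 ≤ u := Real.sqrt_nonneg _
  rcases m with _ | _ | m
  · norm_num
  -- the uniform bound `6` is too weak for `m = 1`
  · have hu_le : u ≤ 16 / 9 := Real.sqrt_le_iff.2 ⟨by norm_num, by norm_num⟩
    have hsqrtu : √u ≤ 4 / 3 := Real.sqrt_le_iff.2 ⟨by norm_num, by linarith⟩
    have hg1 : greedyDeficit 1 = 3 := by norm_num [greedyDeficit]
    norm_num [hg1, ← Real.sqrt_eq_rpow]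
    linarith
  · have hu3 : 3 ≤ u ^ 2 := by rw [hu2]; push_cast; linarith [(m.cast_nonneg : (0:ℝ) ≤ m)]
    have hu1 : 1 ≤ u := by nlinarith
    have he : (1 / 2 ^ (m + 2) : ℝ) ≤ 1 / 4 := by
      rw [div_le_div_iff₀ (by positivity) (by norm_num), pow_add]
      nlinarith [one_le_pow₀ (show (1:ℝ) ≤ 2 by norm_num) (n := m)]
    have hroot : (4 * u) ^ (1 / 2 ^ (m + 2) : ℝ) ≤ u :=
      calc (4 * u) ^ (1 / 2 ^ (m + 2) : ℝ) ≤ (u ^ 4) ^ (1 / 2 ^ (m + 2) : ℝ) := by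
            gcongr; nlinarith
        _ = u ^ (4 * (1 / 2 ^ (m + 2)) : ℝ) := by
            rw [← Real.rpow_natCast, ← Real.rpow_mul hu0]; norm_num
        _ ≤ u ^ (1 : ℝ) := Real.rpow_le_rpow_of_exponent_le hu1 (by linarith)
        _ = u := Real.rpow_one u
    calc greedyDeficit^[m + 2] 1 * (4 * u) ^ (1 / 2 ^ (m + 2) : ℝ) ≤ 6 * u :=
          mul_le_mul (greedyDeficit_iterate_one_le_six _) hroot (by positivity) (by norm_num)
      _ ≤ 4 * u ^ 2 := by nlinarith
      _ = 4 * ((m + 2 : ℕ) + 1 : ℝ) := by rw [hu2]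

lemma greedyDeficit_iterate_div_le {d : ℕ} (hd : 0 < d) {R : ℝ} (hR : √d ≤ R) :
    greedyDeficit^[d - 1] (2 * R) / R ≤ 2 * √d * (2 * √d / R) ^ ((1 : ℝ) - 1 / 2 ^ (d - 1)) := by
  set u := √(d : ℝ)
  set e : ℝ := 1 / 2 ^ (d - 1)
  have hu1 : 1 ≤ u := Real.one_le_sqrt.2 (by exact_mod_cast hd)
  have hR0 : 0 < R := by linarith
  have hkey : greedyDeficit^[d - 1] 1 * (4 * u) ^ e ≤ 4 * u ^ 2 := by
    obtain ⟨m, rfl⟩ : ∃ m, d = m + 1 := ⟨d - 1, by omega⟩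
    simpa [u, e, Real.sq_sqrt (by positivity : (0:ℝ) ≤ m + 1)] using
      greedyDeficit_iterate_mul_rpow_le m
  have hrpow : 4 * u ^ 2 / (4 * u) ^ e * (2 * R) ^ e / R = 2 * u * (2 * u / R) ^ (1 - e) := by
    rw [Real.rpow_sub (by positivity), Real.rpow_one, Real.div_rpow (by positivity) hR0.le,
      show 4 * u = 2 * (2 * u) by ring, Real.mul_rpow (by norm_num) (by positivity),
      Real.mul_rpow (by norm_num) hR0.le]
    field_simp
    ring
  calc greedyDeficit^[d - 1] (2 * R) / R ≤ greedyDeficit^[d - 1] 1 * (2 * R) ^ e / R := by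
        gcongr; exact greedyDeficit_iterate_le_mul_rpow _ (by linarith)
    _ ≤ 4 * u ^ 2 / (4 * u) ^ e * (2 * R) ^ e / R := by
        gcongr; rw [le_div_iff₀ (by positivity)]; exact hkey
    _ = 2 * u * (2 * u / R) ^ (1 - e) := hrpow

lemma exists_int_abs_sub_mem_Ioc {x ρ : ℝ} (h : |round x - x| ≤ ρ) :
    ∃ n : ℤ, ρ - 1 < |n - x| ∧ |n - x| ≤ ρ := by
  have hround : (round x : ℝ) ≤ ⌊x + ρ⌋ := by
    exact_mod_cast Int.le_floor.2 (by linarith [(abs_le.1 h).2])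
  refine ⟨⌊x + ρ⌋, ?_, abs_le.2 ⟨?_, ?_⟩⟩
  · linarith [Int.sub_one_lt_floor (x + ρ), le_abs_self ((⌊x + ρ⌋ : ℝ) - x)]
  · linarith [(abs_le.1 h).1]
  · linarith [Int.floor_le (x + ρ)]

lemma exists_int_sq_sub_near (x : ℝ) {D : ℝ} (hD : 0 ≤ D) :
    ∃ n : ℤ, (n - x) ^ 2 ≤ D + (round x - x) ^ 2 ∧
      D + (round x - x) ^ 2 - (n - x) ^ 2 ≤ greedyDeficit D := by
  set ρ := √(D + (round x - x) ^ 2)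
  have hρ2 : ρ ^ 2 = D + (round x - x) ^ 2 := Real.sq_sqrt (by positivity)
  have hround : |round x - x| ≤ ρ := Real.abs_le_sqrt (by linarith)
  have hρ : ρ ≤ √D + 1 / 2 := by
    have : |round x - x| ≤ 1 / 2 := by rw [abs_sub_comm]; exact abs_sub_round x
    refine Real.sqrt_le_iff.2 ⟨by positivity, ?_⟩
    nlinarith [Real.sq_sqrt hD, Real.sqrt_nonneg D, sq_abs (round x - x), abs_nonneg (round x - x)]
  obtain ⟨n, hlt, hle⟩ := exists_int_abs_sub_mem_Ioc hround
  refine ⟨n, ?_, ?_⟩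
  · rw [← hρ2, ← sq_abs ((n : ℝ) - x)]; gcongr
  · rw [← hρ2, ← sq_abs ((n : ℝ) - x), greedyDeficit]
    nlinarith [mul_le_mul_of_nonneg_right (show ρ - |(n : ℝ) - x| ≤ 1 by linarith)
      (add_nonneg ((abs_nonneg _).trans hle) (abs_nonneg ((n : ℝ) - x)))]

lemma exists_int_sum_sq_sub_near {ι : Type*} [DecidableEq ι] (y : ι → ℝ) (s : Finset ι)
    {D : ℝ} (hD : 0 ≤ D) :
    ∃ n : ι → ℤ, ∑ k ∈ s, (n k - y k) ^ 2 ≤ D + ∑ k ∈ s, (round (y k) - y k) ^ 2 ∧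
      D + ∑ k ∈ s, (round (y k) - y k) ^ 2 - ∑ k ∈ s, (n k - y k) ^ 2 ≤
        greedyDeficit^[#s] D := by
  induction s using Finset.induction_on generalizing D with
  | empty => exact ⟨0, by simpa using hD, by simp⟩
  | insert k s hk ih =>
    obtain ⟨m, hm_le, hm_loss⟩ := exists_int_sq_sub_near (y k) hD
    obtain ⟨n, hn_le, hn_loss⟩ := ih (D := D + (round (y k) - y k) ^ 2 - (m - y k) ^ 2)
      (by linarith)
    have hsum : ∑ j ∈ s, ((Function.update n k m j : ℝ) - y j) ^ 2
        = ∑ j ∈ s, ((n j : ℝ) - y j) ^ 2 :=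
      sum_congr rfl fun j hj => by rw [Function.update_of_ne (ne_of_mem_of_not_mem hj hk)]
    refine ⟨Function.update n k m, ?_, ?_⟩
    · rw [sum_insert hk, sum_insert hk, hsum, Function.update_self]
      linarith
    · rw [sum_insert hk, sum_insert hk, hsum, Function.update_self, card_insert_of_notMem hk,
        Function.iterate_succ_apply]
      calc _ = D + (round (y k) - y k) ^ 2 - (m - y k) ^ 2 +
              ∑ j ∈ s, (round (y j) - y j) ^ 2 - ∑ j ∈ s, ((n j : ℝ) - y j) ^ 2 := by ring
        _ ≤ _ := hn_loss.trans (greedyDeficit_mono.iterate _ hm_loss)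

lemma exists_int_mul_sub_mem_Ioc {s : ℝ} (hs : s = 1 ∨ s = -1) (x c : ℝ) :
    ∃ n : ℤ, c - 1 < s * (n - x) ∧ s * (n - x) ≤ c := by
  rcases hs with rfl | rfl
  · exact ⟨⌊x + c⌋, by linarith [Int.sub_one_lt_floor (x + c)], by linarith [Int.floor_le (x + c)]⟩
  · exact ⟨⌈x - c⌉, by linarith [Int.ceil_lt_add_one (x - c)], by linarith [Int.le_ceil (x - c)]⟩

lemma sum_sq_round_sub_le {ι : Type*} (y : ι → ℝ) (s : Finset ι) :
    ∑ k ∈ s, (round (y k) - y k) ^ 2 ≤ #s / 4 := by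
  have hterm : ∀ k ∈ s, (round (y k) - y k) ^ 2 ≤ 1 / 4 := fun k _ => by
    have := abs_sub_round (y k)
    rw [abs_sub_comm] at this
    nlinarith [sq_abs ((round (y k) : ℝ) - y k), abs_nonneg ((round (y k) : ℝ) - y k)]
  calc ∑ k ∈ s, (round (y k) - y k) ^ 2 ≤ #s • (1 / 4 : ℝ) := sum_le_card_nsmul s _ _ hterm
    _ = #s / 4 := by rw [nsmul_eq_mul]; ring

lemma toEuc_mem_intLattice (d : ℕ) (n : Fin d → ℤ) : toEuc d n ∈ intLattice d :=
  fun k => ⟨n k, rfl⟩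

lemma norm_toEuc_sub_sq {d : ℕ} (n : Fin d → ℤ) (z : EuclideanSpace ℝ (Fin d)) :
    ‖toEuc d n - z‖ ^ 2 = ∑ k, ((n k : ℝ) - z k) ^ 2 := by
  simp [EuclideanSpace.real_norm_sq_eq, toEuc]

lemma exists_intLattice_near_pole {d : ℕ} (z : EuclideanSpace ℝ (Fin d)) {R : ℝ}
    (hR : √d ≤ R) (i : Fin d) {s : ℝ} (hs : s = 1 ∨ s = -1) :
    ∃ a ∈ intLattice d, ‖a - z‖ ≤ R ∧ R * (R - s * (a i - z i)) ≤ (d - 1) / 4 + R ∧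
      R ^ 2 - ‖a - z‖ ^ 2 ≤ greedyDeficit^[d - 1] (2 * R) := by
  set E := ∑ k ∈ univ.erase i, (round (z k) - z k) ^ 2
  have hcard : #(univ.erase i) = d - 1 := by simp
  have hd : (1 : ℝ) ≤ d := by exact_mod_cast i.pos
  have hE : E ≤ (d - 1) / 4 := by
    have := sum_sq_round_sub_le (fun k => z k) (univ.erase i)
    rwa [hcard, Nat.cast_pred i.pos] at this
  have hE0 : 0 ≤ E := sum_nonneg fun k _ => sq_nonneg _
  have hR0 : 0 ≤ R := (Real.sqrt_nonneg _).trans hR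
  have hRd : (d : ℝ) ≤ R ^ 2 := (Real.sqrt_le_left hR0).1 hR
  set c := √(R ^ 2 - E)
  have hc2 : c ^ 2 = R ^ 2 - E := Real.sq_sqrt (by linarith)
  have hc1 : 1 ≤ c := Real.one_le_sqrt.2 (by linarith)
  have hcR : c ≤ R := Real.sqrt_le_left hR0 |>.2 (by linarith)
  obtain ⟨m, hm_gt, hm_le⟩ := exists_int_mul_sub_mem_Ioc hs (z i) c
  set v := s * (m - z i)
  have hs2 : s ^ 2 = 1 := by rcases hs with rfl | rfl <;> norm_num
  have hv2 : ((m : ℝ) - z i) ^ 2 = v ^ 2 := by rw [mul_pow, hs2, one_mul]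
  obtain ⟨n, hn_le, hn_loss⟩ :=
    exists_int_sum_sq_sub_near (fun k => z k) (univ.erase i) (D := c ^ 2 - v ^ 2) (by nlinarith)
  set a := toEuc d (Function.update n i m)
  have hai : a i - z i = m - z i := by simp [a, toEuc]
  have hnorm : ‖a - z‖ ^ 2 = v ^ 2 + ∑ k ∈ univ.erase i, ((n k : ℝ) - z k) ^ 2 := by
    rw [norm_toEuc_sub_sq, ← add_sum_erase _ _ (mem_univ i), Function.update_self, hv2]
    congr 1
    exact sum_congr rfl fun k hk => by rw [Function.update_of_ne (ne_of_mem_erase hk)]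
  refine ⟨a, toEuc_mem_intLattice d _, ?_, ?_, ?_⟩
  · rw [← pow_le_pow_iff_left₀ (norm_nonneg _) (by linarith) two_ne_zero]
    linarith
  · rw [hai]
    nlinarith
  · rw [hcard] at hn_loss
    calc R ^ 2 - ‖a - z‖ ^ 2 ≤ greedyDeficit^[d - 1] (c ^ 2 - v ^ 2) := by linarith
      _ ≤ greedyDeficit^[d - 1] (2 * R) := greedyDeficit_mono.iterate _ (by nlinarith)

lemma norm_sub_add_smul_single_sq {ι : Type*} [Fintype ι] [DecidableEq ι]
    (x z : EuclideanSpace ℝ ι) (i : ι) (r : ℝ) :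
    ‖x - (z + r • EuclideanSpace.single i (1 : ℝ))‖ ^ 2
      = ‖x - z‖ ^ 2 - 2 * r * (x i - z i) + r ^ 2 := by
  rw [← sub_sub, norm_sub_sq_real, inner_smul_right, EuclideanSpace.inner_single_right,
    norm_smul, PiLp.norm_single]
  simp only [PiLp.sub_apply, norm_one, Real.norm_eq_abs, mul_one, sq_abs, one_mul, conj_trivial]
  ring

lemma infDist_sphere_le_sub_norm {E : Type*} [NormedAddCommGroup E] [NormedSpace ℝ E]
    [Nontrivial E] {x z : E} {R : ℝ} (h : ‖x - z‖ ≤ R) :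
    infDist x (sphere z R) ≤ R - ‖x - z‖ := by
  have hR0 : 0 ≤ R := (norm_nonneg _).trans h
  rcases eq_or_ne x z with rfl | hxz
  · obtain ⟨y, hy⟩ := (NormedSpace.sphere_nonempty (x := x)).2 hR0
    rw [sub_self, norm_zero, sub_zero]
    exact (infDist_le_dist_of_mem hy).trans_eq (by rw [dist_comm]; exact mem_sphere.1 hy)
  have hT : 0 < ‖x - z‖ := norm_pos_iff.2 (sub_ne_zero.2 hxz)
  have hy : z + (R / ‖x - z‖) • (x - z) ∈ sphere z R := by
    rw [mem_sphere_iff_norm, add_sub_cancel_left, norm_smul, Real.norm_eq_abs,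
      abs_of_nonneg (by positivity)]
    field_simp
  calc infDist x (sphere z R) ≤ dist x (z + (R / ‖x - z‖) • (x - z)) :=
        infDist_le_dist_of_mem hy
    _ = ‖(1 - R / ‖x - z‖) • (x - z)‖ := by rw [dist_eq_norm]; congr 1; module
    _ = R - ‖x - z‖ := by
      rw [norm_smul, Real.norm_eq_abs,
        abs_of_nonpos (by rw [sub_nonpos, le_div_iff₀ hT]; linarith)]
      field_simp
      ring

theorem nearby_integer_points_general (d : ℕ) (z : EuclideanSpace ℝ (Fin d)) (R : ℝ)
    (hR : Real.sqrt d ≤ R) (i : Fin d) (s : ℝ) (hs : s = 1 ∨ s = -1) :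
    ∃ a ∈ intLattice d, ‖a - z‖ ≤ R ∧
      ‖a - (z + (s * R) • EuclideanSpace.single i (1 : ℝ))‖
        ≤ Real.sqrt (2 * Real.sqrt d * R) ∧
      Metric.infDist a (Metric.sphere z R)
        ≤ 2 * Real.sqrt d * (2 * Real.sqrt d / R) ^ ((1 : ℝ) - 1 / 2 ^ (d - 1)) := by
  have : Nonempty (Fin d) := ⟨i⟩
  have hu1 : 1 ≤ √d := Real.one_le_sqrt.2 (by exact_mod_cast i.pos)
  have hu2 : √d ^ 2 = d := Real.sq_sqrt (Nat.cast_nonneg d)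
  have hR0 : 0 < R := by linarith
  obtain ⟨a, ha, hazR, hpole, hdeficit⟩ := exists_intLattice_near_pole z hR i hs
  refine ⟨a, ha, hazR, ?_, ?_⟩
  · have hs2 : s ^ 2 = 1 := by rcases hs with rfl | rfl <;> norm_num
    rw [Real.le_sqrt (norm_nonneg _) (by positivity), norm_sub_add_smul_single_sq, mul_pow, hs2]
    nlinarith [pow_le_pow_left₀ (norm_nonneg _) hazR 2,
      mul_le_mul_of_nonneg_left (show (√d + 1) / 2 ≤ 2 * R by linarith)
        (show 0 ≤ √d - 1 by linarith)]
  · calc infDist a (sphere z R) ≤ R - ‖a - z‖ := infDist_sphere_le_sub_norm hazR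
      _ ≤ (R ^ 2 - ‖a - z‖ ^ 2) / R := by
        rw [le_div_iff₀ hR0]; nlinarith [norm_nonneg (a - z)]
      _ ≤ greedyDeficit^[d - 1] (2 * R) / R := by gcongr
      _ ≤ _ := greedyDeficit_iterate_div_le i.pos hR

/-- For every sphere of radius `R ≥ √d` in `ℝ^d` and every one of its poles,
there is an integer point at distance at most `R` from the center, at most `√(2√d·R)` from
the pole, and at most `2√d·(2√d/R)^{1 - 1/2^{d-1}}` from the sphere. -/
theorem nearby_integer_points (d : ℕ) (hd : 2 ≤ d) (z : EuclideanSpace ℝ (Fin d)) (R : ℝ)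
    (hR : Real.sqrt d ≤ R) (i : Fin d) (s : ℝ) (hs : s = 1 ∨ s = -1) :
    ∃ a ∈ intLattice d, ‖a - z‖ ≤ R ∧
      ‖a - (z + (s * R) • EuclideanSpace.single i (1 : ℝ))‖
        ≤ Real.sqrt (2 * Real.sqrt d * R) ∧
      Metric.infDist a (Metric.sphere z R)
        ≤ 2 * Real.sqrt d * (2 * Real.sqrt d / R) ^ ((1 : ℝ) - 1 / 2 ^ (d - 1)) :=
  nearby_integer_points_general d z R hR i s hs
end
end
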